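/- arXiv:math/0701114 — 6 statements merged into one kernel-verified Lean document; each statement's English description precedes it below -/
import Mathlib

section
/- Let $\sigma \in \mathbb{R}_+^n$ with all components positive, and let $T := \{u \in \mathbb{R}_+^n : u_1 + \cdots + u_n \leq 1\}$ be the standard simplex. Then $\int_T \prod_{j=1}^n u_j^{\sigma_j - 1}\, du = \frac{\prod_{j=1}^n \Gamma(\sigma_j)}{\Gamma(1 + \sigma_1 + \cdots + \sigma_n)}$. -/
open MeasureTheory Real
open scoped ENNReal

lemma my_real_beta {a b : ℝ} (ha : 0 < a) (hb : 0 < b) :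
    ∫ x in (0:ℝ)..1, x ^ (a - 1) * (1 - x) ^ (b - 1)
      = Gamma a * Gamma b / Gamma (a + b) := by
  have key := Complex.Gamma_mul_Gamma_eq_betaIntegral (s := (a:ℂ)) (t := (b:ℂ))
    (by simpa using ha) (by simpa using hb)
  have hbeta : Complex.betaIntegral a b
      = ((∫ x in (0:ℝ)..1, x ^ (a - 1) * (1 - x) ^ (b - 1) : ℝ) : ℂ) := by
    rw [Complex.betaIntegral, ← intervalIntegral.integral_ofReal]
    refine intervalIntegral.integral_congr fun x hx => ?_
    rw [Set.uIcc_of_le zero_le_one] at hx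
    rw [Complex.ofReal_mul, Complex.ofReal_cpow hx.1,
      Complex.ofReal_cpow (by linarith [hx.2] : (0:ℝ) ≤ 1 - x)]
    push_cast
    ring
  rw [hbeta, Complex.Gamma_ofReal, Complex.Gamma_ofReal, ← Complex.ofReal_add,
    Complex.Gamma_ofReal, ← Complex.ofReal_mul, ← Complex.ofReal_mul] at key
  have key' : Gamma a * Gamma b
      = Gamma (a + b) * ∫ x in (0:ℝ)..1, x ^ (a - 1) * (1 - x) ^ (b - 1) :=
    Complex.ofReal_injective key
  rw [eq_div_iff (Gamma_pos_of_pos (by linarith)).ne']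
  linarith [key']

lemma my_beta_integrable {a b : ℝ} (ha : 0 < a) (hb : 0 < b) :
    IntegrableOn (fun x : ℝ => x ^ (a - 1) * (1 - x) ^ (b - 1)) (Set.Ioc 0 1) := by
  have h := Complex.betaIntegral_convergent (u := (a:ℂ)) (v := (b:ℂ))
    (by simpa using ha) (by simpa using hb)
  rw [intervalIntegrable_iff_integrableOn_Ioc_of_le zero_le_one] at h
  refine (h.re).congr ?_
  refine (ae_restrict_iff' measurableSet_Ioc).2 (Filter.Eventually.of_forall fun x hx => ?_)
  have h1 : (0:ℝ) ≤ x := le_of_lt hx.1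
  have h2 : (0:ℝ) ≤ 1 - x := by linarith [hx.2]
  have : ((x:ℂ) ^ ((a:ℂ) - 1) * ((1:ℂ) - x) ^ ((b:ℂ) - 1))
      = ((x ^ (a - 1) * (1 - x) ^ (b - 1) : ℝ) : ℂ) := by
    rw [Complex.ofReal_mul, Complex.ofReal_cpow h1, Complex.ofReal_cpow h2]
    push_cast
    ring
  simp [this]

lemma my_beta_lintegral {a b : ℝ} (ha : 0 < a) (hb : 0 < b) :
    ∫⁻ x in Set.Ioo (0:ℝ) 1, ENNReal.ofReal (x ^ (a - 1) * (1 - x) ^ (b - 1))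
      = ENNReal.ofReal (Gamma a * Gamma b / Gamma (a + b)) := by
  rw [← ofReal_integral_eq_lintegral_ofReal
      ((my_beta_integrable ha hb).mono_set Set.Ioo_subset_Ioc_self)
      ((ae_restrict_iff' measurableSet_Ioo).2 (Filter.Eventually.of_forall fun x hx => by
        have h1 : (0:ℝ) < x := hx.1
        have h2 : (0:ℝ) < 1 - x := by linarith [hx.2]
        simp only [Pi.zero_apply]
        positivity))]
  rw [← my_real_beta ha hb, intervalIntegral.integral_of_le zero_le_one,
    integral_Ioc_eq_integral_Ioo]

lemma my_measSet (n : ℕ) (c : ℝ) :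
    MeasurableSet {v : Fin n → ℝ | (∀ i, 0 < v i) ∧ ∑ i, v i ≤ c} := by
  refine MeasurableSet.inter ?_ ?_
  · have : {v : Fin n → ℝ | ∀ i, 0 < v i} = ⋂ i, {v | 0 < v i} := by ext v; simp
    rw [show (fun v : Fin n → ℝ => ∀ i, 0 < v i) = {v : Fin n → ℝ | ∀ i, 0 < v i} from rfl, this]
    exact MeasurableSet.iInter fun i =>
      measurableSet_lt measurable_const (measurable_pi_apply i)
  · exact measurableSet_le (Finset.measurable_sum _ fun i _ => measurable_pi_apply i)
      measurable_const

lemma my_measFun (n : ℕ) (τ : Fin n → ℝ) :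
    Measurable fun v : Fin n → ℝ => ENNReal.ofReal (∏ j, v j ^ (τ j - 1)) := by
  apply ENNReal.measurable_ofReal.comp
  exact Finset.measurable_prod _ fun j _ => by fun_prop

lemma my_scaling (n : ℕ) (τ : Fin n → ℝ) {c : ℝ} (hc : 0 < c) :
    ∫⁻ v in {v : Fin n → ℝ | (∀ i, 0 < v i) ∧ ∑ i, v i ≤ c},
        ENNReal.ofReal (∏ j, v j ^ (τ j - 1))
      = ENNReal.ofReal (c ^ (∑ j, τ j)) *
        ∫⁻ v in {v : Fin n → ℝ | (∀ i, 0 < v i) ∧ ∑ i, v i ≤ 1},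
          ENNReal.ofReal (∏ j, v j ^ (τ j - 1)) := by
  set h : (Fin n → ℝ) → ℝ≥0∞ := fun v => ENNReal.ofReal (∏ j, v j ^ (τ j - 1)) with hh
  set Sc := {v : Fin n → ℝ | (∀ i, 0 < v i) ∧ ∑ i, v i ≤ c} with hSc
  set S1 := {v : Fin n → ℝ | (∀ i, 0 < v i) ∧ ∑ i, v i ≤ 1} with hS1
  have hF : Measurable (Sc.indicator h) :=
    (my_measFun n τ).indicator (my_measSet n c)
  have hcn : (0:ℝ) < c ^ n := pow_pos hc n
  have hmap : Measure.map (c • ·) (volume : Measure (Fin n → ℝ))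
      = ENNReal.ofReal |(c ^ n)⁻¹| • volume := by
    rw [Measure.map_addHaar_smul (μ := (volume : Measure (Fin n → ℝ))) hc.ne']
    congr 2
    rw [Module.finrank_fin_fun]
  have hsub : ∫⁻ w, Sc.indicator h (c • w)
      = ENNReal.ofReal ((c ^ n)⁻¹) * ∫⁻ v, Sc.indicator h v := by
    rw [← lintegral_map hF (measurable_const_smul c), hmap, lintegral_smul_measure,
      abs_of_pos (inv_pos.2 hcn), smul_eq_mul]
  have hmain : ∫⁻ v, Sc.indicator h v
      = ENNReal.ofReal (c ^ n) * ∫⁻ w, Sc.indicator h (c • w) := by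
    rw [hsub, ← mul_assoc, ← ENNReal.ofReal_mul hcn.le, mul_inv_cancel₀ hcn.ne',
      ENNReal.ofReal_one, one_mul]
  have hpt : ∀ w : Fin n → ℝ, Sc.indicator h (c • w)
      = S1.indicator (fun w =>
          ENNReal.ofReal ((∏ j, c ^ (τ j - 1)) * ∏ j, w j ^ (τ j - 1))) w := by
    intro w
    have hmem : c • w ∈ Sc ↔ w ∈ S1 := by
      simp only [hSc, hS1, Set.mem_setOf_eq, Pi.smul_apply, smul_eq_mul]
      constructor
      · rintro ⟨h1, h2⟩
        refine ⟨fun i => by nlinarith [h1 i], ?_⟩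
        rw [← Finset.mul_sum] at h2
        nlinarith
      · rintro ⟨h1, h2⟩
        refine ⟨fun i => mul_pos hc (h1 i), ?_⟩
        rw [← Finset.mul_sum]
        calc c * ∑ i, w i ≤ c * 1 := mul_le_mul_of_nonneg_left h2 hc.le
          _ = c := mul_one c
    by_cases hw : w ∈ S1
    · rw [Set.indicator_of_mem (hmem.2 hw), Set.indicator_of_mem hw, hh]
      simp only [← Finset.prod_mul_distrib]
      congr 1
      refine Finset.prod_congr rfl fun j _ => ?_
      simp only [Pi.smul_apply, smul_eq_mul]
      exact Real.mul_rpow hc.le (hw.1 j).le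
    · rw [Set.indicator_of_notMem (fun hmem' => hw (hmem.1 hmem')),
        Set.indicator_of_notMem hw]
  have hprod : (∏ j, c ^ (τ j - 1)) = c ^ (∑ j, (τ j - 1)) :=
    (Real.rpow_sum_of_pos hc _ _).symm
  calc ∫⁻ v in Sc, h v = ∫⁻ v, Sc.indicator h v := (lintegral_indicator (my_measSet n c) h).symm
    _ = ENNReal.ofReal (c ^ n) * ∫⁻ w, Sc.indicator h (c • w) := hmain
    _ = ENNReal.ofReal (c ^ n) * ∫⁻ w, S1.indicator
          (fun w => ENNReal.ofReal ((∏ j, c ^ (τ j - 1)) * ∏ j, w j ^ (τ j - 1))) w := by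
        congr 1; exact lintegral_congr hpt
    _ = ENNReal.ofReal (c ^ n) * ∫⁻ w in S1,
          ENNReal.ofReal ((∏ j, c ^ (τ j - 1)) * ∏ j, w j ^ (τ j - 1)) := by
        rw [lintegral_indicator (my_measSet n 1)]
    _ = ENNReal.ofReal (c ^ n) * (ENNReal.ofReal (∏ j, c ^ (τ j - 1)) * ∫⁻ w in S1, h w) := by
        congr 1
        rw [← lintegral_const_mul _ (my_measFun n τ)]
        refine lintegral_congr fun w => ?_
        rw [ENNReal.ofReal_mul (by positivity)]
    _ = ENNReal.ofReal (c ^ (∑ j, τ j)) * ∫⁻ v in S1, h v := by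
        rw [← mul_assoc, ← ENNReal.ofReal_mul hcn.le, hprod, ← Real.rpow_natCast c n,
          ← Real.rpow_add hc]
        congr 3
        rw [Finset.sum_sub_distrib]
        simp

lemma my_dirichlet (n : ℕ) (σ : Fin n → ℝ) (hσ : ∀ j, 0 < σ j) :
    ∫⁻ u in {u : Fin n → ℝ | (∀ i, 0 < u i) ∧ ∑ i, u i ≤ 1},
        ENNReal.ofReal (∏ j, u j ^ (σ j - 1))
      = ENNReal.ofReal ((∏ j, Real.Gamma (σ j)) / Real.Gamma (1 + ∑ j, σ j)) := by
  induction n with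
  | zero =>
      have hset : {u : Fin 0 → ℝ | (∀ i, 0 < u i) ∧ ∑ i, u i ≤ 1} = Set.univ := by
        ext u; simp
      rw [hset]
      simp only [Finset.univ_eq_empty, Finset.prod_empty, Finset.sum_empty, add_zero,
        Real.Gamma_one, div_one, ENNReal.ofReal_one]
      rw [Measure.restrict_univ, lintegral_one]
      rw [volume_pi, Measure.pi_univ]
      simp
  | succ n ih =>
      have ha : 0 < σ 0 := hσ 0
      set τ : Fin n → ℝ := fun j => σ ((0 : Fin (n+1)).succAbove j) with hτ_def
      have hτpos : ∀ j, 0 < τ j := fun j => hσ _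
      have hsum0 : (0:ℝ) ≤ ∑ j, τ j := Finset.sum_nonneg fun j _ => (hτpos j).le
      have hb : (0:ℝ) < 1 + ∑ j, τ j := by linarith
      set T := {u : Fin (n+1) → ℝ | (∀ i, 0 < u i) ∧ ∑ i, u i ≤ 1} with hT_def
      set g : (Fin (n+1) → ℝ) → ℝ≥0∞ :=
        fun u => ENNReal.ofReal (∏ j, u j ^ (σ j - 1)) with hg_def
      have hF : Measurable (T.indicator g) := (my_measFun _ σ).indicator (my_measSet _ 1)
      set e := MeasurableEquiv.piFinSuccAbove (fun _ : Fin (n+1) => ℝ) 0 with he_def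
      have hins : ∀ (t : ℝ) (v : Fin n → ℝ),
          e.symm (t, v) = (0 : Fin (n+1)).insertNth t v := fun _ _ => rfl
      have hcomp : ∫⁻ u in T, g u = ∫⁻ p : ℝ × (Fin n → ℝ), T.indicator g (e.symm p) := by
        rw [← lintegral_indicator (my_measSet _ 1)]
        exact ((volume_preserving_piFinSuccAbove
          (fun _ : Fin (n+1) => ℝ) 0).symm).lintegral_map_equiv (T.indicator g) e.symm
      have hTon : ∫⁻ p : ℝ × (Fin n → ℝ), T.indicator g (e.symm p)
          = ∫⁻ t : ℝ, ∫⁻ v : Fin n → ℝ, T.indicator g (e.symm (t, v)) := by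
        rw [Measure.volume_eq_prod]
        exact lintegral_prod _ ((hF.comp e.symm.measurable).aemeasurable)
      -- inner integral
      have hInner : ∀ t : ℝ, t ≠ 1 →
          (∫⁻ v : Fin n → ℝ, T.indicator g (e.symm (t, v)))
          = Set.indicator (Set.Ioo (0:ℝ) 1)
              (fun t => ENNReal.ofReal (t ^ (σ 0 - 1) * (1 - t) ^ ((1 + ∑ j, τ j) - 1)) *
                ENNReal.ofReal ((∏ j, Gamma (τ j)) / Gamma (1 + ∑ j, τ j))) t := by
        intro t ht1
        have hmem : ∀ v : Fin n → ℝ, ((0 : Fin (n+1)).insertNth t v ∈ T)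
            ↔ (0 < t ∧ ((∀ i, 0 < v i) ∧ ∑ i, v i ≤ 1 - t)) := by
          intro v
          simp only [hT_def, Set.mem_setOf_eq, Fin.insertNth_zero']
          rw [Fin.forall_fin_succ, Fin.sum_univ_succ]
          simp only [Fin.cons_zero, Fin.cons_succ]
          constructor
          · rintro ⟨⟨h1, h2⟩, h3⟩; exact ⟨h1, h2, by linarith⟩
          · rintro ⟨h1, h2, h3⟩; exact ⟨⟨h1, h2⟩, by linarith⟩
        have hval : ∀ v : Fin n → ℝ, g ((0 : Fin (n+1)).insertNth t v)
            = ENNReal.ofReal (t ^ (σ 0 - 1) * ∏ j, v j ^ (τ j - 1)) := by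
          intro v
          simp only [hg_def]
          congr 1
          rw [Fin.insertNth_zero', Fin.prod_univ_succ]
          simp [hτ_def, Fin.succAbove_zero]
        by_cases ht : 0 < t
        · -- t > 0
          set St := {v : Fin n → ℝ | (∀ i, 0 < v i) ∧ ∑ i, v i ≤ 1 - t} with hSt_def
          have hpt : ∀ v : Fin n → ℝ, T.indicator g (e.symm (t, v))
              = St.indicator (fun v =>
                  ENNReal.ofReal (t ^ (σ 0 - 1) * ∏ j, v j ^ (τ j - 1))) v := by
            intro v
            rw [hins]
            by_cases hv : v ∈ St
            · rw [Set.indicator_of_mem ((hmem v).2 ⟨ht, hv⟩), Set.indicator_of_mem hv, hval]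
            · rw [Set.indicator_of_notMem (fun hm => hv ((hmem v).1 hm).2),
                Set.indicator_of_notMem hv]
          simp only [hpt]
          rw [lintegral_indicator (my_measSet n (1 - t))]
          by_cases ht1' : t < 1
          · -- 0 < t < 1
            have hc : (0:ℝ) < 1 - t := by linarith
            have hstep : ∫⁻ v in St, ENNReal.ofReal (t ^ (σ 0 - 1) * ∏ j, v j ^ (τ j - 1))
                = ENNReal.ofReal (t ^ (σ 0 - 1)) *
                  ∫⁻ v in St, ENNReal.ofReal (∏ j, v j ^ (τ j - 1)) := by
              rw [← lintegral_const_mul _ (my_measFun n τ)]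
              refine lintegral_congr fun v => ?_
              rw [ENNReal.ofReal_mul (by positivity)]
            rw [hstep, hSt_def, my_scaling n τ hc, ih τ hτpos,
              Set.indicator_of_mem (Set.mem_Ioo.2 ⟨ht, ht1'⟩)]
            rw [← mul_assoc, ← ENNReal.ofReal_mul (by positivity)]
            congr 2
            ring_nf
          · -- t > 1
            have ht1'' : 1 < t := lt_of_le_of_ne (not_lt.1 ht1') (Ne.symm ht1)
            have hempty : St = ∅ := by
              refine Set.eq_empty_iff_forall_notMem.2 fun v hv => ?_
              have h0 : 0 ≤ ∑ i, v i := Finset.sum_nonneg fun i _ => (hv.1 i).le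
              have := hv.2
              linarith
            have hempty' : {v : Fin n → ℝ | (∀ i, 0 < v i) ∧ ∑ i, v i ≤ 1 - t}
                = (∅ : Set (Fin n → ℝ)) := hempty
            rw [hempty', Measure.restrict_empty, lintegral_zero_measure,
              Set.indicator_of_notMem (by simp [Set.mem_Ioo]; intro h; linarith)]
        · -- t ≤ 0
          have hpt : ∀ v : Fin n → ℝ, T.indicator g (e.symm (t, v)) = 0 := by
            intro v
            rw [hins, Set.indicator_of_notMem (fun hm => ht ((hmem v).1 hm).1)]
          simp only [hpt, lintegral_zero]
          rw [Set.indicator_of_notMem (by simp [Set.mem_Ioo]; intro h; exact absurd h ht)]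
      have hae1 : ∀ᵐ t : ℝ, t ≠ 1 := by
        refine ae_iff.2 ?_
        simpa using measure_singleton (1 : ℝ)
      have houter : ∫⁻ t : ℝ, ∫⁻ v : Fin n → ℝ, T.indicator g (e.symm (t, v))
          = ∫⁻ t in Set.Ioo (0:ℝ) 1,
              ENNReal.ofReal (t ^ (σ 0 - 1) * (1 - t) ^ ((1 + ∑ j, τ j) - 1)) *
                ENNReal.ofReal ((∏ j, Gamma (τ j)) / Gamma (1 + ∑ j, τ j)) := by
        rw [← lintegral_indicator measurableSet_Ioo]
        exact lintegral_congr_ae (hae1.mono fun t ht => hInner t ht)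
      rw [hcomp, hTon, houter, lintegral_mul_const' _ _ ENNReal.ofReal_ne_top,
        my_beta_lintegral ha hb, ← ENNReal.ofReal_mul (by positivity)]
      congr 1
      rw [Fin.prod_univ_succAbove (fun j => Gamma (σ j)) 0,
        Fin.sum_univ_succAbove σ 0]
      have hne : Gamma (1 + ∑ j, τ j) ≠ 0 := (Gamma_pos_of_pos hb).ne'
      have h2 : Gamma (σ 0 + (1 + ∑ j, τ j)) ≠ 0 :=
        (Gamma_pos_of_pos (by linarith)).ne'
      rw [show (1:ℝ) + (σ 0 + ∑ i, σ ((0:Fin (n+1)).succAbove i))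
          = σ 0 + (1 + ∑ j, τ j) by rw [hτ_def]; ring]
      simp only [hτ_def, Fin.succAbove_zero] at hne h2 ⊢
      field_simp

/-- The Dirichlet integral over the standard simplex. -/
theorem stmt_1 (n : ℕ) (hn : 0 < n) (σ : Fin n → ℝ) (hσ : ∀ j, 0 < σ j) :
    ∫ u in {u : Fin n → ℝ | (∀ i, 0 < u i) ∧ ∑ i, u i ≤ 1},
        ∏ j, u j ^ (σ j - 1)
      = (∏ j, Real.Gamma (σ j)) / Real.Gamma (1 + ∑ j, σ j) := by
  have hmeas : Measurable fun u : Fin n → ℝ => ∏ j, u j ^ (σ j - 1) :=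
    Finset.measurable_prod _ fun j _ => by fun_prop
  have hnn : 0 ≤ᵐ[volume.restrict {u : Fin n → ℝ | (∀ i, 0 < u i) ∧ ∑ i, u i ≤ 1}]
      fun u : Fin n → ℝ => ∏ j, u j ^ (σ j - 1) := by
    refine (ae_restrict_iff' (my_measSet n 1)).2 (Filter.Eventually.of_forall fun u hu => ?_)
    simp only [Pi.zero_apply]
    exact Finset.prod_nonneg fun j _ => Real.rpow_nonneg (hu.1 j).le _
  have hsum : (0:ℝ) < 1 + ∑ j, σ j := by
    have : 0 ≤ ∑ j, σ j := Finset.sum_nonneg fun j _ => (hσ j).le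
    linarith
  rw [integral_eq_lintegral_of_nonneg_ae hnn hmeas.aestronglyMeasurable.restrict,
    my_dirichlet n σ hσ, ENNReal.toReal_ofReal]
  exact div_nonneg (Finset.prod_nonneg fun j _ => (Gamma_pos_of_pos (hσ j)).le)
    (Gamma_pos_of_pos hsum).le
end

section
/- Let $w_1,\ldots,w_n \in \mathbb{R}_+^n$ be linearly independent, and let $s \in \mathbb{R}_+^n$ lie in the interior of the convex hull of $w_1,\ldots,w_n$ and $0$; write $s = \sum_{j=1}^n \theta_j w_j$ with $\theta_j > 0$ and $\theta_0 := 1 - \sum_{j=1}^n \theta_j > 0$. Then there exists a constant $C < \infty$, depending only on $n$, the $w_j$'s, and the $\theta_j$'s, such that for every measurable set $E \subset \mathbb{R}^n$, $|E|_s \leq C \prod_{j=1}^n |E|_{w_j}^{\theta_j}$, where $|E|_w := \int_E \prod_{i=1}^n |x_i|^{w_i - 1}\, dx$. -/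
open MeasureTheory Real ENNReal

/-- The monomial-weight measure `|E|_w = ∫_E ∏ |x_i|^{w_i - 1} dx`. -/
noncomputable def wtMeasure {n : ℕ} (w : Fin n → ℝ) (E : Set (Fin n → ℝ)) : ℝ≥0∞ :=
  ∫⁻ x in E, ∏ i, ENNReal.ofReal (|x i| ^ (w i - 1))

open Set Matrix

namespace Stmt2Aux

variable {n : ℕ}

/-- The integrand of the monomial-weight measure. -/
noncomputable def wtF (w : Fin n → ℝ) (x : Fin n → ℝ) : ℝ≥0∞ :=
  ∏ i, ENNReal.ofReal (|x i| ^ (w i - 1))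

lemma wtMeasure_eq (w : Fin n → ℝ) (E : Set (Fin n → ℝ)) :
    wtMeasure w E = ∫⁻ x in E, wtF w x := rfl

lemma wtF_meas (w : Fin n → ℝ) : Measurable (wtF w) := by
  apply Finset.measurable_prod
  intro i _
  exact ((measurable_pi_apply i).abs.pow measurable_const).ennreal_ofReal

lemma volume_badSet : (volume : Measure (Fin n → ℝ)) {x | ∃ i, x i = 0} = 0 := by
  have : {x : Fin n → ℝ | ∃ i, x i = 0} = ⋃ i, {x : Fin n → ℝ | x i = 0} := by
    ext x; simp [Set.mem_iUnion]
  rw [this]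
  refine measure_iUnion_null fun i => ?_
  rw [MeasureTheory.volume_pi]
  exact MeasureTheory.Measure.pi_hyperplane _ i 0

lemma badSet_meas : MeasurableSet {x : Fin n → ℝ | ∃ i, x i = 0} := by
  have : {x : Fin n → ℝ | ∃ i, x i = 0} = ⋃ i, (fun x : Fin n → ℝ => x i) ⁻¹' {0} := by
    ext x; simp [Set.mem_iUnion]
  rw [this]
  exact MeasurableSet.iUnion fun i => (measurable_pi_apply i) (measurableSet_singleton 0)

lemma wtF_eq_exp (w : Fin n → ℝ) {x : Fin n → ℝ} (hx : ∀ i, x i ≠ 0) :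
    wtF w x = ENNReal.ofReal (Real.exp (∑ i, (w i - 1) * Real.log |x i|)) := by
  rw [wtF, Real.exp_sum, ENNReal.ofReal_prod_of_nonneg (fun i _ => (Real.exp_pos _).le)]
  refine Finset.prod_congr rfl fun i _ => ?_
  rw [Real.rpow_def_of_pos (abs_pos.mpr (hx i)), mul_comm]

lemma wtF_ne_zero (w : Fin n → ℝ) {x : Fin n → ℝ} (hx : ∀ i, x i ≠ 0) :
    wtF w x ≠ 0 := by
  rw [wtF_eq_exp w hx]
  simp [ENNReal.ofReal_eq_zero, not_le, Real.exp_pos]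

/-! ### Scaling -/

lemma scaling_mp (lam : Fin n → ℝ) (hlam : ∀ i, 0 < lam i) :
    MeasurePreserving (fun (x : Fin n → ℝ) i => lam i * x i)
      (Measure.pi fun i => (Real.toNNReal (lam i)) • (volume : Measure ℝ))
      (Measure.pi fun _ => (volume : Measure ℝ)) := by
  refine MeasureTheory.measurePreserving_pi _ _ fun i => ?_
  refine ⟨measurable_const_mul _, ?_⟩
  rw [Measure.map_smul, Real.map_volume_mul_left (ne_of_gt (hlam i))]
  rw [ENNReal.smul_def, smul_smul]
  have : (Real.toNNReal (lam i) : ℝ≥0∞) = ENNReal.ofReal (lam i) := rfl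
  rw [this, ← ENNReal.ofReal_mul (hlam i).le, abs_of_pos (inv_pos.mpr (hlam i)),
    mul_inv_cancel₀ (ne_of_gt (hlam i)), ENNReal.ofReal_one, one_smul]

lemma pi_smul_lam (lam : Fin n → ℝ) :
    Measure.pi (fun i : Fin n => (Real.toNNReal (lam i)) • (volume : Measure ℝ))
      = (∏ i, ENNReal.ofReal (lam i)) • Measure.pi (fun _ => (volume : Measure ℝ)) := by
  refine Measure.pi_eq fun s hs => ?_
  rw [Measure.smul_apply, Measure.pi_pi]
  simp only [Measure.smul_apply, smul_eq_mul]
  rw [← Finset.prod_mul_distrib]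
  congr 1

lemma wtF_scale (w lam : Fin n → ℝ) (hlam : ∀ i, 0 < lam i) (x : Fin n → ℝ) :
    wtF w (fun i => lam i * x i)
      = (∏ i, ENNReal.ofReal (lam i ^ (w i - 1))) * wtF w x := by
  rw [wtF, wtF, ← Finset.prod_mul_distrib]
  refine Finset.prod_congr rfl fun i _ => ?_
  rw [abs_mul, abs_of_pos (hlam i), Real.mul_rpow (hlam i).le (abs_nonneg _),
    ENNReal.ofReal_mul (Real.rpow_nonneg (hlam i).le _)]

lemma wtMeasure_scale (w lam : Fin n → ℝ) (hlam : ∀ i, 0 < lam i)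
    {E : Set (Fin n → ℝ)} (hE : MeasurableSet E) :
    wtMeasure w E = (∏ i, ENNReal.ofReal (lam i ^ (w i)))
      * wtMeasure w ((fun (x : Fin n → ℝ) i => lam i * x i) ⁻¹' E) := by
  have key := (scaling_mp lam hlam).setLIntegral_comp_preimage hE (by
    apply Finset.measurable_prod; intro i _
    exact ((measurable_pi_apply i).abs.pow measurable_const).ennreal_ofReal :
      Measurable (wtF w))
  rw [pi_smul_lam] at key
  have hvol : (Measure.pi fun _ : Fin n => (volume : Measure ℝ)) = volume :=
    (MeasureTheory.volume_pi).symm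
  rw [hvol] at key
  rw [Measure.restrict_smul, lintegral_smul_measure] at key
  have hpt : ∀ x, wtF w (fun i => lam i * x i)
      = (∏ i, ENNReal.ofReal (lam i ^ (w i - 1))) * wtF w x :=
    wtF_scale w lam hlam
  simp only [hpt] at key
  rw [lintegral_const_mul _ (by
    apply Finset.measurable_prod; intro i _
    exact ((measurable_pi_apply i).abs.pow measurable_const).ennreal_ofReal)] at key
  show (∫⁻ x in E, wtF w x : ℝ≥0∞) = _
  rw [← key, smul_eq_mul, ← mul_assoc]
  congr 1
  rw [← Finset.prod_mul_distrib]
  refine Finset.prod_congr rfl fun i _ => ?_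
  rw [← ENNReal.ofReal_mul (hlam i).le]
  congr 1
  rw [Real.rpow_sub (hlam i), Real.rpow_one, mul_div_assoc',
    mul_comm, mul_div_assoc, div_self (ne_of_gt (hlam i)), mul_one]

/-! ### Linear algebra -/

lemma solve_linear (w : Fin n → Fin n → ℝ) (hw : LinearIndependent ℝ w) (b : Fin n → ℝ) :
    ∃ t : Fin n → ℝ, ∀ j, ∑ i, w j i * t i = b j := by
  have hU : IsUnit (Matrix.of w) := by
    rw [← Matrix.linearIndependent_rows_iff_isUnit]
    exact hw
  refine ⟨(Matrix.of w)⁻¹ *ᵥ b, fun j => ?_⟩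
  have : (Matrix.of w) *ᵥ ((Matrix.of w)⁻¹ *ᵥ b) = b := by
    rw [Matrix.mulVec_mulVec, Matrix.mul_nonsing_inv _ ((Matrix.isUnit_iff_isUnit_det _).mp hU),
      Matrix.one_mulVec]
  conv_rhs => rw [← this]
  simp [Matrix.mulVec, dotProduct]

lemma anti_bound (w : Fin n → Fin n → ℝ) (hw : LinearIndependent ℝ w) :
    ∃ K : ℝ, 0 < K ∧ ∀ ℓ : Fin n → ℝ, (∀ j, (∑ i, w j i * ℓ i) ≤ 0) →
      ∑ i, |ℓ i| ≤ K * ∑ j, (-(∑ i, w j i * ℓ i)) := by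
  have hU : IsUnit (Matrix.of w) := by
    rw [← Matrix.linearIndependent_rows_iff_isUnit]
    exact hw
  set B := (Matrix.of w)⁻¹ with hB
  set K0 : ℝ := (∑ i, ∑ j, |B i j|) + 1 with hK0
  have hK0pos : 0 < K0 := by
    have : (0:ℝ) ≤ ∑ i, ∑ j, |B i j| :=
      Finset.sum_nonneg fun i _ => Finset.sum_nonneg fun j _ => abs_nonneg _
    linarith
  have hK0le : ∀ i j, |B i j| ≤ K0 := by
    intro i j
    have h1 : |B i j| ≤ ∑ i', ∑ j', |B i' j'| := by
      calc |B i j| ≤ ∑ j', |B i j'| :=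
            Finset.single_le_sum (fun k _ => abs_nonneg (B i k)) (Finset.mem_univ j)
        _ ≤ ∑ i', ∑ j', |B i' j'| :=
            Finset.single_le_sum (f := fun i' => ∑ j', |B i' j'|)
              (fun k _ => Finset.sum_nonneg fun l _ => abs_nonneg _) (Finset.mem_univ i)
    linarith
  refine ⟨(n+1) * K0, by positivity, fun ℓ hℓ => ?_⟩
  set b : Fin n → ℝ := fun j => ∑ i, w j i * ℓ i with hbdef
  have hrec : ∀ i, ℓ i = ∑ j, B i j * b j := by
    have : B *ᵥ ((Matrix.of w) *ᵥ ℓ) = ℓ := by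
      rw [Matrix.mulVec_mulVec, Matrix.nonsing_inv_mul _ ((Matrix.isUnit_iff_isUnit_det _).mp hU),
        Matrix.one_mulVec]
    intro i
    conv_lhs => rw [← this]
    simp [Matrix.mulVec, dotProduct, hbdef]
  have hstep : ∀ i, |ℓ i| ≤ ∑ j, K0 * (-(b j)) := by
    intro i
    rw [hrec i]
    calc |∑ j, B i j * b j| ≤ ∑ j, |B i j * b j| := Finset.abs_sum_le_sum_abs _ _
      _ ≤ ∑ j, K0 * (-(b j)) := by
          refine Finset.sum_le_sum fun j _ => ?_
          rw [abs_mul, abs_of_nonpos (hℓ j)]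
          exact mul_le_mul_of_nonneg_right (hK0le i j) (neg_nonneg.mpr (hℓ j))
  calc ∑ i, |ℓ i| ≤ ∑ _i : Fin n, ∑ j, K0 * (-(b j)) :=
        Finset.sum_le_sum fun i _ => hstep i
    _ = n * K0 * ∑ j, (-(b j)) := by
        rw [Finset.sum_const, Finset.card_univ, Fintype.card_fin, ← Finset.mul_sum]
        push_cast; ring
    _ ≤ (n+1) * K0 * ∑ j, (-(b j)) := by
        have hS : (0:ℝ) ≤ ∑ j, (-(b j)) :=
          Finset.sum_nonneg fun j _ => neg_nonneg.mpr (hℓ j)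
        have : (n:ℝ) * K0 ≤ (n+1) * K0 := by nlinarith
        exact mul_le_mul_of_nonneg_right this hS

/-! ### One-dimensional comparison function -/

/-- comparison function -/
noncomputable def psiR (δ : ℝ) (t : ℝ) : ℝ :=
  if t = 0 then 0 else Real.exp (-δ * |Real.log (abs t)| - Real.log (abs t))

lemma psiR_nonneg (δ t : ℝ) : 0 ≤ psiR δ t := by
  unfold psiR; split
  · exact le_rfl
  · exact (Real.exp_pos _).le

lemma psiR_neg (δ t : ℝ) : psiR δ (-t) = psiR δ t := by
  unfold psiR
  simp [neg_eq_zero, abs_neg]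

lemma psiR_eq_small {δ t : ℝ} (ht : t ∈ Ioc (0:ℝ) 1) : psiR δ t = t ^ (δ - 1) := by
  obtain ⟨h0, h1⟩ := ht
  rw [psiR, if_neg (ne_of_gt h0), abs_of_pos h0,
    abs_of_nonpos (Real.log_nonpos h0.le h1), Real.rpow_def_of_pos h0]
  ring_nf

lemma psiR_eq_large {δ t : ℝ} (ht : t ∈ Ioi (1:ℝ)) : psiR δ t = t ^ (-1 - δ) := by
  have h0 : (0:ℝ) < t := lt_trans one_pos ht
  rw [psiR, if_neg (ne_of_gt h0), abs_of_pos h0,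
    abs_of_nonneg (Real.log_nonneg (le_of_lt ht)), Real.rpow_def_of_pos h0]
  ring_nf

lemma psiR_integrable {δ : ℝ} (hδ : 0 < δ) : Integrable (psiR δ) := by
  have hIoi : IntegrableOn (psiR δ) (Ioi 0) := by
    have h1 : IntegrableOn (psiR δ) (Ioc 0 1) := by
      have := (intervalIntegral.intervalIntegrable_rpow' (a := 0) (b := 1)
        (r := δ - 1) (by linarith)).1
      exact this.congr_fun (fun t ht => (psiR_eq_small ht).symm) measurableSet_Ioc
    have h2 : IntegrableOn (psiR δ) (Ioi 1) := by
      have := integrableOn_Ioi_rpow_of_lt (by linarith : -1 - δ < -1) one_pos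
      exact this.congr_fun (fun t ht => (psiR_eq_large ht).symm) measurableSet_Ioi
    have : Ioc (0:ℝ) 1 ∪ Ioi 1 = Ioi 0 := Ioc_union_Ioi_eq_Ioi one_pos.le
    rw [← this]
    exact h1.union h2
  rw [← integrableOn_univ, ← @Iio_union_Ici _ _ (0 : ℝ), integrableOn_union,
    integrableOn_Ici_iff_integrableOn_Ioi]
  refine ⟨?_, hIoi⟩
  rw [← (Measure.measurePreserving_neg (volume : Measure ℝ)).integrableOn_comp_preimage
      (Homeomorph.neg ℝ).measurableEmbedding]
  simp only [Function.comp_def, psiR_neg, neg_preimage, neg_Iio, neg_zero]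
  exact hIoi

lemma prod_psiR_finite {δ : ℝ} (hδ : 0 < δ) :
    (∫⁻ x : Fin n → ℝ, ENNReal.ofReal (∏ i, psiR δ (x i))) < ⊤ :=
  (Integrable.fintype_prod (f := fun _ : Fin n => psiR δ)
    (fun _ => psiR_integrable hδ)).lintegral_lt_top

/-! ### Pointwise inequalities -/

lemma sum_s_mul (w : Fin n → Fin n → ℝ) (θ : Fin n → ℝ) (s : Fin n → ℝ)
    (hs : ∀ i, s i = ∑ k, θ k * w k i) (ℓ : Fin n → ℝ) :
    ∑ i, s i * ℓ i = ∑ k, θ k * ∑ i, w k i * ℓ i := by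
  simp only [hs, Finset.sum_mul, Finset.mul_sum]
  rw [Finset.sum_comm]
  exact Finset.sum_congr rfl fun k _ => Finset.sum_congr rfl fun i _ => by ring

lemma pt_holder (w : Fin n → Fin n → ℝ) (θ : Fin n → ℝ)
    (hθ0 : 0 < 1 - ∑ k, θ k) (s : Fin n → ℝ) (hs : ∀ i, s i = ∑ k, θ k * w k i)
    (j : Fin n) {x : Fin n → ℝ} (hx : ∀ i, x i ≠ 0)
    (hj : 0 ≤ ∑ i, w j i * Real.log |x i|) :
    wtF s x ≤ ∏ k, (wtF (w k) x) ^ (θ k + if k = j then (1 - ∑ k', θ k') else 0) := by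
  set ℓ : Fin n → ℝ := fun i => Real.log |x i| with hℓ
  set γ : Fin n → ℝ := fun k => θ k + if k = j then (1 - ∑ k', θ k') else 0 with hγ
  have hrhs : ∀ k : Fin n, (wtF (w k) x) ^ (γ k)
      = ENNReal.ofReal (Real.exp (γ k * ∑ i, (w k i - 1) * ℓ i)) := by
    intro k
    rw [wtF_eq_exp (w k) hx, ENNReal.ofReal_rpow_of_pos (Real.exp_pos _), ← Real.exp_mul,
      mul_comm]
  calc wtF s x = ENNReal.ofReal (Real.exp (∑ i, (s i - 1) * ℓ i)) := wtF_eq_exp s hx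
    _ ≤ ENNReal.ofReal (Real.exp (∑ k, γ k * ∑ i, (w k i - 1) * ℓ i)) := by
        refine ENNReal.ofReal_le_ofReal (Real.exp_le_exp.mpr ?_)
        have e1 : ∀ k : Fin n, ∑ i, (w k i - 1) * ℓ i
            = (∑ i, w k i * ℓ i) - ∑ i, ℓ i := by
          intro k
          rw [← Finset.sum_sub_distrib]
          exact Finset.sum_congr rfl fun i _ => by ring
        have e2 : ∑ i, (s i - 1) * ℓ i
            = (∑ k, θ k * ∑ i, w k i * ℓ i) - ∑ i, ℓ i := by
          rw [← sum_s_mul w θ s hs ℓ, ← Finset.sum_sub_distrib]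
          exact Finset.sum_congr rfl fun i _ => by ring
        have e3 : ∑ k, γ k * ∑ i, (w k i - 1) * ℓ i
            = (∑ k, θ k * ((∑ i, w k i * ℓ i) - ∑ i, ℓ i))
              + (1 - ∑ k', θ k') * ((∑ i, w j i * ℓ i) - ∑ i, ℓ i) := by
          simp only [e1]
          have hterm : ∀ k : Fin n, γ k * ((∑ i, w k i * ℓ i) - ∑ i, ℓ i)
              = θ k * ((∑ i, w k i * ℓ i) - ∑ i, ℓ i)
                + (if k = j then (1 - ∑ k', θ k') * ((∑ i, w j i * ℓ i) - ∑ i, ℓ i)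
                   else 0) := by
            intro k
            simp only [hγ]
            split_ifs with h
            · subst h; ring
            · ring
          rw [Finset.sum_congr rfl fun k _ => hterm k, Finset.sum_add_distrib,
            Finset.sum_ite_eq' Finset.univ j, if_pos (Finset.mem_univ j)]
        have e4 : ∑ k, θ k * ((∑ i, w k i * ℓ i) - ∑ i, ℓ i)
            = (∑ k, θ k * ∑ i, w k i * ℓ i) - (∑ k, θ k) * (∑ i, ℓ i) := by
          rw [Finset.sum_mul, ← Finset.sum_sub_distrib]
          exact Finset.sum_congr rfl fun k _ => by ring
        rw [e2, e3, e4]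
        nlinarith [mul_nonneg hθ0.le hj]
    _ = ∏ k, (wtF (w k) x) ^ (γ k) := by
        rw [Real.exp_sum, ENNReal.ofReal_prod_of_nonneg (fun k _ => (Real.exp_pos _).le)]
        exact (Finset.prod_congr rfl fun k _ => (hrhs k)).symm

lemma pt_Q (w : Fin n → Fin n → ℝ) (θ : Fin n → ℝ) (τ : ℝ) (hτpos : 0 < τ)
    (hτ : ∀ k, τ ≤ θ k) (s : Fin n → ℝ) (hs : ∀ i, s i = ∑ k, θ k * w k i)
    (K : ℝ) (hK : 0 < K)
    (hKb : ∀ ℓ : Fin n → ℝ, (∀ j, (∑ i, w j i * ℓ i) ≤ 0) →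
      ∑ i, |ℓ i| ≤ K * ∑ j, (-(∑ i, w j i * ℓ i)))
    {x : Fin n → ℝ} (hx : ∀ i, x i ≠ 0)
    (hQ : ∀ j, ∑ i, w j i * Real.log |x i| ≤ 0) :
    wtF s x ≤ ENNReal.ofReal (∏ i, psiR (τ / K) (x i)) := by
  set ℓ : Fin n → ℝ := fun i => Real.log |x i| with hℓ
  have hpsi : ∀ i, psiR (τ / K) (x i) = Real.exp (-(τ/K) * |ℓ i| - ℓ i) := by
    intro i; rw [psiR, if_neg (hx i)]
  rw [wtF_eq_exp s hx]
  calc ENNReal.ofReal (Real.exp (∑ i, (s i - 1) * ℓ i))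
      ≤ ENNReal.ofReal (Real.exp (∑ i, (-(τ/K) * |ℓ i| - ℓ i))) := by
        refine ENNReal.ofReal_le_ofReal (Real.exp_le_exp.mpr ?_)
        have e2 : ∑ i, (s i - 1) * ℓ i
            = (∑ k, θ k * ∑ i, w k i * ℓ i) - ∑ i, ℓ i := by
          rw [← sum_s_mul w θ s hs ℓ, ← Finset.sum_sub_distrib]
          exact Finset.sum_congr rfl fun i _ => by ring
        have e5 : ∑ i, (-(τ/K) * |ℓ i| - ℓ i)
            = -(τ/K) * (∑ i, |ℓ i|) - ∑ i, ℓ i := by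
          rw [Finset.mul_sum, ← Finset.sum_sub_distrib]
        rw [e2, e5]
        have h1 : ∑ k, θ k * ∑ i, w k i * ℓ i ≤ τ * ∑ k, ∑ i, w k i * ℓ i := by
          rw [Finset.mul_sum]
          exact Finset.sum_le_sum fun k _ =>
            mul_le_mul_of_nonpos_right (hτ k) (hQ k)
        have h2 := hKb ℓ hQ
        have h2' : ∑ j, (-(∑ i, w j i * ℓ i)) = -∑ k, ∑ i, w k i * ℓ i := by
          rw [← Finset.sum_neg_distrib]
        rw [h2'] at h2
        have h3 := mul_le_mul_of_nonneg_left h2 (le_of_lt (div_pos hτpos hK))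
        have h4 : (τ/K) * (K * (-∑ k, ∑ i, w k i * ℓ i))
            = τ * (-∑ k, ∑ i, w k i * ℓ i) := by
          field_simp
        rw [h4] at h3
        nlinarith
    _ = ENNReal.ofReal (∏ i, psiR (τ / K) (x i)) := by
        rw [Real.exp_sum]
        congr 1
        exact (Finset.prod_congr rfl fun i _ => hpsi i).symm

/-! ### The normalized core estimate -/

lemma core (w : Fin n → Fin n → ℝ) (θ : Fin n → ℝ)
    (hθ0 : 0 < 1 - ∑ k, θ k) (s : Fin n → ℝ) (hs : ∀ i, s i = ∑ k, θ k * w k i)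
    (τ : ℝ) (hτpos : 0 < τ) (hτ : ∀ k, τ ≤ θ k)
    (K : ℝ) (hK : 0 < K)
    (hKb : ∀ ℓ : Fin n → ℝ, (∀ j, (∑ i, w j i * ℓ i) ≤ 0) →
      ∑ i, |ℓ i| ≤ K * ∑ j, (-(∑ i, w j i * ℓ i)))
    (E : Set (Fin n → ℝ)) (hE : MeasurableSet E)
    (hE1 : ∀ j, (∫⁻ x in E, wtF (w j) x) = 1) :
    (∫⁻ x in E, wtF s x)
      ≤ n + ∫⁻ x : Fin n → ℝ, ENNReal.ofReal (∏ i, psiR (τ/K) (x i)) := by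
  classical
  set N : Set (Fin n → ℝ) := {x | ∃ i, x i = 0} with hN
  have hNmeas : MeasurableSet N := badSet_meas
  have hNnull : volume N = 0 := volume_badSet
  set G : Fin n → (Fin n → ℝ) → ℝ := fun j x => ∑ i, w j i * Real.log |x i| with hG
  have hGmeas : ∀ j, Measurable (G j) := fun j =>
    Finset.measurable_sum _ fun i _ =>
      (Real.measurable_log.comp (measurable_pi_apply i).abs).const_mul _
  set P : Fin n → Set (Fin n → ℝ) := fun j => {x | 0 ≤ G j x} with hP
  have hPmeas : ∀ j, MeasurableSet (P j) := fun j => measurableSet_le measurable_const (hGmeas j)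
  set Q : Set (Fin n → ℝ) := {x | ∀ j, G j x ≤ 0} with hQ
  have hQmeas : MeasurableSet Q := by
    have : Q = ⋂ j, {x | G j x ≤ 0} := by ext x; simp [hQ]
    rw [this]
    exact MeasurableSet.iInter fun j => measurableSet_le (hGmeas j) measurable_const
  have cover : E ⊆ (E ∩ N) ∪ (((E \ N) ∩ Q) ∪ ⋃ j, (E \ N) ∩ P j) := by
    intro x hx
    by_cases hxN : x ∈ N
    · exact Or.inl ⟨hx, hxN⟩
    · refine Or.inr ?_
      by_cases hxQ : ∀ j, G j x ≤ 0
      · exact Or.inl ⟨⟨hx, hxN⟩, hxQ⟩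
      · push_neg at hxQ
        obtain ⟨j, hj⟩ := hxQ
        exact Or.inr (Set.mem_iUnion.mpr ⟨j, ⟨hx, hxN⟩, le_of_lt hj⟩)
  have hxne : ∀ {x : Fin n → ℝ}, x ∉ N → ∀ i, x i ≠ 0 := by
    intro x hx i hi
    exact hx ⟨i, hi⟩
  -- the P_j bound
  have bP : ∀ j, (∫⁻ x in (E \ N) ∩ P j, wtF s x) ≤ 1 := by
    intro j
    set γ : Fin n → ℝ := fun k => θ k + if k = j then (1 - ∑ k', θ k') else 0 with hγ
    have hγsum : ∑ k, γ k = 1 := by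
      rw [hγ, Finset.sum_add_distrib, Finset.sum_ite_eq' Finset.univ j,
        if_pos (Finset.mem_univ j)]
      ring
    have hγnn : ∀ k, 0 ≤ γ k := by
      intro k
      have := hτ k
      simp only [hγ]
      split_ifs <;> nlinarith
    have hmeasA : MeasurableSet ((E \ N) ∩ P j) := (hE.diff hNmeas).inter (hPmeas j)
    calc (∫⁻ x in (E \ N) ∩ P j, wtF s x)
        ≤ ∫⁻ x in (E \ N) ∩ P j, ∏ k, (wtF (w k) x) ^ (γ k) := by
          refine setLIntegral_mono' hmeasA fun x hx => ?_
          exact pt_holder w θ hθ0 s hs j (hxne hx.1.2) hx.2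
      _ ≤ ∏ k, (∫⁻ x in (E \ N) ∩ P j, wtF (w k) x) ^ (γ k) :=
          ENNReal.lintegral_prod_norm_pow_le _
            (fun k _ => (wtF_meas (w k)).aemeasurable) hγsum (fun k _ => hγnn k)
      _ ≤ ∏ k, (1 : ℝ≥0∞) ^ (γ k) := by
          refine Finset.prod_le_prod' fun k _ => ?_
          refine ENNReal.rpow_le_rpow ?_ (hγnn k)
          rw [← hE1 k]
          exact lintegral_mono_set (fun x hx => hx.1.1)
      _ = 1 := by simp
  -- the Q bound
  have bQ : (∫⁻ x in (E \ N) ∩ Q, wtF s x)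
      ≤ ∫⁻ x : Fin n → ℝ, ENNReal.ofReal (∏ i, psiR (τ/K) (x i)) := by
    calc (∫⁻ x in (E \ N) ∩ Q, wtF s x)
        ≤ ∫⁻ x in (E \ N) ∩ Q, ENNReal.ofReal (∏ i, psiR (τ/K) (x i)) := by
          refine setLIntegral_mono' ((hE.diff hNmeas).inter hQmeas) fun x hx => ?_
          exact pt_Q w θ τ hτpos hτ s hs K hK hKb (hxne hx.1.2) hx.2
      _ ≤ _ := setLIntegral_le_lintegral _ _
  calc (∫⁻ x in E, wtF s x)
      ≤ ∫⁻ x in (E ∩ N) ∪ (((E \ N) ∩ Q) ∪ ⋃ j, (E \ N) ∩ P j), wtF s x :=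
        lintegral_mono_set cover
    _ ≤ (∫⁻ x in E ∩ N, wtF s x)
        + ∫⁻ x in ((E \ N) ∩ Q) ∪ ⋃ j, (E \ N) ∩ P j, wtF s x :=
        lintegral_union_le _ _ _
    _ ≤ (∫⁻ x in E ∩ N, wtF s x)
        + ((∫⁻ x in (E \ N) ∩ Q, wtF s x) + ∫⁻ x in ⋃ j, (E \ N) ∩ P j, wtF s x) :=
        add_le_add le_rfl (lintegral_union_le _ _ _)
    _ ≤ 0 + ((∫⁻ x : Fin n → ℝ, ENNReal.ofReal (∏ i, psiR (τ/K) (x i)))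
        + ∑ j, (∫⁻ x in (E \ N) ∩ P j, wtF s x)) := by
        refine add_le_add ?_ (add_le_add bQ ?_)
        · rw [setLIntegral_measure_zero]
          exact measure_mono_null Set.inter_subset_right hNnull
        · refine le_trans (lintegral_iUnion_le _ _) ?_
          rw [tsum_fintype]
    _ ≤ 0 + ((∫⁻ x : Fin n → ℝ, ENNReal.ofReal (∏ i, psiR (τ/K) (x i)))
        + ∑ _j : Fin n, 1) := by
        refine add_le_add le_rfl (add_le_add le_rfl (Finset.sum_le_sum fun j _ => bP j))
    _ = n + ∫⁻ x : Fin n → ℝ, ENNReal.ofReal (∏ i, psiR (τ/K) (x i)) := by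
        simp [add_comm]

end Stmt2Aux

open Stmt2Aux in
/-- Interpolation inequality for monomial-weight measures with linearly
independent weights and total interpolation weight strictly less than one. -/
theorem stmt_2 (n : ℕ) (hn : 0 < n) (w : Fin n → Fin n → ℝ)
    (hwpos : ∀ j i, 0 < w j i) (hw : LinearIndependent ℝ w)
    (θ : Fin n → ℝ) (hθ : ∀ j, 0 < θ j) (hθ0 : 0 < 1 - ∑ j, θ j)
    (s : Fin n → ℝ) (hs : s = ∑ j, θ j • w j) :
    ∃ C : ℝ≥0∞, C < ⊤ ∧ ∀ E : Set (Fin n → ℝ), MeasurableSet E →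
      wtMeasure s E ≤ C * ∏ j, (wtMeasure (w j) E) ^ (θ j) := by
  classical
  have hs' : ∀ i, s i = ∑ k, θ k * w k i := by
    intro i
    rw [hs]
    simp [Finset.sum_apply, Pi.smul_apply, smul_eq_mul]
  obtain ⟨K, hK, hKb⟩ := anti_bound w hw
  obtain ⟨jm, -, hjm⟩ := Finset.exists_min_image Finset.univ θ ⟨⟨0, hn⟩, Finset.mem_univ _⟩
  set τ := θ jm with hτdef
  have hτpos : 0 < τ := hθ jm
  have hτle : ∀ k, τ ≤ θ k := fun k => hjm k (Finset.mem_univ k)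
  set CQ := ∫⁻ x : Fin n → ℝ, ENNReal.ofReal (∏ i, psiR (τ/K) (x i)) with hCQdef
  have hCQ : CQ < ⊤ := prod_psiR_finite (div_pos hτpos hK)
  refine ⟨(n : ℝ≥0∞) + CQ, ?_, ?_⟩
  · exact ENNReal.add_lt_top.mpr ⟨ENNReal.natCast_lt_top n, hCQ⟩
  intro E hE
  set A : Fin n → ℝ≥0∞ := fun j => wtMeasure (w j) E with hA
  by_cases hzero : ∃ j, A j = 0
  · -- the left-hand side vanishes
    obtain ⟨j, hj⟩ := hzero
    set N : Set (Fin n → ℝ) := {x | ∃ i, x i = 0} with hN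
    have hmN : MeasurableSet N := badSet_meas
    have hints : volume (E \ N) = 0 := by
      have h0 : (∫⁻ x in E \ N, wtF (w j) x) = 0 := by
        refine le_antisymm ?_ zero_le
        have : (∫⁻ x in E, wtF (w j) x) = 0 := hj
        rw [← this]
        exact lintegral_mono_set diff_subset
      rw [lintegral_eq_zero_iff (wtF_meas (w j))] at h0
      have h1 := ae_iff.mp h0
      rw [Measure.restrict_apply' (hE.diff hmN)] at h1
      refine measure_mono_null ?_ h1
      intro x hx
      exact ⟨wtF_ne_zero (w j) (fun i hi => hx.2 ⟨i, hi⟩), hx⟩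
    have hvol : volume E = 0 := by
      have h2 : volume (E ∩ N) = 0 := measure_mono_null Set.inter_subset_right volume_badSet
      have := measure_le_inter_add_diff (volume : Measure (Fin n → ℝ)) E N
      rw [h2, hints, add_zero] at this
      exact le_antisymm this zero_le
    rw [wtMeasure_eq, setLIntegral_measure_zero _ _ hvol]
    exact zero_le
  · push_neg at hzero
    by_cases htop : ∃ j, A j = ⊤
    · -- the right-hand side is infinite
      obtain ⟨j, hj⟩ := htop
      have hprod : ∏ k, A k ^ θ k = ⊤ := by
        rw [← Finset.mul_prod_erase Finset.univ _ (Finset.mem_univ j), hj,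
          ENNReal.top_rpow_of_pos (hθ j), ENNReal.top_mul]
        refine Finset.prod_ne_zero_iff.mpr fun k _ => ?_
        simp only [ne_eq, ENNReal.rpow_eq_zero_iff, not_or, not_and]
        exact ⟨fun h => absurd h (hzero k), fun _ h => absurd h (not_lt.mpr (hθ k).le)⟩
      rw [hprod, ENNReal.mul_top]
      · exact le_top
      · have h0n : (0 : ℝ≥0∞) < n := by exact_mod_cast hn
        exact ne_of_gt (lt_of_lt_of_le h0n le_self_add)
    · push_neg at htop
      set a : Fin n → ℝ := fun j => Real.log ((A j).toReal) with ha
      obtain ⟨t, ht⟩ := solve_linear w hw a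
      set lam : Fin n → ℝ := fun i => Real.exp (t i) with hlamdef
      have hlampos : ∀ i, 0 < lam i := fun i => Real.exp_pos _
      have hprodlam : ∀ v : Fin n → ℝ, (∏ i, ENNReal.ofReal (lam i ^ (v i)))
          = ENNReal.ofReal (Real.exp (∑ i, v i * t i)) := by
        intro v
        rw [Real.exp_sum, ENNReal.ofReal_prod_of_nonneg (fun i _ => (Real.exp_pos _).le)]
        refine Finset.prod_congr rfl fun i _ => ?_
        congr 1
        show Real.exp (t i) ^ (v i) = _
        rw [← Real.exp_mul, mul_comm]
      set E' : Set (Fin n → ℝ) := (fun (x : Fin n → ℝ) i => lam i * x i) ⁻¹' E with hE'def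
      have hTmeas : Measurable (fun (x : Fin n → ℝ) i => lam i * x i) :=
        measurable_pi_iff.mpr fun i => (measurable_pi_apply i).const_mul _
      have hE'meas : MeasurableSet E' := hTmeas hE
      have hAtop : ∀ j, (0:ℝ) < (A j).toReal := fun j =>
        ENNReal.toReal_pos (hzero j) (htop j)
      have hAj' : ∀ j, wtMeasure (w j) E' = 1 := by
        intro j
        have hscale := wtMeasure_scale (w j) lam hlampos hE
        rw [hprodlam (w j)] at hscale
        have hsum : ∑ i, w j i * t i = a j := ht j
        rw [show ∑ i, (w j) i * t i = a j from hsum, Real.exp_log (hAtop j),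
          ENNReal.ofReal_toReal (htop j)] at hscale
        have : A j * 1 = A j * wtMeasure (w j) E' := by
          rw [mul_one]; exact hscale
        exact ((ENNReal.mul_right_inj (hzero j) (htop j)).mp this).symm
      have hcore := core w θ hθ0 s hs' τ hτpos hτle K hK hKb E' hE'meas
        (fun j => by rw [← wtMeasure_eq]; exact hAj' j)
      have hsc := wtMeasure_scale s lam hlampos hE
      have hfac : (∏ i, ENNReal.ofReal (lam i ^ (s i))) = ∏ j, A j ^ θ j := by
        rw [hprodlam s, sum_s_mul w θ s hs' t,
          Finset.sum_congr rfl fun k _ => by rw [ht k], Real.exp_sum,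
          ENNReal.ofReal_prod_of_nonneg (fun k _ => (Real.exp_pos _).le)]
        refine Finset.prod_congr rfl fun k _ => ?_
        rw [mul_comm, Real.exp_mul, Real.exp_log (hAtop k),
          ← ENNReal.ofReal_rpow_of_pos (hAtop k), ENNReal.ofReal_toReal (htop k)]
      calc wtMeasure s E = (∏ j, A j ^ θ j) * wtMeasure s E' := by rw [hsc, hfac]
        _ ≤ (∏ j, A j ^ θ j) * ((n:ℝ≥0∞) + CQ) := by
            refine mul_le_mul_right ?_ _
            rw [wtMeasure_eq]
            exact hcore
        _ = ((n:ℝ≥0∞) + CQ) * ∏ j, A j ^ θ j := mul_comm _ _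
end

section
/- Fix an integer $k \geq 1$ and an interval $I \subset \mathbb{R}$ (possibly unbounded). Let $f \in C^k(I)$ satisfy $f^{(k)}(t) \geq 1$ for all $t \in I$. Then for every subinterval $[a,b] \subset I$, one has $\binom{k}{\lfloor (k+1)/2 \rfloor} \int_a^b |f(t)|\, dt \geq \frac{(b-a)^{k+1}}{(k+1)^{k+1}}$. -/
open MeasureTheory intervalIntegral Set

noncomputable def dsum (n : ℕ) (g : ℝ → ℝ) (h x : ℝ) : ℝ :=
  ∑ j ∈ Finset.range (n+1), (-1:ℝ)^(n+j) * (n.choose j) * g (x + j*h)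

lemma dsum_succ (n : ℕ) (g : ℝ → ℝ) (h x : ℝ) :
    dsum (n+1) g h x = dsum n g h (x+h) - dsum n g h x := by
  unfold dsum
  rw [Finset.sum_range_succ'
    (fun j => (-1:ℝ)^(n+1+j) * (((n+1).choose j : ℕ) : ℝ) * g (x + j*h)) (n+1)]
  have key : ∀ i ∈ Finset.range (n+1),
      (-1:ℝ)^(n+1+(i+1)) * (((n+1).choose (i+1) : ℕ) : ℝ) * g (x + (↑(i+1))*h)
      = (-1:ℝ)^(n+i) * (n.choose i : ℝ) * g ((x+h) + i*h)
        + (-1:ℝ)^(n+i) * (n.choose (i+1) : ℝ) * g (x + (↑(i+1))*h) := by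
    intro i _
    have h1 : (-1:ℝ)^(n+1+(i+1)) = (-1:ℝ)^(n+i) := by
      rw [show n+1+(i+1) = (n+i)+2 by omega, pow_add]; norm_num
    have h2 : ((x+h) + (i:ℝ)*h) = x + ((i:ℕ)+1:ℝ)*h := by ring
    rw [h1, Nat.choose_succ_succ, Nat.cast_add, h2]
    push_cast
    ring
  rw [Finset.sum_congr rfl key, Finset.sum_add_distrib]
  have e2 : ∑ i ∈ Finset.range (n+1), (-1:ℝ)^(n+i) * (n.choose (i+1) : ℝ) * g (x + (↑(i+1))*h)
      = ∑ i ∈ Finset.range n, (-1:ℝ)^(n+i) * (n.choose (i+1) : ℝ) * g (x + (↑(i+1))*h) := by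
    rw [Finset.sum_range_succ, Nat.choose_succ_self]
    simp
  have e3 : ∑ j ∈ Finset.range (n+1), (-1:ℝ)^(n+j) * (n.choose j : ℝ) * g (x + j*h)
      = (∑ i ∈ Finset.range n, (-1:ℝ)^(n+(i+1)) * (n.choose (i+1) : ℝ) * g (x + (↑(i+1))*h))
        + (-1:ℝ)^(n+0) * (n.choose 0 : ℝ) * g (x + (↑(0:ℕ))*h) := by
    exact Finset.sum_range_succ'
      (fun j => (-1:ℝ)^(n+j) * (n.choose j : ℝ) * g (x + j*h)) n
  rw [e2, e3]
  have e4 : ∀ i ∈ Finset.range n,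
      (-1:ℝ)^(n+(i+1)) * (n.choose (i+1) : ℝ) * g (x + (↑(i+1))*h)
      = -((-1:ℝ)^(n+i) * (n.choose (i+1) : ℝ) * g (x + (↑(i+1))*h)) := by
    intro i _
    rw [show n+(i+1) = (n+i)+1 by omega, pow_succ]
    ring
  rw [Finset.sum_congr rfl e4, Finset.sum_neg_distrib]
  simp only [Nat.choose_zero_right, Nat.cast_zero, Nat.cast_one, zero_mul, add_zero, pow_add]
  push_cast
  ring

/-- key finite-difference estimate -/
lemma key_fd : ∀ (n : ℕ) (g : ℝ → ℝ) (s : Set ℝ) (m h x : ℝ),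
    Convex ℝ s → UniqueDiffOn ℝ s → 0 < h → ContDiffOn ℝ n g s →
    (∀ t ∈ s, m ≤ iteratedDerivWithin n g s t) →
    (∀ j : ℕ, j ≤ n → x + j*h ∈ s) →
    m * h^n ≤ dsum n g h x := by
  intro n
  induction n with
  | zero =>
    intro g s m h x _ _ _ _ hbd hmem
    have hx : x ∈ s := by simpa using hmem 0 (le_refl 0)
    have := hbd x hx
    rw [iteratedDerivWithin_zero] at this
    simpa [dsum] using this
  | succ n IH =>
    intro g s m h x hconv huniq hh hg hbd hmem
    set g' := derivWithin g s with hg'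
    have hone : (1 : WithTop ℕ∞) ≤ ((n+1 : ℕ) : WithTop ℕ∞) := by
      exact_mod_cast Nat.one_le_iff_ne_zero.mpr (Nat.succ_ne_zero n)
    have hg'cd : ContDiffOn ℝ n g' s := by
      apply hg.derivWithin huniq
      exact_mod_cast le_refl ((n : ℕ∞) + 1)
    have hbd' : ∀ t ∈ s, m ≤ iteratedDerivWithin n g' s t := by
      intro t ht
      rw [hg', ← iteratedDerivWithin_succ']
      exact hbd t ht
    -- membership helpers
    have hmemIcc : ∀ (u : ℝ), u ∈ Set.Icc x (x+h) → ∀ j : ℕ, j ≤ n → u + j*h ∈ s := by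
      intro u hu j hj
      have hj' : (j:ℝ) ≤ n := by exact_mod_cast hj
      have h1 : x + j*h ∈ s := hmem j (by omega)
      have h2 : x + (↑(j+1))*h ∈ s := hmem (j+1) (by omega)
      have : u + j*h ∈ Set.Icc (x + j*h) (x + (↑(j+1))*h) := by
        constructor
        · have := hu.1; linarith
        · have := hu.2; push_cast; linarith
      exact hconv.ordConnected.out h1 h2 this
    have hmemIoo : ∀ (u : ℝ), u ∈ Set.Ioo x (x+h) → ∀ j : ℕ, j ≤ n → u + j*h ∈ interior s := by
      intro u hu j hj
      have h1 : x + j*h ∈ s := hmem j (by omega)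
      have h2 : x + (↑(j+1))*h ∈ s := hmem (j+1) (by omega)
      have hIccs : Set.Icc (x + j*h) (x + (↑(j+1))*h) ⊆ s := hconv.ordConnected.out h1 h2
      have : u + j*h ∈ Set.Ioo (x + j*h) (x + (↑(j+1))*h) := by
        constructor
        · have := hu.1; linarith
        · have := hu.2; push_cast; linarith
      have : u + j*h ∈ interior (Set.Icc (x + j*h) (x + (↑(j+1))*h)) := by
        rwa [interior_Icc]
      exact interior_mono hIccs this
    -- φ and its derivative
    have hφderiv : ∀ u ∈ Set.Ioo x (x+h),
        HasDerivAt (fun y => dsum n g h y) (dsum n g' h u) u := by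
      intro u hu
      unfold dsum
      apply HasDerivAt.fun_sum
      intro j hj
      have hjn : j ≤ n := Nat.lt_succ_iff.mp (Finset.mem_range.mp hj)
      have hmemint : u + j*h ∈ interior s := hmemIoo u hu j hjn
      have hnhds : s ∈ nhds (u + j*h) := mem_interior_iff_mem_nhds.mp hmemint
      have hdiff : DifferentiableAt ℝ g (u + j*h) := by
        have := (hg.differentiableOn (by exact_mod_cast Nat.succ_ne_zero n))
        exact this.differentiableAt hnhds
      have hgd : HasDerivAt g (g' (u + j*h)) (u + j*h) := by
        rw [hg', derivWithin_of_mem_nhds hnhds]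
        exact hdiff.hasDerivAt
      have := HasDerivAt.comp_add_const u (j*h) (by rwa [] : HasDerivAt g (g' (u + j*h)) (u + j*h))
      exact this.const_mul _
    -- MVT
    have hφcont : ContinuousOn (fun y => dsum n g h y) (Set.Icc x (x+h)) := by
      unfold dsum
      apply continuousOn_finset_sum
      intro j hj
      have hjn : j ≤ n := Nat.lt_succ_iff.mp (Finset.mem_range.mp hj)
      apply ContinuousOn.mul continuousOn_const
      exact hg.continuousOn.comp (by fun_prop) (fun u hu => hmemIcc u hu j hjn)
    have hintIcc : interior (Set.Icc x (x+h)) = Set.Ioo x (x+h) := interior_Icc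
    have hφdiff : DifferentiableOn ℝ (fun y => dsum n g h y) (interior (Set.Icc x (x+h))) := by
      rw [hintIcc]
      intro u hu
      exact ((hφderiv u hu).differentiableAt).differentiableWithinAt
    have hφbound : ∀ u ∈ interior (Set.Icc x (x+h)), m * h^n ≤ deriv (fun y => dsum n g h y) u := by
      rw [hintIcc]
      intro u hu
      rw [(hφderiv u hu).deriv]
      apply IH g' s m h u hconv huniq hh hg'cd hbd'
      intro j hj
      exact interior_subset (hmemIoo u hu j hj)
    have hmvt := (convex_Icc x (x+h)).mul_sub_le_image_sub_of_le_deriv hφcont hφdiff hφbound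
      x (Set.left_mem_Icc.mpr (by linarith)) (x+h) (Set.right_mem_Icc.mpr (by linarith))
      (by linarith)
    rw [dsum_succ]
    have : m * h^n * (x + h - x) = m * h^(n+1) := by ring
    linarith [hmvt, this ▸ hmvt]

/-- Quantitative lower bound on intervals for functions whose `k`-th derivative
is bounded below by `1`. -/
theorem stmt_5 (k : ℕ) (hk : 1 ≤ k) (I : Set ℝ) (hI : I.OrdConnected)
    (f : ℝ → ℝ) (hf : ContDiffOn ℝ k f I)
    (hderiv : ∀ t ∈ I, 1 ≤ iteratedDerivWithin k f I t)
    (a b : ℝ) (hab : a ≤ b) (hsub : Set.Icc a b ⊆ I) :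
    (k.choose ((k + 1) / 2) : ℝ) * ∫ t in a..b, |f t|
      ≥ (b - a) ^ (k + 1) / ((k : ℝ) + 1) ^ (k + 1) := by
  rcases eq_or_lt_of_le hab with rfl | hab'
  · simp
  have hconv : Convex ℝ I := hI.convex
  have hk1 : (0:ℝ) < (k:ℝ) + 1 := by positivity
  set h : ℝ := (b - a) / ((k:ℝ) + 1) with hdef
  have hh : 0 < h := div_pos (by linarith) hk1
  have hb : a + ((k:ℝ)+1) * h = b := by rw [hdef]; field_simp; ring
  have huniq : UniqueDiffOn ℝ I := by
    apply uniqueDiffOn_convex hconv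
    have : Set.Ioo a b ⊆ interior I := by
      rw [← interior_Icc]; exact interior_mono hsub
    exact ⟨(a+b)/2, this ⟨by linarith, by linarith⟩⟩
  -- pointwise bound for x in [a, a+h]
  have hjbound : ∀ (u : ℝ), a ≤ u → u ≤ a + h → ∀ j : ℕ, j ≤ k → u + j*h ∈ Set.Icc a b := by
    intro u hu1 hu2 j hj
    have hj' : (j:ℝ) ≤ k := by exact_mod_cast hj
    have hjh : 0 ≤ (j:ℝ)*h := mul_nonneg (Nat.cast_nonneg j) hh.le
    have hjk : (j:ℝ)*h ≤ (k:ℝ)*h := mul_le_mul_of_nonneg_right hj' hh.le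
    exact ⟨by linarith, by linarith [hb]⟩
  have hpt : ∀ x ∈ Set.Icc a (a+h), h^k ≤ dsum k f h x := by
    intro x hx
    have := key_fd k f I 1 h x hconv huniq hh hf hderiv
      (fun j hj => hsub (hjbound x hx.1 hx.2 j hj))
    linarith [this]
  -- integrability
  have hfc : ContinuousOn f I := hf.continuousOn
  have hfint : ∀ j : ℕ, j ≤ k → IntervalIntegrable (fun x => f (x + j*h)) volume a (a+h) := by
    intro j hj
    apply ContinuousOn.intervalIntegrable
    apply hfc.comp (by fun_prop)
    intro u hu
    rw [Set.uIcc_of_le (by linarith)] at hu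
    exact hsub (hjbound u hu.1 hu.2 j hj)
  have hdint : IntervalIntegrable (fun x => dsum k f h x) volume a (a+h) := by
    have heq : (fun x => dsum k f h x)
        = ∑ j ∈ Finset.range (k+1), (fun x => (-1:ℝ)^(k+j) * (k.choose j : ℝ) * f (x + j*h)) := by
      funext x
      rw [Finset.sum_apply]
      rfl
    rw [heq]
    exact IntervalIntegrable.sum _
      (fun j hj => (hfint j (Nat.lt_succ_iff.mp (Finset.mem_range.mp hj))).const_mul _)
  -- integrate the pointwise bound
  have hstep1 : h^k * h ≤ ∫ x in a..(a+h), dsum k f h x := by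
    have := intervalIntegral.integral_mono_on (by linarith : a ≤ a + h)
      (_root_.intervalIntegrable_const (c := h^k)) hdint hpt
    rw [intervalIntegral.integral_const] at this
    simpa [smul_eq_mul, mul_comm] using this
  -- |f| integrable on each subinterval and on [a,b]
  have habs : IntervalIntegrable (fun t => |f t|) volume a b := by
    apply ContinuousOn.intervalIntegrable
    apply ContinuousOn.abs
    apply hfc.mono
    rwa [Set.uIcc_of_le hab]
  -- bound the integral of dsum
  have hC : ∀ j : ℕ, j ≤ k → (k.choose j : ℝ) ≤ (k.choose ((k+1)/2) : ℝ) := by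
    intro j hj
    have h1 : k.choose j ≤ k.choose (k/2) := Nat.choose_le_middle j k
    have h2 : k.choose (k/2) = k.choose ((k+1)/2) := by
      rw [show k/2 = k - (k+1)/2 by omega]
      exact Nat.choose_symm (by omega)
    exact_mod_cast h2 ▸ h1
  have hIj : ∀ j : ℕ, j ≤ k → IntervalIntegrable (fun t => |f t|) volume (a + j*h) (a + (↑(j+1))*h) := by
    intro j hj
    apply habs.mono_set
    have hj' : (j:ℝ) ≤ k := by exact_mod_cast hj
    have hjh : 0 ≤ (j:ℝ)*h := mul_nonneg (Nat.cast_nonneg j) hh.le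
    have hjk : ((j:ℝ)+1)*h ≤ ((k:ℝ)+1)*h := by
      apply mul_le_mul_of_nonneg_right (by linarith) hh.le
    rw [Set.uIcc_of_le hab, Set.uIcc_of_le (by push_cast; nlinarith [hh.le])]
    apply Set.Icc_subset_Icc
    · linarith
    · push_cast; linarith [hb]
  have hstep2 : (∫ x in a..(a+h), dsum k f h x)
      ≤ (k.choose ((k+1)/2) : ℝ) * ∫ t in a..b, |f t| := by
    unfold dsum
    rw [intervalIntegral.integral_finset_sum (fun j hj =>
      ((hfint j (Nat.lt_succ_iff.mp (Finset.mem_range.mp hj))).const_mul _))]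
    have hterm : ∀ j ∈ Finset.range (k+1),
        (∫ x in a..(a+h), (-1:ℝ)^(k+j) * (k.choose j : ℝ) * f (x + j*h))
          ≤ (k.choose ((k+1)/2) : ℝ) * ∫ t in (a + j*h)..(a + (↑(j+1))*h), |f t| := by
      intro j hj
      have hjk : j ≤ k := Nat.lt_succ_iff.mp (Finset.mem_range.mp hj)
      rw [intervalIntegral.integral_const_mul]
      have hshift : (∫ x in a..(a+h), f (x + j*h)) = ∫ t in (a + j*h)..(a + h + j*h), f t :=
        intervalIntegral.integral_comp_add_right (fun t => f t) _
      have e : a + h + (j:ℝ)*h = a + (↑(j+1))*h := by push_cast; ring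
      calc (-1:ℝ)^(k+j) * (k.choose j : ℝ) * ∫ x in a..(a+h), f (x + j*h)
          ≤ |(-1:ℝ)^(k+j) * (k.choose j : ℝ) * ∫ x in a..(a+h), f (x + j*h)| := le_abs_self _
        _ = (k.choose j : ℝ) * |∫ x in a..(a+h), f (x + j*h)| := by
            rw [abs_mul, abs_mul, abs_pow, abs_neg, abs_one, one_pow, one_mul,
              Nat.abs_cast]
        _ ≤ (k.choose j : ℝ) * ∫ t in (a + j*h)..(a + (↑(j+1))*h), |f t| := by
            apply mul_le_mul_of_nonneg_left _ (Nat.cast_nonneg _)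
            rw [hshift, e]
            exact intervalIntegral.abs_integral_le_integral_abs (by push_cast; nlinarith [hh.le])
        _ ≤ (k.choose ((k+1)/2) : ℝ) * ∫ t in (a + j*h)..(a + (↑(j+1))*h), |f t| := by
            apply mul_le_mul_of_nonneg_right (hC j hjk)
            apply intervalIntegral.integral_nonneg (by push_cast; nlinarith [hh.le])
            intro u _; exact abs_nonneg _
    calc (∑ j ∈ Finset.range (k+1), ∫ x in a..(a+h), (-1:ℝ)^(k+j) * (k.choose j : ℝ) * f (x + j*h))
        ≤ ∑ j ∈ Finset.range (k+1), (k.choose ((k+1)/2) : ℝ) * ∫ t in (a + j*h)..(a + (↑(j+1))*h), |f t| :=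
          Finset.sum_le_sum hterm
      _ = (k.choose ((k+1)/2) : ℝ) * ∑ j ∈ Finset.range (k+1), ∫ t in (a + j*h)..(a + (↑(j+1))*h), |f t| := by
          rw [Finset.mul_sum]
      _ = (k.choose ((k+1)/2) : ℝ) * ∫ t in a..b, |f t| := by
          congr 1
          have := intervalIntegral.sum_integral_adjacent_intervals
            (a := fun j : ℕ => a + j*h) (n := k+1) (f := fun t => |f t|) (μ := volume)
            (fun j hj => hIj j (Nat.lt_succ_iff.mp hj))
          simp only [Nat.cast_zero, zero_mul, add_zero] at this
          rw [this]
          congr 1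
          push_cast
          linarith [hb]
  have hfinal : h^(k+1) ≤ (k.choose ((k+1)/2) : ℝ) * ∫ t in a..b, |f t| := by
    calc h^(k+1) = h^k * h := by ring
      _ ≤ _ := le_trans hstep1 hstep2
  have hpow : h^(k+1) = (b-a)^(k+1) / ((k:ℝ)+1)^(k+1) := by
    rw [hdef, div_pow]
  linarith [hpow ▸ hfinal]
end

section
/- Fix an integer $k \geq 1$, let $I \subset \mathbb{R}$ be an interval, and let $f \in C^k(I)$ with $f^{(k)}(t) \geq 1$ for all $t \in I$. For $\lambda > 0$, let $F_\lambda := \{t \in I : |f(t)| \leq \lambda\}$. Then $F_\lambda$ is a union of at most $k$ disjoint closed intervals (intersected with $I$). -/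
open Set

private lemma icc_union_icc {a b c d : ℝ} (hab : a ≤ b) (hcd : c ≤ d)
    (h : ¬ Disjoint (Set.Icc a b) (Set.Icc c d)) :
    Set.Icc (min a c) (max b d) = Set.Icc a b ∪ Set.Icc c d := by
  rw [Set.not_disjoint_iff] at h
  obtain ⟨y, ⟨hy1, hy2⟩, hy3, hy4⟩ := h
  ext x
  simp only [Set.mem_Icc, Set.mem_union, min_le_iff, le_max_iff]
  constructor
  · rintro ⟨h1, h2⟩
    rcases le_or_gt a x with hax | hax
    · rcases le_or_gt x b with hxb | hxb
      · exact Or.inl ⟨hax, hxb⟩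
      · refine Or.inr ⟨by linarith, ?_⟩
        rcases h2 with h2 | h2 <;> linarith
    · refine Or.inr ⟨?_, by linarith⟩
      rcases h1 with h1 | h1 <;> linarith
  · rintro (⟨h1, h2⟩ | ⟨h1, h2⟩) <;>
      exact ⟨by tauto, by tauto⟩

private lemma merge_intervals : ∀ (n : ℕ) (s : Finset (ℝ × ℝ)), s.card ≤ n →
    (∀ p ∈ s, p.1 ≤ p.2) →
    ∃ t : Finset (ℝ × ℝ), t.card ≤ s.card ∧ (∀ p ∈ t, p.1 ≤ p.2) ∧
      ((t : Set (ℝ × ℝ)).Pairwise fun p q => Disjoint (Set.Icc p.1 p.2) (Set.Icc q.1 q.2)) ∧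
      (⋃ p ∈ t, Set.Icc p.1 p.2) = ⋃ p ∈ s, Set.Icc p.1 p.2 := by
  intro n
  induction n with
  | zero =>
    intro s hs hle
    have : s = ∅ := Finset.card_eq_zero.1 (Nat.le_zero.1 hs)
    subst this
    exact ⟨∅, le_rfl, by simp, by simp, rfl⟩
  | succ n ih =>
    intro s hcard hle
    by_cases hp : (s : Set (ℝ × ℝ)).Pairwise fun p q => Disjoint (Set.Icc p.1 p.2) (Set.Icc q.1 q.2)
    · exact ⟨s, le_rfl, hle, hp, rfl⟩
    · rw [Set.Pairwise] at hp
      push_neg at hp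
      obtain ⟨p, hps, q, hqs, hne, hnd⟩ := hp
      rw [Finset.mem_coe] at hps hqs
      set r : ℝ × ℝ := (min p.1 q.1, max p.2 q.2) with hr
      have hqe : q ∈ s.erase p := Finset.mem_erase.2 ⟨hne.symm, hqs⟩
      set s₀ := (s.erase p).erase q with hs₀
      have hcard₀ : s₀.card = s.card - 2 := by
        rw [hs₀, Finset.card_erase_of_mem hqe, Finset.card_erase_of_mem hps]
        omega
      have hcard2 : 2 ≤ s.card := by
        have := Finset.one_lt_card.2 ⟨p, hps, q, hqs, hne⟩
        omega
      have hcard' : (insert r s₀).card ≤ n := by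
        have := Finset.card_insert_le r s₀
        omega
      have hle' : ∀ p' ∈ insert r s₀, p'.1 ≤ p'.2 := by
        intro p' hp'
        rcases Finset.mem_insert.1 hp' with h | h
        · subst h
          exact le_trans (min_le_left _ _) (le_trans (hle p hps) (le_max_left _ _))
        · exact hle p' (Finset.mem_of_mem_erase (Finset.mem_of_mem_erase h))
      have hunion : (⋃ p' ∈ insert r s₀, Set.Icc p'.1 p'.2) = ⋃ p' ∈ s, Set.Icc p'.1 p'.2 := by
        conv_rhs => rw [← Finset.insert_erase hps, ← Finset.insert_erase hqe]
        rw [Finset.set_biUnion_insert, Finset.set_biUnion_insert, Finset.set_biUnion_insert,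
          ← Set.union_assoc, ← icc_union_icc (hle p hps) (hle q hqs) hnd]
      obtain ⟨t, htc, htle, htp, htu⟩ := ih (insert r s₀) hcard' hle'
      refine ⟨t, ?_, htle, htp, htu.trans hunion⟩
      calc t.card ≤ (insert r s₀).card := htc
        _ ≤ s₀.card + 1 := Finset.card_insert_le _ _
        _ ≤ s.card := by omega

private lemma sign_const {O : Set ℝ} (hO : O.OrdConnected) {g : ℝ → ℝ}
    (hg : ContinuousOn g O) (hne : ∀ t ∈ O, g t ≠ 0) :
    (∀ t ∈ O, 0 < g t) ∨ (∀ t ∈ O, g t < 0) := by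
  by_contra h
  push_neg at h
  obtain ⟨⟨a, ha, ha'⟩, b, hb, hb'⟩ := h
  have ha2 : g a < 0 := lt_of_le_of_ne ha' (hne a ha)
  have hb2 : 0 < g b := lt_of_le_of_ne hb' (Ne.symm (hne b hb))
  have hsub : Set.uIcc a b ⊆ O := hO.uIcc_subset ha hb
  have := intermediate_value_uIcc (hg.mono hsub)
  have h0 : (0 : ℝ) ∈ Set.uIcc (g a) (g b) :=
    Set.mem_uIcc.2 (Or.inl ⟨ha2.le, hb2.le⟩)
  obtain ⟨c, hc, hc0⟩ := this h0
  exact hne c (hsub hc) hc0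

private lemma trivial_tail' {I : Set ℝ} (hss : ¬ ∃ a ∈ I, ∃ b ∈ I, a < b) (P : ℝ → Prop) :
    (∃ b : ℝ, ∀ t ∈ I, b ≤ t → P t) ∧ (∃ b : ℝ, ∀ t ∈ I, t ≤ b → P t) := by
  push_neg at hss
  by_cases hne : I.Nonempty
  · obtain ⟨pt, hpt⟩ := hne
    constructor
    · refine ⟨pt + 1, fun t ht hbt => ?_⟩
      have := hss pt hpt t ht
      exact absurd hbt (by push_neg; linarith)
    · refine ⟨pt - 1, fun t ht hbt => ?_⟩
      have := hss t ht pt hpt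
      exact absurd hbt (by push_neg; linarith)
  · rw [Set.not_nonempty_iff_eq_empty] at hne
    subst hne
    exact ⟨⟨0, fun t ht => ht.elim⟩, ⟨0, fun t ht => ht.elim⟩⟩

private lemma uniqueDiffOn_of_two {I : Set ℝ} (hI : I.OrdConnected) {a b : ℝ}
    (ha : a ∈ I) (hb : b ∈ I) (hab : a < b) : UniqueDiffOn ℝ I := by
  apply uniqueDiffOn_convex (convex_iff_ordConnected.2 hI)
  have h1 : Set.Ioo a b ⊆ I := fun x hx => hI.out ha hb ⟨hx.1.le, hx.2.le⟩
  have h2 : Set.Ioo a b ⊆ interior I := interior_maximal h1 isOpen_Ioo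
  exact ⟨(a + b) / 2, h2 ⟨by linarith, by linarith⟩⟩

private lemma slope_tail {I : Set ℝ} (hI : I.OrdConnected) {f : ℝ → ℝ}
    (hcont : ContinuousOn f I) (hdiff : DifferentiableOn ℝ f (interior I))
    {b0 : ℝ} (hd : ∀ t ∈ I, b0 ≤ t → 1 ≤ derivWithin f I t) (C : ℝ) :
    ∃ b : ℝ, ∀ t ∈ I, b ≤ t → C ≤ f t := by
  set I' := I ∩ Set.Ici b0 with hI'
  by_cases hne : I'.Nonempty
  · obtain ⟨t0, ht0I, ht0b⟩ := hne
    have hconv' : Convex ℝ I' := (convex_iff_ordConnected.2 hI).inter (convex_Ici b0)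
    have key : ∀ x ∈ interior I', (1:ℝ) ≤ deriv f x := by
      intro x hx
      have hxI' : x ∈ I' := interior_subset hx
      have hxint : x ∈ interior I := interior_mono Set.inter_subset_left hx
      rw [← derivWithin_of_mem_nhds (mem_interior_iff_mem_nhds.1 hxint)]
      exact hd x hxI'.1 hxI'.2
    have hgrow := hconv'.mul_sub_le_image_sub_of_le_deriv
      (hcont.mono Set.inter_subset_left)
      (hdiff.mono (interior_mono Set.inter_subset_left)) key
    refine ⟨max b0 (max t0 (t0 + (C - f t0))), fun t htI htb => ?_⟩
    have htb0 : b0 ≤ t := le_trans (le_max_left _ _) htb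
    have htt0 : t0 ≤ t := le_trans (le_trans (le_max_left _ _) (le_max_right _ _)) htb
    have htC : t0 + (C - f t0) ≤ t := le_trans (le_trans (le_max_right _ _) (le_max_right _ _)) htb
    have := hgrow t0 ⟨ht0I, ht0b⟩ t ⟨htI, htb0⟩ htt0
    linarith
  · exact ⟨b0, fun t htI htb => absurd ⟨htI, htb⟩ (fun h => hne ⟨t, h⟩)⟩

private lemma slope_head_pos {I : Set ℝ} (hI : I.OrdConnected) {f : ℝ → ℝ}
    (hcont : ContinuousOn f I) (hdiff : DifferentiableOn ℝ f (interior I))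
    {b0 : ℝ} (hd : ∀ t ∈ I, t ≤ b0 → 1 ≤ derivWithin f I t) (C : ℝ) :
    ∃ b : ℝ, ∀ t ∈ I, t ≤ b → C ≤ - f t := by
  set I' := I ∩ Set.Iic b0 with hI'
  by_cases hne : I'.Nonempty
  · obtain ⟨t0, ht0I, ht0b⟩ := hne
    have hconv' : Convex ℝ I' := (convex_iff_ordConnected.2 hI).inter (convex_Iic b0)
    have key : ∀ x ∈ interior I', (1:ℝ) ≤ deriv f x := by
      intro x hx
      have hxI' : x ∈ I' := interior_subset hx
      have hxint : x ∈ interior I := interior_mono Set.inter_subset_left hx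
      rw [← derivWithin_of_mem_nhds (mem_interior_iff_mem_nhds.1 hxint)]
      exact hd x hxI'.1 hxI'.2
    have hgrow := hconv'.mul_sub_le_image_sub_of_le_deriv
      (hcont.mono Set.inter_subset_left)
      (hdiff.mono (interior_mono Set.inter_subset_left)) key
    refine ⟨min b0 (min t0 (t0 - f t0 - C)), fun t htI htb => ?_⟩
    have htb0 : t ≤ b0 := le_trans htb (min_le_left _ _)
    have htt0 : t ≤ t0 := le_trans htb (le_trans (min_le_right _ _) (min_le_left _ _))
    have htC : t ≤ t0 - f t0 - C := le_trans htb (le_trans (min_le_right _ _) (min_le_right _ _))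
    have := hgrow t ⟨htI, htb0⟩ t0 ⟨ht0I, ht0b⟩ htt0
    linarith
  · exact ⟨b0, fun t htI htb => absurd ⟨htI, htb⟩ (fun h => hne ⟨t, h⟩)⟩

private lemma slope_head_neg {I : Set ℝ} (hI : I.OrdConnected) {f : ℝ → ℝ}
    (hcont : ContinuousOn f I) (hdiff : DifferentiableOn ℝ f (interior I))
    {b0 : ℝ} (hd : ∀ t ∈ I, t ≤ b0 → derivWithin f I t ≤ -1) (C : ℝ) :
    ∃ b : ℝ, ∀ t ∈ I, t ≤ b → C ≤ f t := by
  set I' := I ∩ Set.Iic b0 with hI'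
  by_cases hne : I'.Nonempty
  · obtain ⟨t0, ht0I, ht0b⟩ := hne
    have hconv' : Convex ℝ I' := (convex_iff_ordConnected.2 hI).inter (convex_Iic b0)
    have key : ∀ x ∈ interior I', deriv f x ≤ (-1:ℝ) := by
      intro x hx
      have hxI' : x ∈ I' := interior_subset hx
      have hxint : x ∈ interior I := interior_mono Set.inter_subset_left hx
      rw [← derivWithin_of_mem_nhds (mem_interior_iff_mem_nhds.1 hxint)]
      exact hd x hxI'.1 hxI'.2
    have hgrow := hconv'.image_sub_le_mul_sub_of_deriv_le
      (hcont.mono Set.inter_subset_left)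
      (hdiff.mono (interior_mono Set.inter_subset_left)) key
    refine ⟨min b0 (min t0 (t0 + f t0 - C)), fun t htI htb => ?_⟩
    have htb0 : t ≤ b0 := le_trans htb (min_le_left _ _)
    have htt0 : t ≤ t0 := le_trans htb (le_trans (min_le_right _ _) (min_le_left _ _))
    have htC : t ≤ t0 + f t0 - C := le_trans htb (le_trans (min_le_right _ _) (min_le_right _ _))
    have := hgrow t ⟨htI, htb0⟩ t0 ⟨ht0I, ht0b⟩ htt0
    linarith
  · exact ⟨b0, fun t htI htb => absurd ⟨htI, htb⟩ (fun h => hne ⟨t, h⟩)⟩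

private lemma growth_right : ∀ k : ℕ, 1 ≤ k → ∀ (I : Set ℝ) (f : ℝ → ℝ), I.OrdConnected →
    ContDiffOn ℝ k f I → (∀ t ∈ I, 1 ≤ iteratedDerivWithin k f I t) →
    ∀ C : ℝ, ∃ b : ℝ, ∀ t ∈ I, b ≤ t → C ≤ f t := by
  intro k hk
  induction k, hk using Nat.le_induction with
  | base =>
    intro I f hI hf hd C
    by_cases hss : ∃ a ∈ I, ∃ b ∈ I, a < b
    · obtain ⟨a, ha, b, hb, hab⟩ := hss
      have hU := uniqueDiffOn_of_two hI ha hb hab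
      have hdiff : DifferentiableOn ℝ f (interior I) :=
        (hf.differentiableOn (by simp)).mono interior_subset
      refine slope_tail hI hf.continuousOn hdiff (b0 := 0) (fun t ht _ => ?_) C
      have := hd t ht
      rwa [iteratedDerivWithin_one] at this
    · exact (trivial_tail' hss (fun t => C ≤ f t)).1
  | succ k hk ih =>
    intro I f hI hf hd C
    by_cases hss : ∃ a ∈ I, ∃ b ∈ I, a < b
    · obtain ⟨a, ha, b, hb, hab⟩ := hss
      have hU := uniqueDiffOn_of_two hI ha hb hab
      set g := derivWithin f I with hg
      have hgc : ContDiffOn ℝ k g I := hf.derivWithin hU (by exact_mod_cast le_rfl)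
      have hdg : ∀ t ∈ I, 1 ≤ iteratedDerivWithin k g I t := by
        intro t ht
        rw [← iteratedDerivWithin_succ']
        exact hd t ht
      obtain ⟨b0, hb0⟩ := ih I g hI hgc hdg 1
      have hdiff : DifferentiableOn ℝ f (interior I) :=
        (hf.differentiableOn (by exact_mod_cast Nat.succ_ne_zero k)).mono interior_subset
      exact slope_tail hI hf.continuousOn hdiff (b0 := b0) (fun t ht hbt => hb0 t ht hbt) C
    · exact (trivial_tail' hss (fun t => C ≤ f t)).1

private lemma growth_left : ∀ k : ℕ, 1 ≤ k → ∀ (I : Set ℝ) (f : ℝ → ℝ), I.OrdConnected →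
    ContDiffOn ℝ k f I → (∀ t ∈ I, 1 ≤ iteratedDerivWithin k f I t) →
    ∀ C : ℝ, ∃ b : ℝ, ∀ t ∈ I, t ≤ b → C ≤ (-1 : ℝ) ^ k * f t := by
  intro k hk
  induction k, hk using Nat.le_induction with
  | base =>
    intro I f hI hf hd C
    by_cases hss : ∃ a ∈ I, ∃ b ∈ I, a < b
    · obtain ⟨a, ha, b, hb, hab⟩ := hss
      have hU := uniqueDiffOn_of_two hI ha hb hab
      have hdiff : DifferentiableOn ℝ f (interior I) :=
        (hf.differentiableOn (by simp)).mono interior_subset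
      obtain ⟨b', hb'⟩ := slope_head_pos hI hf.continuousOn hdiff (b0 := 0)
        (fun t ht _ => by
          have := hd t ht
          rwa [iteratedDerivWithin_one] at this) C
      exact ⟨b', fun t ht htb => by simpa [pow_one, neg_one_mul] using hb' t ht htb⟩
    · exact (trivial_tail' hss (fun t => C ≤ (-1:ℝ)^1 * f t)).2
  | succ k hk ih =>
    intro I f hI hf hd C
    by_cases hss : ∃ a ∈ I, ∃ b ∈ I, a < b
    · obtain ⟨a, ha, b, hb, hab⟩ := hss
      have hU := uniqueDiffOn_of_two hI ha hb hab
      set g := derivWithin f I with hg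
      have hgc : ContDiffOn ℝ k g I := hf.derivWithin hU (by exact_mod_cast le_rfl)
      have hdg : ∀ t ∈ I, 1 ≤ iteratedDerivWithin k g I t := by
        intro t ht
        rw [← iteratedDerivWithin_succ']
        exact hd t ht
      obtain ⟨b0, hb0⟩ := ih I g hI hgc hdg 1
      have hdiff : DifferentiableOn ℝ f (interior I) :=
        (hf.differentiableOn (by exact_mod_cast Nat.succ_ne_zero k)).mono interior_subset
      rcases Nat.even_or_odd k with he | ho
      · -- (-1)^k = 1, g ≥ 1 on left tail, so f → -∞
        have hgpos : ∀ t ∈ I, t ≤ b0 → 1 ≤ derivWithin f I t := by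
          intro t ht htb
          have := hb0 t ht htb
          rwa [he.neg_one_pow, one_mul] at this
        obtain ⟨b', hb'⟩ := slope_head_pos hI hf.continuousOn hdiff hgpos C
        refine ⟨b', fun t ht htb => ?_⟩
        have hodd : Odd (k + 1) := Even.add_one he
        rw [hodd.neg_one_pow, neg_one_mul]
        exact hb' t ht htb
      · -- (-1)^k = -1, g ≤ -1 on left tail, so f → +∞
        have hgneg : ∀ t ∈ I, t ≤ b0 → derivWithin f I t ≤ -1 := by
          intro t ht htb
          have := hb0 t ht htb
          rw [ho.neg_one_pow, neg_one_mul] at this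
          linarith
        obtain ⟨b', hb'⟩ := slope_head_neg hI hf.continuousOn hdiff hgneg C
        refine ⟨b', fun t ht htb => ?_⟩
        have heven : Even (k + 1) := Odd.add_one ho
        rw [heven.neg_one_pow, one_mul]
        exact hb' t ht htb
    · exact (trivial_tail' hss (fun t => C ≤ (-1:ℝ)^(k+1) * f t)).2

private lemma rolle_step {k : ℕ} {I : Set ℝ} (hI : I.OrdConnected) (hU : UniqueDiffOn ℝ I)
    {f : ℝ → ℝ} (hf : ContDiffOn ℝ k f I) :
    ∀ n j : ℕ, j + n = k → 1 ≤ j →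
    ∀ x : Fin (n + 1) → ℝ, StrictMono x → (∀ i, x i ∈ interior I) →
    (∀ i, iteratedDerivWithin j f I (x i) = 0) →
    ∃ c ∈ interior I, iteratedDerivWithin k f I c = 0 := by
  have hconvint : Convex ℝ (interior I) := (convex_iff_ordConnected.2 hI).interior
  intro n
  induction n with
  | zero =>
    intro j hj _ x _ hxI hx0
    exact ⟨x 0, hxI 0, by rw [← hj]; simpa using hx0 0⟩
  | succ n ih =>
    intro j hj hj1 x hxm hxI hx0
    have hjk : j < k := by omega
    have hcontg : ContinuousOn (iteratedDerivWithin j f I) I :=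
      hf.continuousOn_iteratedDerivWithin (by exact_mod_cast hjk.le) hU
    have hdiffg : DifferentiableOn ℝ (iteratedDerivWithin j f I) I :=
      hf.differentiableOn_iteratedDerivWithin (by exact_mod_cast hjk) hU
    have key : ∀ i : Fin (n + 1), ∃ y, y ∈ Set.Ioo (x i.castSucc) (x i.succ) ∧
        iteratedDerivWithin (j + 1) f I y = 0 := by
      intro i
      have hab : x i.castSucc < x i.succ := hxm (Fin.castSucc_lt_succ (i := i))
      have hIccsub : Set.Icc (x i.castSucc) (x i.succ) ⊆ interior I :=
        hconvint.ordConnected.out (hxI i.castSucc) (hxI i.succ)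
      have hcont' : ContinuousOn (iteratedDerivWithin j f I)
          (Set.Icc (x i.castSucc) (x i.succ)) :=
        hcontg.mono (hIccsub.trans interior_subset)
      have hder : ∀ t ∈ Set.Ioo (x i.castSucc) (x i.succ),
          HasDerivAt (iteratedDerivWithin j f I) (iteratedDerivWithin (j + 1) f I t) t := by
        intro t ht
        have htint : t ∈ interior I := hIccsub (Set.Ioo_subset_Icc_self ht)
        have htI : t ∈ I := interior_subset htint
        have hnhds : I ∈ nhds t := mem_interior_iff_mem_nhds.1 htint
        have hda : DifferentiableAt ℝ (iteratedDerivWithin j f I) t :=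
          (hdiffg t htI).differentiableAt hnhds
        have heq : deriv (iteratedDerivWithin j f I) t = iteratedDerivWithin (j + 1) f I t := by
          rw [← derivWithin_of_mem_nhds hnhds, ← iteratedDerivWithin_succ]
        rw [← heq]
        exact hda.hasDerivAt
      obtain ⟨c, hc, hc0⟩ := exists_hasDerivAt_eq_zero hab hcont'
        ((hx0 i.castSucc).trans (hx0 i.succ).symm) hder
      exact ⟨c, hc, hc0⟩
    choose y hyIoo hy0 using key
    have hym : StrictMono y := by
      intro i i' hii'
      have h1 : y i < x i.succ := (hyIoo i).2
      have h2 : x i'.castSucc < y i' := (hyIoo i').1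
      have h3 : x i.succ ≤ x i'.castSucc := hxm.monotone (by
        simp only [Fin.le_def, Fin.val_succ, Fin.coe_castSucc]
        exact hii')
      linarith
    have hyI : ∀ i, y i ∈ interior I := by
      intro i
      exact hconvint.ordConnected.out (hxI i.castSucc) (hxI i.succ)
        (Set.Ioo_subset_Icc_self (hyIoo i))
    exact ih (j + 1) (by omega) (by omega) y hym hyI hy0

private lemma rolle_count {k : ℕ} (hk : 1 ≤ k) {I : Set ℝ} (hI : I.OrdConnected)
    (hU : UniqueDiffOn ℝ I) {f : ℝ → ℝ} (hf : ContDiffOn ℝ k f I)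
    (hd : ∀ t ∈ I, 1 ≤ iteratedDerivWithin k f I t) :
    ¬ ∃ x : Fin k → ℝ, StrictMono x ∧ (∀ i, x i ∈ interior I) ∧
      (∀ i, derivWithin f I (x i) = 0) := by
  obtain ⟨k', rfl⟩ : ∃ k', k = k' + 1 := ⟨k - 1, by omega⟩
  rintro ⟨x, hxm, hxI, hx0⟩
  have hx0' : ∀ i, iteratedDerivWithin 1 f I (x i) = 0 := by
    intro i
    rw [iteratedDerivWithin_one]
    exact hx0 i
  obtain ⟨c, hcI, hc0⟩ := rolle_step hI hU hf k' 1 (by omega) le_rfl x hxm hxI hx0'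
  have := hd c (interior_subset hcI)
  rw [hc0] at this
  linarith

private lemma exists_piece {j : ℕ} (z : Fin j → ℝ) (hz : StrictMono z) (t : ℝ) :
    ∃ i : Fin (j + 1), (∀ l : Fin j, l.val < i.val → z l ≤ t) ∧
      (∀ l : Fin j, i.val ≤ l.val → t ≤ z l) := by
  classical
  set S := Finset.univ.filter (fun l : Fin j => z l < t) with hS
  have hSle : S.card ≤ j := le_trans (Finset.card_le_univ S) (by simp)
  refine ⟨⟨S.card, by omega⟩, ?_, ?_⟩
  · intro l hl
    by_contra hzl
    push_neg at hzl
    have hsub : S ⊆ Finset.Iio l := by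
      intro l' hl'
      rw [hS, Finset.mem_filter] at hl'
      rw [Finset.mem_Iio]
      by_contra hge
      push_neg at hge
      exact absurd hl'.2 (not_lt.2 (hzl.le.trans (hz.monotone hge)))
    have hc := Finset.card_le_card hsub
    rw [Fin.card_Iio] at hc
    simp only at hl
    omega
  · intro l hl
    by_contra h
    push_neg at h
    have hsub : Finset.Iic l ⊆ S := by
      intro l' hl'
      rw [Finset.mem_Iic] at hl'
      rw [hS, Finset.mem_filter]
      exact ⟨Finset.mem_univ _, lt_of_le_of_lt (hz.monotone hl') h⟩
    have hc := Finset.card_le_card hsub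
    rw [Fin.card_Iic] at hc
    simp only at hl
    omega

private lemma seg_eq {I S : Set ℝ} {f : ℝ → ℝ} {lam : ℝ} {Q : Set ℝ}
    (hcont : ContinuousOn f I) (hQc : IsClosed Q)
    (hSdef : S = {t | (t ∈ I ∧ t ∈ Q) ∧ |f t| ≤ lam})
    (hSord : S.OrdConnected) (hbb : BddBelow S) (hba : BddAbove S) (hne : S.Nonempty) :
    S = Set.Icc (sInf S) (sSup S) ∩ I := by
  have hSI : S ⊆ I := by rw [hSdef]; exact fun t ht => ht.1.1
  have hSQ : S ⊆ Q := by rw [hSdef]; exact fun t ht => ht.1.2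
  have hlim : ∀ t ∈ I, t ∈ closure S → t ∈ S := by
    intro t htI htc
    have htQ : t ∈ Q := (IsClosed.closure_subset_iff hQc).2 hSQ htc
    have hfc : ContinuousWithinAt f S t := (hcont t htI).mono hSI
    have hnb : (nhdsWithin t S).NeBot := mem_closure_iff_nhdsWithin_neBot.1 htc
    have habs : Filter.Tendsto (fun s => |f s|) (nhdsWithin t S) (nhds |f t|) :=
      (continuous_abs.continuousAt.tendsto).comp hfc
    have hev : ∀ᶠ s in nhdsWithin t S, |f s| ≤ lam := by
      filter_upwards [self_mem_nhdsWithin] with s hs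
      rw [hSdef] at hs
      exact hs.2
    have : |f t| ≤ lam := le_of_tendsto habs hev
    rw [hSdef]
    exact ⟨⟨htI, htQ⟩, this⟩
  apply Set.Subset.antisymm
  · intro t ht
    exact ⟨⟨csInf_le hbb ht, le_csSup hba ht⟩, hSI ht⟩
  · rintro t ⟨⟨htc, htd⟩, htI⟩
    by_cases hex1 : ∃ s ∈ S, s ≤ t
    · by_cases hex2 : ∃ s ∈ S, t ≤ s
      · obtain ⟨s1, hs1, hs1t⟩ := hex1
        obtain ⟨s2, hs2, hs2t⟩ := hex2
        exact hSord.out hs1 hs2 ⟨hs1t, hs2t⟩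
      · push_neg at hex2
        have hsup : sSup S ≤ t := csSup_le hne (fun s hs => (hex2 s hs).le)
        have : t = sSup S := le_antisymm htd hsup
        rw [this]
        exact hlim _ (this ▸ htI) (csSup_mem_closure hne hba)
    · push_neg at hex1
      have hinf : t ≤ sInf S := le_csInf hne (fun s hs => (hex1 s hs).le)
      have : t = sInf S := le_antisymm hinf htc
      rw [this]
      exact hlim _ (this ▸ htI) (csInf_mem_closure hne hbb)

open MeasureTheory

/-- The sublevel set `{t ∈ I : |f(t)| ≤ λ}` of a function with `f^{(k)} ≥ 1` is
a union of at most `k` pairwise disjoint closed intervals (intersected with `I`). -/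
theorem stmt_7 (k : ℕ) (hk : 1 ≤ k) (I : Set ℝ) (hI : I.OrdConnected)
    (f : ℝ → ℝ) (hf : ContDiffOn ℝ k f I)
    (hderiv : ∀ t ∈ I, 1 ≤ iteratedDerivWithin k f I t)
    (lam : ℝ) (hlam : 0 < lam) :
    ∃ m : ℕ, m ≤ k ∧ ∃ c d : Fin m → ℝ, (∀ i, c i ≤ d i) ∧
      (Pairwise fun i i' => Disjoint (Set.Icc (c i) (d i)) (Set.Icc (c i') (d i'))) ∧
      {t | t ∈ I ∧ |f t| ≤ lam} = (⋃ i, Set.Icc (c i) (d i)) ∩ I := by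
  classical
  by_cases hss : ∃ a ∈ I, ∃ b ∈ I, a < b
  swap
  · -- degenerate case: I has at most one point
    push_neg at hss
    by_cases hne : {t | t ∈ I ∧ |f t| ≤ lam}.Nonempty
    · obtain ⟨pt, hptI, hptf⟩ := hne
      refine ⟨1, hk, fun _ => pt, fun _ => pt, fun _ => le_rfl, ?_, ?_⟩
      · intro i i' hii'
        exact absurd (Subsingleton.elim i i') hii'
      · ext t
        simp only [Set.mem_setOf_eq, Set.mem_inter_iff, Set.mem_iUnion, Set.mem_Icc]
        constructor
        · rintro ⟨htI, htf⟩
          have h1 := hss pt hptI t htI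
          have h2 := hss t htI pt hptI
          have heq : t = pt := le_antisymm h1 h2
          exact ⟨⟨0, by rw [heq]; exact ⟨le_rfl, le_rfl⟩⟩, htI⟩
        · rintro ⟨⟨i, h1, h2⟩, htI⟩
          have heq : t = pt := le_antisymm h2 h1
          rw [heq]
          exact ⟨hptI, hptf⟩
    · refine ⟨0, Nat.zero_le k, Fin.elim0, Fin.elim0, fun i => i.elim0, fun i => i.elim0, ?_⟩
      rw [Set.not_nonempty_iff_eq_empty] at hne
      rw [hne]
      simp
  obtain ⟨a0, ha0, b0', hb0', hab0⟩ := hss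
  have hU : UniqueDiffOn ℝ I := uniqueDiffOn_of_two hI ha0 hb0' hab0
  -- global bounds on the sublevel set
  obtain ⟨hi0, hhi⟩ := growth_right k hk I f hI hf hderiv (lam + 1)
  obtain ⟨lo0, hlo⟩ := growth_left k hk I f hI hf hderiv (lam + 1)
  have hbdd : ∀ t ∈ I, |f t| ≤ lam → lo0 ≤ t ∧ t ≤ hi0 := by
    intro t htI htf
    constructor
    · by_contra hlt
      push_neg at hlt
      have h1 := hlo t htI hlt.le
      have h2 : (-1:ℝ)^k * f t ≤ |f t| := by
        calc (-1:ℝ)^k * f t ≤ |(-1:ℝ)^k * f t| := le_abs_self _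
          _ = |f t| := by rw [abs_mul, abs_pow, abs_neg, abs_one, one_pow, one_mul]
      linarith
    · by_contra hlt
      push_neg at hlt
      have h1 := hhi t htI hlt.le
      have h2 : f t ≤ |f t| := le_abs_self _
      linarith
  -- the zero set of the derivative in the interior
  set g := derivWithin f I with hgdef
  set Z := {t | t ∈ interior I ∧ g t = 0} with hZ
  have hno : ∀ (zf : Finset ℝ), (zf : Set ℝ) ⊆ Z → zf.card ≠ k := by
    intro zf hsub hcard
    apply rolle_count hk hI hU hf hderiv
    refine ⟨zf.orderEmbOfFin hcard, (zf.orderEmbOfFin hcard).strictMono, ?_, ?_⟩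
    · intro i
      exact (hsub (zf.orderEmbOfFin_mem hcard i)).1
    · intro i
      exact (hsub (zf.orderEmbOfFin_mem hcard i)).2
  have hZfin : Z.Finite := by
    by_contra hinf
    obtain ⟨zf, hsub, hcard⟩ := Set.Infinite.exists_subset_card_eq hinf k
    exact hno zf hsub hcard
  set Zf := hZfin.toFinset with hZfdef
  have hZcard : Zf.card < k := by
    by_contra hc
    push_neg at hc
    obtain ⟨zf, hsub, hcard⟩ := Finset.exists_subset_card_eq hc
    refine hno zf ?_ hcard
    intro x hx
    exact hZfin.mem_toFinset.1 (hsub hx)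
  set j := Zf.card with hjdef
  set z := Zf.orderEmbOfFin hjdef.symm with hzdef
  have hzmem : ∀ l, (z l : ℝ) ∈ Z := fun l => hZfin.mem_toFinset.1 (Zf.orderEmbOfFin_mem _ l)
  have hzsurj : ∀ t ∈ Z, ∃ l, z l = t := by
    intro t ht
    have h1 : t ∈ (Zf : Set ℝ) := by
      rw [hZfdef, hZfin.coe_toFinset]
      exact ht
    rw [← Finset.range_orderEmbOfFin Zf hjdef.symm] at h1
    exact h1
  -- the pieces
  set Q : Fin (j + 1) → Set ℝ := fun i =>
    {t | ∀ l : Fin j, (l.val < i.val → z l ≤ t) ∧ (i.val ≤ l.val → t ≤ z l)} with hQdef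
  have hQclosed : ∀ i, IsClosed (Q i) := by
    intro i
    have heq : Q i = ⋂ l : Fin j,
        ({t : ℝ | l.val < i.val → z l ≤ t} ∩ {t : ℝ | i.val ≤ l.val → t ≤ z l}) := by
      ext t
      simp only [hQdef, Set.mem_setOf_eq, Set.mem_iInter, Set.mem_inter_iff]
    rw [heq]
    apply isClosed_iInter
    intro l
    apply IsClosed.inter
    · by_cases hc : l.val < i.val
      · simp only [hc, forall_const]
        exact isClosed_Ici
      · simp only [hc, false_implies, Set.setOf_true]
        exact isClosed_univ
    · by_cases hc : i.val ≤ l.val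
      · simp only [hc, forall_const]
        exact isClosed_Iic
      · simp only [hc, false_implies, Set.setOf_true]
        exact isClosed_univ
  have hQord : ∀ i, (Q i).OrdConnected := by
    intro i
    constructor
    intro x hx y hy t ht
    intro l
    exact ⟨fun hl => le_trans ((hx l).1 hl) ht.1, fun hl => le_trans ht.2 ((hy l).2 hl)⟩
  have hcover : ∀ t : ℝ, ∃ i, t ∈ Q i := by
    intro t
    obtain ⟨i, h1, h2⟩ := exists_piece z z.strictMono t
    exact ⟨i, fun l => ⟨h1 l, h2 l⟩⟩
  have hgcont : ContinuousOn g I := hf.continuousOn_derivWithin hU (by exact_mod_cast hk)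
  have hmono : ∀ i, StrictMonoOn f (I ∩ Q i) ∨ StrictAntiOn f (I ∩ Q i) := by
    intro i
    set T : Set ℝ := interior I ∩
      {t | ∀ l : Fin j, (l.val < i.val → z l < t) ∧ (i.val ≤ l.val → t < z l)} with hTdef
    have hTord : T.OrdConnected := by
      apply Set.OrdConnected.inter
      · exact ((convex_iff_ordConnected.2 hI).interior).ordConnected
      · constructor
        intro x hx y hy t ht l
        exact ⟨fun hl => lt_of_lt_of_le ((hx l).1 hl) ht.1,
          fun hl => lt_of_le_of_lt ht.2 ((hy l).2 hl)⟩
    have hTI : T ⊆ I := fun t ht => interior_subset ht.1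
    have hTne : ∀ t ∈ T, g t ≠ 0 := by
      intro t ht h0
      obtain ⟨l, hl⟩ := hzsurj t ⟨ht.1, h0⟩
      rcases lt_or_ge l.val i.val with hc | hc
      · exact absurd ((ht.2 l).1 hc) (by rw [hl]; exact lt_irrefl t)
      · exact absurd ((ht.2 l).2 hc) (by rw [hl]; exact lt_irrefl t)
    have hsign := sign_const hTord (hgcont.mono hTI) hTne
    have hint : interior (I ∩ Q i) ⊆ T := by
      intro t ht
      have htI : t ∈ interior I := interior_mono Set.inter_subset_left ht
      obtain ⟨ε, hε, hball⟩ := Metric.mem_nhds_iff.1 (mem_interior_iff_mem_nhds.1 ht)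
      rw [Real.ball_eq_Ioo] at hball
      refine ⟨htI, fun l => ⟨fun hl => ?_, fun hl => ?_⟩⟩
      · have hmem : t - ε/2 ∈ I ∩ Q i := hball ⟨by linarith, by linarith⟩
        have := (hmem.2 l).1 hl
        linarith
      · have hmem : t + ε/2 ∈ I ∩ Q i := hball ⟨by linarith, by linarith⟩
        have := (hmem.2 l).2 hl
        linarith
    have hPconv : Convex ℝ (I ∩ Q i) :=
      (convex_iff_ordConnected.2 hI).inter (convex_iff_ordConnected.2 (hQord i))
    have hPcont : ContinuousOn f (I ∩ Q i) := hf.continuousOn.mono Set.inter_subset_left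
    rcases hsign with hpos | hneg
    · left
      apply strictMonoOn_of_deriv_pos hPconv hPcont
      intro x hx
      have hxT := hint hx
      rw [← derivWithin_of_mem_nhds (mem_interior_iff_mem_nhds.1 hxT.1)]
      exact hpos x hxT
    · right
      apply strictAntiOn_of_deriv_neg hPconv hPcont
      intro x hx
      have hxT := hint hx
      rw [← derivWithin_of_mem_nhds (mem_interior_iff_mem_nhds.1 hxT.1)]
      exact hneg x hxT
  -- the sublevel pieces
  set S : Fin (j + 1) → Set ℝ := fun i => {t | (t ∈ I ∧ t ∈ Q i) ∧ |f t| ≤ lam} with hSdef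
  have hFS : {t | t ∈ I ∧ |f t| ≤ lam} = ⋃ i, S i := by
    ext t
    simp only [Set.mem_setOf_eq, Set.mem_iUnion]
    constructor
    · rintro ⟨htI, htf⟩
      obtain ⟨i, hi⟩ := hcover t
      exact ⟨i, ⟨htI, hi⟩, htf⟩
    · rintro ⟨i, ⟨htI, _⟩, htf⟩
      exact ⟨htI, htf⟩
  have hSbb : ∀ i, BddBelow (S i) := fun i => ⟨lo0, fun t ht => (hbdd t ht.1.1 ht.2).1⟩
  have hSba : ∀ i, BddAbove (S i) := fun i => ⟨hi0, fun t ht => (hbdd t ht.1.1 ht.2).2⟩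
  have hSord : ∀ i, (S i).OrdConnected := by
    intro i
    constructor
    rintro x ⟨⟨hxI, hxQ⟩, hxf⟩ y ⟨⟨hyI, hyQ⟩, hyf⟩ t ht
    have hPt : t ∈ I ∩ Q i := (hI.inter (hQord i)).out ⟨hxI, hxQ⟩ ⟨hyI, hyQ⟩ ht
    refine ⟨hPt, ?_⟩
    rw [abs_le] at hxf hyf ⊢
    rcases hmono i with hm | hm
    · have h1 := hm.monotoneOn ⟨hxI, hxQ⟩ hPt ht.1
      have h2 := hm.monotoneOn hPt ⟨hyI, hyQ⟩ ht.2
      exact ⟨by linarith [hxf.1], by linarith [hyf.2]⟩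
    · have h1 := hm.antitoneOn ⟨hxI, hxQ⟩ hPt ht.1
      have h2 := hm.antitoneOn hPt ⟨hyI, hyQ⟩ ht.2
      exact ⟨by linarith [hyf.1], by linarith [hxf.2]⟩
  have hseg : ∀ i, (S i).Nonempty → S i = Set.Icc (sInf (S i)) (sSup (S i)) ∩ I :=
    fun i hne => seg_eq hf.continuousOn (hQclosed i) rfl (hSord i) (hSbb i) (hSba i) hne
  -- the finite set of endpoint pairs
  set s0 : Finset (ℝ × ℝ) := (Finset.univ.filter (fun i : Fin (j+1) => (S i).Nonempty)).image
    (fun i => (sInf (S i), sSup (S i))) with hs0def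
  have hs0le : ∀ p ∈ s0, p.1 ≤ p.2 := by
    intro p hp
    rw [hs0def, Finset.mem_image] at hp
    obtain ⟨i, hi, rfl⟩ := hp
    rw [Finset.mem_filter] at hi
    exact csInf_le_csSup hi.2 (hSbb i) (hSba i)
  have hs0card : s0.card ≤ k := by
    calc s0.card ≤ (Finset.univ.filter (fun i : Fin (j+1) => (S i).Nonempty)).card :=
          Finset.card_image_le
      _ ≤ (Finset.univ : Finset (Fin (j+1))).card := Finset.card_filter_le _ _
      _ = j + 1 := by simp
      _ ≤ k := by omega
  have hFs0 : {t | t ∈ I ∧ |f t| ≤ lam} = (⋃ p ∈ s0, Set.Icc p.1 p.2) ∩ I := by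
    ext t
    constructor
    · intro ht
      rw [hFS, Set.mem_iUnion] at ht
      obtain ⟨i, hti⟩ := ht
      have hne : (S i).Nonempty := ⟨t, hti⟩
      have hteq := hseg i hne
      rw [hteq] at hti
      refine ⟨?_, hti.2⟩
      rw [Set.mem_iUnion₂]
      refine ⟨(sInf (S i), sSup (S i)), ?_, hti.1⟩
      rw [hs0def, Finset.mem_image]
      exact ⟨i, Finset.mem_filter.2 ⟨Finset.mem_univ _, hne⟩, rfl⟩
    · rintro ⟨htU, htI⟩
      rw [Set.mem_iUnion₂] at htU
      obtain ⟨p, hp, htp⟩ := htU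
      rw [hs0def, Finset.mem_image] at hp
      obtain ⟨i, hi, rfl⟩ := hp
      rw [Finset.mem_filter] at hi
      have hteq := hseg i hi.2
      rw [hFS, Set.mem_iUnion]
      exact ⟨i, by rw [hteq]; exact ⟨htp, htI⟩⟩
  -- merge into pairwise disjoint intervals
  obtain ⟨tf, htc, htle, htp, htu⟩ := merge_intervals s0.card s0 le_rfl hs0le
  refine ⟨tf.card, le_trans htc hs0card, fun i => ((tf.equivFin.symm i : ℝ × ℝ)).1,
    fun i => ((tf.equivFin.symm i : ℝ × ℝ)).2, ?_, ?_, ?_⟩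
  · intro i
    exact htle _ (tf.equivFin.symm i).2
  · intro i i' hii'
    have hne : ((tf.equivFin.symm i : ℝ × ℝ)) ≠ ((tf.equivFin.symm i' : ℝ × ℝ)) := by
      intro h
      exact hii' (tf.equivFin.symm.injective (Subtype.ext h))
    exact htp (Finset.mem_coe.2 (tf.equivFin.symm i).2) (Finset.mem_coe.2 (tf.equivFin.symm i').2) hne
  · rw [hFs0, ← htu]
    congr 1
    apply Set.Subset.antisymm
    · intro x hx
      rw [Set.mem_iUnion₂] at hx
      obtain ⟨p, hp, hx⟩ := hx
      rw [Set.mem_iUnion]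
      refine ⟨tf.equivFin ⟨p, hp⟩, ?_⟩
      have h := Equiv.symm_apply_apply tf.equivFin ⟨p, hp⟩
      simpa only [h] using hx
    · intro x hx
      rw [Set.mem_iUnion] at hx
      obtain ⟨i, hx⟩ := hx
      rw [Set.mem_iUnion₂]
      exact ⟨_, (tf.equivFin.symm i).2, hx⟩
end

section
/- Fix an integer $k \geq 1$, let $I \subset \mathbb{R}$ be an interval, and let $f \in C^k(I)$ with $f^{(k)}(t) \geq 1$ for all $t \in I$. For $\lambda > 0$, let $F_\lambda := \{t \in I : |f(t)| \leq \lambda\}$ and let $j_0 := \lfloor (k+1)/2 \rfloor$. Then $\int_{F_\lambda} |f(t)|\, dt \geq \frac{j_0! \,(k-j_0)!}{k!\, k^k\, (k+1)^{k+1}} |F_\lambda|^{k+1}$, where $|F_\lambda|$ denotes the Lebesgue measure of $F_\lambda$. -/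
open MeasureTheory Set Filter Polynomial

open scoped Topology ENNReal

namespace Stmt8Aux

lemma measSet (I : Set ℝ) (hI : MeasurableSet I) (f : ℝ → ℝ) (hc : ContinuousOn f I)
    (μ : ℝ) : MeasurableSet {t | t ∈ I ∧ |f t| ≤ μ} := by
  have hcl : {t | t ∈ I ∧ |f t| ≤ μ} = I ∩ closure {t | t ∈ I ∧ |f t| ≤ μ} := by
    apply Set.Subset.antisymm
    · exact fun t ht => ⟨ht.1, subset_closure ht⟩
    · rintro t ⟨htI, htc⟩
      refine ⟨htI, ?_⟩
      have hcw : ContinuousWithinAt f {t | t ∈ I ∧ |f t| ≤ μ} t :=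
        (hc t htI).mono (fun s hs => hs.1)
      have h1 := hcw.mem_closure_image htc
      have hsub : f '' {t | t ∈ I ∧ |f t| ≤ μ} ⊆ {y : ℝ | |y| ≤ μ} := by
        rintro y ⟨s, hs, rfl⟩; exact hs.2
      have hclosed : IsClosed {y : ℝ | |y| ≤ μ} := isClosed_le continuous_abs continuous_const
      have h2 := closure_mono hsub h1
      rwa [hclosed.closure_eq] at h2
  rw [hcl]
  exact hI.inter isClosed_closure.measurableSet

lemma prod_dist (k j : ℕ) (hj : j ≤ k) :
    ∏ i ∈ (Finset.range (k+1)).erase j, Nat.dist j i = j.factorial * (k - j).factorial := by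
  have hsplit : (Finset.range (k+1)).erase j = Finset.range j ∪ Finset.Ico (j+1) (k+1) := by
    ext i
    simp only [Finset.mem_erase, Finset.mem_range, Finset.mem_union, Finset.mem_Ico]
    omega
  have hdisj : Disjoint (Finset.range j) (Finset.Ico (j+1) (k+1)) := by
    rw [Finset.disjoint_left]
    intro i hi hi'
    simp only [Finset.mem_range] at hi
    simp only [Finset.mem_Ico] at hi'
    omega
  rw [hsplit, Finset.prod_union hdisj]
  congr 1
  · have h1 : ∀ i ∈ Finset.range j, Nat.dist j i = (j - 1 - i) + 1 := by
      intro i hi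
      simp only [Finset.mem_range] at hi
      unfold Nat.dist; omega
    rw [Finset.prod_congr rfl h1, Finset.prod_range_reflect (fun i => i + 1) j,
      Finset.prod_range_add_one_eq_factorial]
  · rw [Finset.prod_Ico_eq_prod_range]
    have h2 : ∀ i ∈ Finset.range (k+1-(j+1)), Nat.dist j (j+1+i) = i + 1 := by
      intro i hi
      unfold Nat.dist; omega
    rw [Finset.prod_congr rfl h2, Finset.prod_range_add_one_eq_factorial]
    congr 1; omega

lemma fact_min (k j : ℕ) (hj : j ≤ k) :
    ((k+1)/2).factorial * (k - (k+1)/2).factorial ≤ j.factorial * (k - j).factorial := by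
  have hj0 : (k+1)/2 ≤ k := by omega
  have h0 : k.choose j * (j.factorial * (k-j).factorial) = k.factorial := by
    rw [← Nat.choose_mul_factorial_mul_factorial hj]; ring
  have h1 : k.choose ((k+1)/2) * (((k+1)/2).factorial * ((k-(k+1)/2)).factorial) = k.factorial := by
    rw [← Nat.choose_mul_factorial_mul_factorial hj0]; ring
  have h2 : k.choose j ≤ k.choose ((k+1)/2) := by
    have ha := Nat.choose_le_middle j k
    have hsym : k.choose ((k+1)/2) = k.choose (k/2) := by
      rw [← Nat.choose_symm (by omega : k/2 ≤ k)]
      congr 1; omega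
    omega
  have hcpos : 0 < k.choose j := Nat.choose_pos hj
  apply Nat.le_of_mul_le_mul_left _ hcpos
  calc k.choose j * (((k+1)/2).factorial * (k - (k+1)/2).factorial)
      ≤ k.choose ((k+1)/2) * (((k+1)/2).factorial * (k - (k+1)/2).factorial) :=
        Nat.mul_le_mul_right _ h2
    _ = k.factorial := h1
    _ = k.choose j * (j.factorial * (k - j).factorial) := h0.symm

lemma poly_eval_deriv (k : ℕ) (p : ℝ[X]) (hdeg : p.natDegree ≤ k) (t : ℝ) :
    (derivative^[k] p).eval t = (k.factorial : ℝ) * p.coeff k := by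
  have h1 : (derivative^[k] p).natDegree ≤ 0 := by
    have := p.natDegree_iterate_derivative k
    omega
  have h2 : derivative^[k] p = C ((0 + k).descFactorial k • p.coeff (0+k)) := by
    rw [← Polynomial.coeff_iterate_derivative]
    exact Polynomial.eq_C_of_natDegree_le_zero h1
  rw [h2]
  simp [Nat.descFactorial_self, nsmul_eq_mul]

lemma iteratedDerivWithin_interior (k : ℕ) (I : Set ℝ) (f : ℝ → ℝ) (t : ℝ)
    (ht : t ∈ interior I) : iteratedDerivWithin k f I t = deriv^[k] f t := by
  have h0 : iteratedFDerivWithin ℝ k f (Set.univ ∩ I) t = iteratedFDerivWithin ℝ k f Set.univ t :=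
    iteratedFDerivWithin_inter (mem_interior_iff_mem_nhds.1 ht)
  rw [Set.univ_inter] at h0
  have h1 : iteratedDerivWithin k f I t = iteratedDerivWithin k f Set.univ t := by
    simp only [iteratedDerivWithin, h0]
  rw [h1, iteratedDerivWithin_univ, iteratedDeriv_eq_iterate]

lemma derivs_of_contDiffOn (k : ℕ) (U : Set ℝ) (hU : IsOpen U) (f : ℝ → ℝ)
    (hf : ContDiffOn ℝ k f U) :
    ∀ m, m ≤ k → ContDiffOn ℝ ((k - m : ℕ)) (deriv^[m] f) U := by
  intro m
  induction m with
  | zero => intro _; simpa using hf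
  | succ m ih =>
    intro hm
    have h1 : ContDiffOn ℝ ((k - m : ℕ)) (deriv^[m] f) U := ih (by omega)
    have h2 : ContDiffOn ℝ ((k - (m+1) : ℕ)) (deriv (deriv^[m] f)) U := by
      apply h1.deriv_of_isOpen hU
      have : ((k - (m+1) : ℕ) : WithTop ℕ∞) + 1 = ((k - m : ℕ) : WithTop ℕ∞) := by
        norm_cast
        omega
      rw [this]
    rw [Function.iterate_succ']
    exact h2

lemma iter_deriv_sub_poly (M : ℕ) (U : Set ℝ) (hU : IsOpen U) (f : ℝ → ℝ)
    (hdiff : ∀ m, m < M → ∀ t ∈ U, DifferentiableAt ℝ (deriv^[m] f) t) (p : ℝ[X]) :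
    ∀ m, m ≤ M → ∀ t ∈ U,
      deriv^[m] (fun s => f s - p.eval s) t = deriv^[m] f t - (derivative^[m] p).eval t := by
  intro m
  induction m with
  | zero => intro _ t ht; simp
  | succ m ih =>
    intro hm t ht
    rw [Function.iterate_succ_apply']
    have heq : deriv^[m] (fun s => f s - p.eval s)
        =ᶠ[nhds t] fun s => deriv^[m] f s - (derivative^[m] p).eval s := by
      filter_upwards [hU.mem_nhds ht] with s hs
      exact ih (by omega) s hs
    rw [heq.deriv_eq]
    have hdf : DifferentiableAt ℝ (deriv^[m] f) t := hdiff m (by omega) t ht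
    have hdp : DifferentiableAt ℝ (fun s => (derivative^[m] p).eval s) t :=
      (Polynomial.differentiable _).differentiableAt
    rw [deriv_fun_sub hdf hdp, Polynomial.deriv, Function.iterate_succ_apply',
      Function.iterate_succ_apply']

lemma iter_rolle (n : ℕ) : ∀ (g : ℝ → ℝ) (x : ℕ → ℝ),
    (∀ i, i ≤ n → x i < x (i+1)) →
    (∀ i, i ≤ n + 1 → g (x i) = 0) →
    ContinuousOn g (Set.Icc (x 0) (x (n+1))) →
    (∀ m, 1 ≤ m → m ≤ n → ContinuousOn (deriv^[m] g) (Set.Ioo (x 0) (x (n+1)))) →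
    ∃ ξ ∈ Set.Ioo (x 0) (x (n+1)), deriv^[n+1] g ξ = 0 := by
  induction n with
  | zero =>
    intro g x hx hz hcont _
    obtain ⟨c, hc, hc0⟩ := exists_deriv_eq_zero (hx 0 le_rfl) hcont
      ((hz 0 (by omega)).trans (hz 1 (by omega)).symm)
    exact ⟨c, hc, by simpa using hc0⟩
  | succ n ih =>
    intro g x hx hz hcont hcd
    have hmono : ∀ j, j ≤ n + 2 → ∀ i, i < j → x i < x j := by
      intro j
      induction j with
      | zero => intro _ i hi; omega
      | succ j ihj =>
        intro hj i hi
        rcases Nat.lt_succ_iff_lt_or_eq.1 hi with h | h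
        · exact (ihj (by omega) i h).trans (hx j (by omega))
        · subst h; exact hx i (by omega)
    have H : ∀ i, ∃ c, i ≤ n + 1 → c ∈ Set.Ioo (x i) (x (i+1)) ∧ deriv g c = 0 := by
      intro i
      by_cases hi : i ≤ n + 1
      · have hlo : x 0 ≤ x i := by
          rcases Nat.eq_zero_or_pos i with h | h
          · subst h; exact le_rfl
          · exact (hmono i (by omega) 0 h).le
        have hhi : x (i+1) ≤ x (n+2) := by
          rcases Nat.lt_or_ge (i+1) (n+2) with h | h
          · exact (hmono (n+2) le_rfl (i+1) h).le
          · have : i + 1 = n + 2 := by omega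
            rw [this]
        obtain ⟨c, hc, hc0⟩ := exists_deriv_eq_zero (hx i hi)
          (hcont.mono (Set.Icc_subset_Icc hlo hhi))
          ((hz i (by omega)).trans (hz (i+1) (by omega)).symm)
        exact ⟨c, fun _ => ⟨hc, hc0⟩⟩
      · exact ⟨0, fun h => absurd h hi⟩
    choose y hy using H
    have hy0 : x 0 < y 0 := (hy 0 (by omega)).1.1
    have hyn : y (n+1) < x (n+2) := (hy (n+1) le_rfl).1.2
    have hysub : Set.Ioo (y 0) (y (n+1)) ⊆ Set.Ioo (x 0) (x (n+2)) := by
      apply Set.Ioo_subset_Ioo hy0.le hyn.le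
    have hyIcc : Set.Icc (y 0) (y (n+1)) ⊆ Set.Ioo (x 0) (x (n+2)) := by
      intro t ht
      exact ⟨hy0.trans_le ht.1, lt_of_le_of_lt ht.2 hyn⟩
    have hkey := ih (deriv g) y
      (fun i hi => lt_trans (hy i (by omega)).1.2 (hy (i+1) (by omega)).1.1)
      (fun i hi => (hy i hi).2)
      ((hcd 1 le_rfl (by omega)).mono (by simpa using hyIcc))
      (fun m hm1 hm2 => by
        have := (hcd (m+1) (by omega) (by omega)).mono hysub
        rwa [Function.iterate_succ] at this)
    obtain ⟨ξ, hξ, hξ0⟩ := hkey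
    refine ⟨ξ, hysub hξ, ?_⟩
    rwa [Function.iterate_succ] at hξ0

lemma core (k : ℕ) (hk : 1 ≤ k) (U : Set ℝ) (hU : IsOpen U) (f : ℝ → ℝ) (x : ℕ → ℝ)
    (hmono : ∀ i j, j ≤ k → i < j → x i < x j)
    (hIoo : Set.Ioo (x 0) (x k) ⊆ U)
    (hcontf : ContinuousOn f (Set.Icc (x 0) (x k)))
    (hdiffm : ∀ m, m < k → ∀ t ∈ U, DifferentiableAt ℝ (deriv^[m] f) t)
    (hcd : ∀ m, m ≤ k → ContinuousOn (deriv^[m] f) U)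
    (hder : ∀ t ∈ Set.Ioo (x 0) (x k), 1 ≤ deriv^[k] f t) :
    1 ≤ (k.factorial : ℝ) *
      ∑ j ∈ Finset.range (k+1), f (x j) *
        ∏ i ∈ (Finset.range (k+1)).erase j, (x j - x i)⁻¹ := by
  classical
  set W : Finset ℕ := Finset.range (k+1) with hW
  set w : ℕ → ℝ := fun j => ∏ i ∈ W.erase j, (x j - x i)⁻¹ with hw
  set Q : ℕ → ℝ[X] := fun j => ∏ i ∈ W.erase j, (X - C (x i)) with hQ
  set P : ℝ[X] := ∑ j ∈ W, C (f (x j) * w j) * Q j with hP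
  have hne : ∀ i j, i ∈ W → j ∈ W → i ≠ j → x i ≠ x j := by
    intro i j hi hj hij
    simp only [hW, Finset.mem_range] at hi hj
    rcases Nat.lt_or_ge i j with h | h
    · exact (hmono i j (by omega) h).ne
    · exact (hmono j i (by omega) (by omega)).ne'
  have hQmonic : ∀ j, (Q j).Monic := fun j =>
    monic_prod_of_monic _ _ fun i _ => monic_X_sub_C (x i)
  have hQdeg : ∀ j ∈ W, (Q j).natDegree = k := by
    intro j hj
    rw [hQ]
    rw [natDegree_prod_of_monic _ _ (fun i _ => monic_X_sub_C (x i))]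
    simp only [natDegree_X_sub_C]
    rw [Finset.sum_const, Finset.card_erase_of_mem hj]
    simp [hW]
  have hQcoeff : ∀ j ∈ W, (Q j).coeff k = 1 := by
    intro j hj
    have := (hQmonic j).coeff_natDegree
    rwa [hQdeg j hj] at this
  have hPdeg : P.natDegree ≤ k := by
    apply natDegree_sum_le_of_forall_le
    intro j hj
    exact le_trans (natDegree_C_mul_le _ _) (le_of_eq (hQdeg j hj))
  have hPcoeff : P.coeff k = ∑ j ∈ W, f (x j) * w j := by
    rw [hP, finset_sum_coeff]
    apply Finset.sum_congr rfl
    intro j hj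
    rw [coeff_C_mul, hQcoeff j hj]
    ring
  have hQval : ∀ j ∈ W, (Q j).eval (x j) = ∏ i ∈ W.erase j, (x j - x i) := by
    intro j hj
    rw [hQ, eval_prod]
    apply Finset.prod_congr rfl
    intro i _
    simp
  have hPval : ∀ m ∈ W, P.eval (x m) = f (x m) := by
    intro m hm
    rw [hP, eval_finset_sum]
    rw [Finset.sum_eq_single m]
    · rw [eval_mul, eval_C, hQval m hm]
      have hprod_ne : ∏ i ∈ W.erase m, (x m - x i) ≠ 0 := by
        apply Finset.prod_ne_zero_iff.2
        intro i hi
        have hiW : i ∈ W := Finset.mem_of_mem_erase hi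
        have hne' := hne m i hm hiW (Ne.symm (Finset.ne_of_mem_erase hi))
        exact sub_ne_zero.2 hne'
      have hwm : w m * ∏ i ∈ W.erase m, (x m - x i) = 1 := by
        have hwm' : w m = (∏ i ∈ W.erase m, (x m - x i))⁻¹ := by
          simp only [hw]
          exact Finset.prod_inv_distrib _
        rw [hwm']
        exact inv_mul_cancel₀ hprod_ne
      calc f (x m) * w m * ∏ i ∈ W.erase m, (x m - x i)
          = f (x m) * (w m * ∏ i ∈ W.erase m, (x m - x i)) := by ring
        _ = f (x m) := by rw [hwm, mul_one]
    · intro j hj hjm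
      rw [eval_mul]
      have : (Q j).eval (x m) = 0 := by
        rw [hQ, eval_prod]
        apply Finset.prod_eq_zero (Finset.mem_erase.2 ⟨Ne.symm hjm, hm⟩)
        simp
      rw [this, mul_zero]
    · intro h; exact absurd hm h
  -- the difference function
  set g : ℝ → ℝ := fun s => f s - P.eval s with hg
  obtain ⟨n, rfl⟩ : ∃ n, k = n + 1 := ⟨k - 1, by omega⟩
  have hgz : ∀ i, i ≤ n + 1 → g (x i) = 0 := by
    intro i hi
    have : i ∈ W := by simp [hW]; omega
    simp [hg, hPval i this]
  have hgcont : ContinuousOn g (Set.Icc (x 0) (x (n+1))) :=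
    hcontf.sub (Polynomial.continuous P).continuousOn
  have hgder : ∀ m, 1 ≤ m → m ≤ n → ContinuousOn (deriv^[m] g)
      (Set.Ioo (x 0) (x (n+1))) := by
    intro m hm1 hm2
    have heq : Set.EqOn (deriv^[m] g)
        (fun t => deriv^[m] f t - (derivative^[m] P).eval t) (Set.Ioo (x 0) (x (n+1))) := by
      intro t ht
      exact iter_deriv_sub_poly (n+1) U hU f hdiffm P m (by omega) t (hIoo ht)
    apply ContinuousOn.congr _ heq
    exact ((hcd m (by omega)).mono hIoo).sub (Polynomial.continuous _).continuousOn
  obtain ⟨ξ, hξ, hξ0⟩ := iter_rolle n g x (fun i hi => hmono i (i+1) (by omega) (by omega))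
    hgz hgcont hgder
  have h1 : deriv^[n+1] g ξ = deriv^[n+1] f ξ - (derivative^[n+1] P).eval ξ :=
    iter_deriv_sub_poly (n+1) U hU f hdiffm P (n+1) le_rfl ξ (hIoo hξ)
  have h2 : (derivative^[n+1] P).eval ξ = ((n+1).factorial : ℝ) * P.coeff (n+1) :=
    poly_eval_deriv (n+1) P hPdeg ξ
  have h3 : 1 ≤ deriv^[n+1] f ξ := hder ξ hξ
  rw [hξ0] at h1
  rw [h2, hPcoeff] at h1
  have : deriv^[n+1] f ξ = ((n+1).factorial : ℝ) * ∑ j ∈ W, f (x j) * w j := by linarith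
  rw [this] at h3
  exact h3

lemma exists_spaced (E : Set ℝ) (hE : MeasurableSet E) (hfin : volume E ≠ ⊤)
    (k : ℕ) (d : ℝ) (hd : 0 < d) (hdL : (k : ℝ) * d < (volume E).toReal) :
    ∃ x : ℕ → ℝ, (∀ j, j ≤ k → x j ∈ E) ∧
      ∀ i j, j ≤ k → i < j → ((j : ℝ) - (i : ℝ)) * d ≤ x j - x i := by
  classical
  set L : ℝ := (volume E).toReal with hL
  set g : ℝ → ℝ := fun t => (volume (E ∩ Set.Iic t)).toReal with hg
  have hsubfin : ∀ s : Set ℝ, volume (E ∩ s) ≠ ⊤ :=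
    fun s => ne_top_of_le_ne_top hfin (measure_mono Set.inter_subset_left)
  have gmono : Monotone g := by
    intro a b hab
    exact ENNReal.toReal_le_toReal (hsubfin _) (hsubfin _) |>.2
      (measure_mono (Set.inter_subset_inter_right _ (Set.Iic_subset_Iic.2 hab)))
  have gadd : ∀ a b : ℝ, a ≤ b → g b - g a = (volume (E ∩ Set.Ioc a b)).toReal := by
    intro a b hab
    have hsplit : E ∩ Set.Iic b = (E ∩ Set.Iic a) ∪ (E ∩ Set.Ioc a b) := by
      rw [← Set.inter_union_distrib_left]
      congr 1
      rw [Set.Iic_union_Ioc_eq_Iic hab]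
    have hdisj : Disjoint (E ∩ Set.Iic a) (E ∩ Set.Ioc a b) := by
      apply Set.disjoint_left.2
      rintro t ⟨-, ht1⟩ ⟨-, ht2⟩
      exact absurd ht1 (not_le.2 ht2.1)
    have := measure_union (μ := volume) hdisj (hE.inter measurableSet_Ioc)
    rw [← hsplit] at this
    simp only [hg]
    rw [this, ENNReal.toReal_add (hsubfin _) (hsubfin _)]
    ring
  have glip : ∀ a b : ℝ, a ≤ b → g b - g a ≤ b - a := by
    intro a b hab
    rw [gadd a b hab]
    have h1 : volume (E ∩ Set.Ioc a b) ≤ ENNReal.ofReal (b - a) := by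
      calc volume (E ∩ Set.Ioc a b) ≤ volume (Set.Ioc a b) :=
            measure_mono Set.inter_subset_right
        _ = ENNReal.ofReal (b - a) := by rw [Real.volume_Ioc]
    calc (volume (E ∩ Set.Ioc a b)).toReal ≤ (ENNReal.ofReal (b - a)).toReal :=
          ENNReal.toReal_le_toReal (hsubfin _) ENNReal.ofReal_ne_top |>.2 h1
      _ = b - a := ENNReal.toReal_ofReal (by linarith)
  have gcont : Continuous g := by
    have : LipschitzWith 1 g := by
      apply LipschitzWith.of_dist_le_mul
      intro a b
      rcases le_total a b with h | h
      · rw [Real.dist_eq, Real.dist_eq, abs_of_nonpos (by linarith [gmono h] : g a - g b ≤ 0),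
          abs_of_nonpos (by linarith : a - b ≤ 0)]
        have := glip a b h
        simp only [NNReal.coe_one, one_mul]
        linarith
      · rw [Real.dist_eq, Real.dist_eq, abs_of_nonneg (by linarith [gmono h] : 0 ≤ g a - g b),
          abs_of_nonneg (by linarith : 0 ≤ a - b)]
        have := glip b a h
        simp only [NNReal.coe_one, one_mul]
        linarith
    exact this.continuous
  -- Claim A
  have claimA : ∀ a : ℝ, 0 ≤ a → volume (E ∩ {t | g t ≤ a}) ≤ ENNReal.ofReal a := by
    intro a ha
    set S := {t : ℝ | g t ≤ a} with hS
    have hSclosed : IsClosed S := isClosed_le gcont continuous_const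
    have hSlower : ∀ s t : ℝ, t ≤ s → s ∈ S → t ∈ S :=
      fun s t hts hs => le_trans (gmono hts) hs
    rcases Set.eq_empty_or_nonempty S with hSe | hSne
    · rw [hSe]; simp
    by_cases hbdd : BddAbove S
    · have hc : sSup S ∈ S := hSclosed.csSup_mem hSne hbdd
      have hSIic : S = Set.Iic (sSup S) := by
        apply Set.Subset.antisymm
        · exact fun t ht => le_csSup hbdd ht
        · exact fun t ht => hSlower _ _ ht hc
      rw [hSIic]
      rw [ENNReal.le_ofReal_iff_toReal_le (hsubfin _) ha]
      exact hc
    · -- S unbounded above: S = univ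
      have hSuniv : S = Set.univ := by
        apply Set.eq_univ_of_forall
        intro t
        rcases not_bddAbove_iff.1 hbdd t with ⟨s, hsS, hts⟩
        exact hSlower s t hts.le hsS
      rw [hSuniv, Set.inter_univ]
      -- every g n ≤ a, and volume (E ∩ Iic n) → volume E
      have hmon : Monotone (fun n : ℕ => E ∩ Set.Iic (n : ℝ)) := by
        intro m n hmn
        exact Set.inter_subset_inter_right _ (Set.Iic_subset_Iic.2 (by exact_mod_cast hmn))
      have hun : (⋃ n : ℕ, E ∩ Set.Iic (n : ℝ)) = E := by
        rw [← Set.inter_iUnion]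
        apply Set.inter_eq_self_of_subset_left
        intro t htE
        obtain ⟨n, hn⟩ := exists_nat_ge t
        exact Set.mem_iUnion.2 ⟨n, hn⟩
      have htop := tendsto_measure_iUnion_atTop (μ := volume) hmon
      rw [hun] at htop
      apply le_of_tendsto htop
      filter_upwards with n
      simp only [Function.comp]
      rw [ENNReal.le_ofReal_iff_toReal_le (hsubfin _) ha]
      have hnS : (n : ℝ) ∈ S := by rw [hSuniv]; trivial
      exact hnS
  -- Claim B
  have claimB : ∀ b : ℝ, 0 < b → b ≤ L → ENNReal.ofReal b ≤ volume (E ∩ {t | g t ≤ b}) := by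
    intro b hb hbL
    set S := {t : ℝ | g t ≤ b} with hS
    have hSclosed : IsClosed S := isClosed_le gcont continuous_const
    have hSlower : ∀ s t : ℝ, t ≤ s → s ∈ S → t ∈ S :=
      fun s t hts hs => le_trans (gmono hts) hs
    by_cases hSuniv : S = Set.univ
    · rw [hSuniv, Set.inter_univ]
      rw [ENNReal.ofReal_le_iff_le_toReal hfin]
      exact hbL
    -- S nonempty via limit at -infinity
    have hSne : S.Nonempty := by
      have hmon : Antitone (fun n : ℕ => E ∩ Set.Iic (-(n : ℝ))) := by
        intro m n hmn
        apply Set.inter_subset_inter_right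
        apply Set.Iic_subset_Iic.2
        simp only [neg_le_neg_iff]
        exact_mod_cast hmn
      have hbot := tendsto_measure_iInter_atTop (μ := volume)
        (fun n => (hE.inter measurableSet_Iic).nullMeasurableSet) hmon ⟨0, hsubfin _⟩
      have hint : (⋂ n : ℕ, E ∩ Set.Iic (-(n : ℝ))) = ∅ := by
        apply Set.eq_empty_iff_forall_notMem.2
        intro t ht
        obtain ⟨n, hn⟩ := exists_nat_gt (-t)
        have := (Set.mem_iInter.1 ht n).2
        simp only [Set.mem_Iic] at this
        linarith
      rw [hint, measure_empty] at hbot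
      have hev := hbot.eventually_lt_const (by simp [hb] : (0:ℝ≥0∞) < ENNReal.ofReal b)
      obtain ⟨n, hn⟩ := hev.exists
      refine ⟨-(n:ℝ), ?_⟩
      simp only [hS, Set.mem_setOf_eq, hg]
      have := ENNReal.toReal_le_toReal (hsubfin _) ENNReal.ofReal_ne_top |>.2 hn.le
      rwa [ENNReal.toReal_ofReal hb.le] at this
    have hbdd : BddAbove S := by
      rcases Set.ne_univ_iff_exists_notMem _ |>.1 hSuniv with ⟨t0, ht0⟩
      refine ⟨t0, fun t ht => ?_⟩
      by_contra htt
      exact ht0 (hSlower t t0 (not_le.1 htt).le ht)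
    have hc : sSup S ∈ S := hSclosed.csSup_mem hSne hbdd
    have hgc : b ≤ g (sSup S) := by
      by_contra hgc
      push_neg at hgc
      have hev : ∀ᶠ y in nhds (sSup S), g y < b :=
        (gcont.continuousAt).eventually_lt_const hgc
      have hev' : ∀ᶠ y in nhdsWithin (sSup S) (Set.Ioi (sSup S)), g y < b :=
        hev.filter_mono nhdsWithin_le_nhds
      obtain ⟨y, hy1, hy2⟩ := (hev'.and eventually_mem_nhdsWithin).exists
      have hyS : y ∈ S := hy1.le
      exact absurd (le_csSup hbdd hyS) (not_le.2 hy2)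
    have hSIic : S = Set.Iic (sSup S) := by
      apply Set.Subset.antisymm
      · exact fun t ht => le_csSup hbdd ht
      · exact fun t ht => hSlower _ _ ht hc
    rw [hSIic]
    rw [ENNReal.ofReal_le_iff_le_toReal (hsubfin _)]
    exact hgc
  -- window existence
  have hwindow : ∀ a b : ℝ, 0 ≤ a → a < b → b ≤ L → ∃ t ∈ E, a < g t ∧ g t ≤ b := by
    intro a b ha hab hbL
    set s₁ := E ∩ {t : ℝ | g t ≤ b} with hs₁
    set s₂ := {t : ℝ | g t ≤ a} with hs₂
    have h1 : ENNReal.ofReal b ≤ volume s₁ := claimB b (lt_of_le_of_lt ha hab) hbL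
    have h2 : volume (s₁ ∩ s₂) ≤ ENNReal.ofReal a := by
      refine le_trans (measure_mono ?_) (claimA a ha)
      rintro t ⟨⟨htE, -⟩, hta⟩
      exact ⟨htE, hta⟩
    have h3 : ENNReal.ofReal (b - a) ≤ volume (s₁ \ s₂) := by
      calc ENNReal.ofReal (b - a) = ENNReal.ofReal b - ENNReal.ofReal a :=
            ENNReal.ofReal_sub b ha
        _ ≤ volume s₁ - volume (s₁ ∩ s₂) := tsub_le_tsub h1 h2
        _ ≤ volume (s₁ \ (s₁ ∩ s₂)) := le_measure_diff
        _ = volume (s₁ \ s₂) := by rw [Set.diff_self_inter]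
    have h4 : volume (s₁ \ s₂) ≠ 0 := by
      intro h0
      rw [h0] at h3
      have : ENNReal.ofReal (b - a) ≠ 0 := by
        simp only [ne_eq, ENNReal.ofReal_eq_zero, not_le]
        linarith
      exact this (le_antisymm (le_of_le_of_eq h3 rfl) (by simp))
    obtain ⟨t, ht⟩ := nonempty_of_measure_ne_zero h4
    refine ⟨t, ht.1.1, not_le.1 ht.2, ht.1.2⟩
  -- selection of spaced points
  set η : ℝ := (L - k * d) / (k + 1) with hη
  have hηpos : 0 < η := by
    apply div_pos (by linarith) (by positivity)
  have hkeq : (k:ℝ) * (d + η) + η = L := by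
    have hne : (k:ℝ) + 1 ≠ 0 := by positivity
    have h' : η * ((k:ℝ)+1) = L - k*d := by rw [hη]; exact div_mul_cancel₀ _ hne
    linear_combination h'
  have hck : ∀ j : ℕ, j ≤ k → (j : ℝ) * (d + η) + η ≤ L := by
    intro j hj
    have hjk : (j:ℝ) ≤ k := by exact_mod_cast hj
    nlinarith [hd, hηpos]
  have hsel : ∀ j : ℕ, ∃ y, j ≤ k → y ∈ E ∧ (j:ℝ) * (d + η) < g y ∧ g y ≤ (j:ℝ) * (d + η) + η := by
    intro j
    by_cases hj : j ≤ k
    · obtain ⟨y, hyE, hy1, hy2⟩ := hwindow ((j:ℝ)*(d+η)) ((j:ℝ)*(d+η)+η)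
        (by positivity) (by linarith) (hck j hj)
      exact ⟨y, fun _ => ⟨hyE, hy1, hy2⟩⟩
    · exact ⟨0, fun h => absurd h hj⟩
  choose x hx using hsel
  refine ⟨x, fun j hj => (hx j hj).1, ?_⟩
  intro i j hj hij
  have hiE := hx i (by omega)
  have hjE := hx j hj
  have hgi : g (x i) ≤ (i:ℝ)*(d+η) + η := hiE.2.2
  have hgj : (j:ℝ)*(d+η) < g (x j) := hjE.2.1
  have h1 : (1:ℝ) ≤ (j:ℝ) - i := by
    have : (i:ℝ) + 1 ≤ j := by exact_mod_cast hij
    linarith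
  have hprod : (0:ℝ) ≤ ((j:ℝ) - i - 1) * η := mul_nonneg (by linarith) hηpos.le
  have hdiff : ((j:ℝ) - i) * d ≤ g (x j) - g (x i) := by nlinarith
  have hle : x i ≤ x j := by
    by_contra hlt
    push_neg at hlt
    have hmle := gmono hlt.le
    nlinarith
  have := glip (x i) (x j) hle
  linarith

lemma sublevel (k : ℕ) (hk : 1 ≤ k) (I : Set ℝ) (hI : I.OrdConnected)
    (f : ℝ → ℝ) (hf : ContDiffOn ℝ k f I)
    (hderiv : ∀ t ∈ I, 1 ≤ iteratedDerivWithin k f I t)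
    (μ : ℝ) (hμ : 0 < μ) (hfin : volume {t | t ∈ I ∧ |f t| ≤ μ} ≠ ⊤) :
    (volume {t | t ∈ I ∧ |f t| ≤ μ}).toReal ^ k
      ≤ ((k : ℝ) + 1) * (k.choose ((k+1)/2)) * (k : ℝ) ^ k * μ := by
  classical
  set E := {t | t ∈ I ∧ |f t| ≤ μ} with hE
  set L := (volume E).toReal with hL
  have hkR : (0:ℝ) < k := by exact_mod_cast hk
  have hchoose : (0:ℝ) < (k.choose ((k+1)/2) : ℝ) := by
    exact_mod_cast Nat.choose_pos (by omega : (k+1)/2 ≤ k)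
  have hB0 : 0 < ((k : ℝ) + 1) * (k.choose ((k+1)/2)) * (k : ℝ) ^ k * μ := by positivity
  have hL0 : 0 ≤ L := ENNReal.toReal_nonneg
  rcases eq_or_lt_of_le hL0 with h0 | hLpos
  · rw [← h0, zero_pow (by omega : k ≠ 0)]
    exact hB0.le
  -- key estimate for every admissible spacing d
  have key : ∀ d : ℝ, 0 < d → (k:ℝ) * d < L →
      d ^ k ≤ ((k : ℝ) + 1) * (k.choose ((k+1)/2)) * μ := by
    intro d hd hdL
    have hEmeas : MeasurableSet E := measSet I hI.measurableSet f hf.continuousOn μ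
    obtain ⟨x, hxE, hxsp⟩ := exists_spaced E hEmeas hfin k d hd hdL
    have hmono : ∀ i j, j ≤ k → i < j → x i < x j := by
      intro i j hj hij
      have := hxsp i j hj hij
      have h1 : (1:ℝ) ≤ (j:ℝ) - i := by
        have : (i:ℝ) + 1 ≤ j := by exact_mod_cast hij
        linarith
      nlinarith
    have hx0I : x 0 ∈ I := (hxE 0 (by omega)).1
    have hxkI : x k ∈ I := (hxE k le_rfl).1
    have hIccI : Set.Icc (x 0) (x k) ⊆ I := hI.out hx0I hxkI
    set U := interior I with hU
    have hIoo : Set.Ioo (x 0) (x k) ⊆ U :=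
      interior_maximal (le_trans Set.Ioo_subset_Icc_self hIccI) isOpen_Ioo
    have hfU : ContDiffOn ℝ k f U := hf.mono interior_subset
    have derivs := derivs_of_contDiffOn k U isOpen_interior f hfU
    have hcd : ∀ m, m ≤ k → ContinuousOn (deriv^[m] f) U :=
      fun m hm => (derivs m hm).continuousOn
    have hdiffm : ∀ m, m < k → ∀ t ∈ U, DifferentiableAt ℝ (deriv^[m] f) t := by
      intro m hm t ht
      have h1 := derivs m hm.le
      have h2 : DifferentiableOn ℝ (deriv^[m] f) U :=
        h1.differentiableOn (by exact_mod_cast (show k - m ≠ 0 by omega))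
      exact (h2 t ht).differentiableAt (isOpen_interior.mem_nhds ht)
    have hder : ∀ t ∈ Set.Ioo (x 0) (x k), 1 ≤ deriv^[k] f t := by
      intro t ht
      have htU : t ∈ U := hIoo ht
      have := hderiv t (interior_subset htU)
      rwa [iteratedDerivWithin_interior k I f t htU] at this
    have hS := core k hk U isOpen_interior f x hmono hIoo
      (hf.continuousOn.mono hIccI) hdiffm hcd hder
    -- numeric bound on the sum
    set J : ℝ := ((((k+1)/2).factorial * (k - (k+1)/2).factorial : ℕ) : ℝ) with hJ
    have hJpos : 0 < J := by
      rw [hJ]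
      exact_mod_cast Nat.mul_pos (Nat.factorial_pos _) (Nat.factorial_pos _)
    have hdk : (0:ℝ) < d ^ k := by positivity
    have hprodlb : ∀ j ∈ Finset.range (k+1),
        J * d ^ k ≤ ∏ i ∈ (Finset.range (k+1)).erase j, |x j - x i| := by
      intro j hj
      have hjk : j ≤ k := by
        simp only [Finset.mem_range] at hj; omega
      have step1 : ∀ i ∈ (Finset.range (k+1)).erase j,
          (Nat.dist j i : ℝ) * d ≤ |x j - x i| := by
        intro i hi
        have hine : i ≠ j := Finset.ne_of_mem_erase hi
        have hik : i ≤ k := by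
          have := Finset.mem_range.1 (Finset.mem_of_mem_erase hi); omega
        rcases Nat.lt_or_ge i j with hij | hij
        · have hsp := hxsp i j hjk hij
          have hcast : (Nat.dist j i : ℝ) = (j:ℝ) - i := by
            have : Nat.dist j i = j - i := by unfold Nat.dist; omega
            rw [this, Nat.cast_sub hij.le]
          rw [hcast, abs_of_nonneg (by nlinarith [hxsp i j hjk hij,
            (by positivity : (0:ℝ) < d)] : (0:ℝ) ≤ x j - x i)]
          exact hsp
        · have hji : j < i := by omega
          have hsp := hxsp j i hik hji
          have hcast : (Nat.dist j i : ℝ) = (i:ℝ) - j := by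
            have : Nat.dist j i = i - j := by unfold Nat.dist; omega
            rw [this, Nat.cast_sub hji.le]
          rw [hcast, abs_sub_comm, abs_of_nonneg (by nlinarith : (0:ℝ) ≤ x i - x j)]
          exact hsp
      have step2 : ∏ i ∈ (Finset.range (k+1)).erase j, ((Nat.dist j i : ℝ) * d)
          ≤ ∏ i ∈ (Finset.range (k+1)).erase j, |x j - x i| := by
        apply Finset.prod_le_prod
        · intro i hi
          positivity
        · exact step1
      refine le_trans ?_ step2
      rw [Finset.prod_mul_distrib, Finset.prod_const,
        Finset.card_erase_of_mem (by simpa using hj), Finset.card_range]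
      simp only [Nat.add_sub_cancel]
      have : ∏ i ∈ (Finset.range (k+1)).erase j, (Nat.dist j i : ℝ)
          = ((j.factorial * (k - j).factorial : ℕ) : ℝ) := by
        rw [← Nat.cast_prod, prod_dist k j hjk]
      rw [this]
      apply mul_le_mul_of_nonneg_right _ hdk.le
      rw [hJ]
      exact_mod_cast fact_min k j hjk
    have hsumub : ∑ j ∈ Finset.range (k+1), f (x j) *
        ∏ i ∈ (Finset.range (k+1)).erase j, (x j - x i)⁻¹
        ≤ ((k:ℝ)+1) * (μ * (J * d ^ k)⁻¹) := by
      have hterm : ∀ j ∈ Finset.range (k+1), f (x j) *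
          ∏ i ∈ (Finset.range (k+1)).erase j, (x j - x i)⁻¹ ≤ μ * (J * d ^ k)⁻¹ := by
        intro j hj
        have hjk : j ≤ k := by simp only [Finset.mem_range] at hj; omega
        have habs : |f (x j) * ∏ i ∈ (Finset.range (k+1)).erase j, (x j - x i)⁻¹|
            = |f (x j)| * (∏ i ∈ (Finset.range (k+1)).erase j, |x j - x i|)⁻¹ := by
          rw [abs_mul, Finset.abs_prod]
          congr 1
          rw [← Finset.prod_inv_distrib]
          apply Finset.prod_congr rfl
          intro i _
          rw [abs_inv]
        refine le_trans (le_abs_self _) ?_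
        rw [habs]
        have hppos : (0:ℝ) < ∏ i ∈ (Finset.range (k+1)).erase j, |x j - x i| :=
          lt_of_lt_of_le (by positivity) (hprodlb j hj)
        apply mul_le_mul ((hxE j hjk).2) _ (by positivity) hμ.le
        exact inv_anti₀ (by positivity) (hprodlb j hj)
      calc ∑ j ∈ Finset.range (k+1), f (x j) *
            ∏ i ∈ (Finset.range (k+1)).erase j, (x j - x i)⁻¹
          ≤ ∑ _j ∈ Finset.range (k+1), μ * (J * d ^ k)⁻¹ := Finset.sum_le_sum hterm
        _ = ((k:ℝ)+1) * (μ * (J * d ^ k)⁻¹) := by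
            rw [Finset.sum_const, Finset.card_range]
            push_cast
            ring
    -- combine
    have hfac : (0:ℝ) < (k.factorial : ℝ) := by exact_mod_cast k.factorial_pos
    have hcomb : 1 ≤ (k.factorial : ℝ) * (((k:ℝ)+1) * (μ * (J * d ^ k)⁻¹)) := by
      refine le_trans hS ?_
      apply mul_le_mul_of_nonneg_left hsumub hfac.le
    have hJdk : (0:ℝ) < J * d ^ k := by positivity
    have hkey : J * d ^ k ≤ (k.factorial : ℝ) * (((k:ℝ)+1) * μ) := by
      have := hcomb
      have h2 : J * d ^ k ≤ (k.factorial : ℝ) * (((k:ℝ)+1) * (μ * (J * d ^ k)⁻¹)) * (J * d ^ k) := by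
        nlinarith
      calc J * d ^ k ≤ (k.factorial : ℝ) * (((k:ℝ)+1) * (μ * (J * d ^ k)⁻¹)) * (J * d ^ k) := h2
        _ = (k.factorial : ℝ) * (((k:ℝ)+1) * μ) * ((J * d ^ k)⁻¹ * (J * d ^ k)) := by ring
        _ = (k.factorial : ℝ) * (((k:ℝ)+1) * μ) := by
            rw [inv_mul_cancel₀ hJdk.ne', mul_one]
    -- k! = choose * J
    have hfactJ : (k.factorial : ℝ) = (k.choose ((k+1)/2) : ℝ) * J := by
      rw [hJ]
      have := Nat.choose_mul_factorial_mul_factorial (by omega : (k+1)/2 ≤ k)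
      push_cast [← this]
      ring
    rw [hfactJ] at hkey
    -- divide by J
    have : d ^ k * J ≤ ((k:ℝ)+1) * (k.choose ((k+1)/2):ℝ) * μ * J := by
      calc d ^ k * J = J * d ^ k := by ring
        _ ≤ (k.choose ((k+1)/2) : ℝ) * J * (((k:ℝ)+1) * μ) := hkey
        _ = ((k:ℝ)+1) * (k.choose ((k+1)/2):ℝ) * μ * J := by ring
    exact le_of_mul_le_mul_right this hJpos
  -- pass to the limit d → L / k
  have hLk : 0 < L / k := by positivity
  have hmain : (L / k) ^ k ≤ ((k : ℝ) + 1) * (k.choose ((k+1)/2)) * μ := by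
    by_contra hcon
    push_neg at hcon
    have hev1 : ∀ᶠ d in nhds (L / k), ((k : ℝ) + 1) * (k.choose ((k+1)/2)) * μ < d ^ k :=
      ((continuous_pow k).continuousAt).eventually_const_lt hcon
    have hev2 : ∀ᶠ d in nhds (L / k), 0 < d := eventually_gt_nhds hLk
    have hev3 : ∀ᶠ d in nhdsWithin (L / k) (Set.Iio (L / k)),
        (((k : ℝ) + 1) * (k.choose ((k+1)/2)) * μ < d ^ k) ∧ 0 < d ∧ d < L / k := by
      refine (((hev1.and hev2).filter_mono nhdsWithin_le_nhds).and
        eventually_mem_nhdsWithin).mono ?_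
      rintro d ⟨⟨h1, h2⟩, h3⟩
      exact ⟨h1, h2, h3⟩
    obtain ⟨d, hd1, hd2, hd3⟩ := hev3.exists
    have : (k:ℝ) * d < L := by
      have := (lt_div_iff₀ hkR).1 hd3
      linarith
    exact absurd (key d hd2 this) (not_le.2 hd1)
  calc L ^ k = (L / k) ^ k * (k:ℝ) ^ k := by
        rw [← mul_pow]
        congr 1
        field_simp
    _ ≤ ((k : ℝ) + 1) * (k.choose ((k+1)/2)) * μ * (k:ℝ) ^ k := by
        apply mul_le_mul_of_nonneg_right hmain (by positivity)
    _ = ((k : ℝ) + 1) * (k.choose ((k+1)/2)) * (k : ℝ) ^ k * μ := by ring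

lemma integrable_abs (I : Set ℝ) (hI : MeasurableSet I) (f : ℝ → ℝ) (hc : ContinuousOn f I)
    (lam : ℝ) (hfin : volume {t | t ∈ I ∧ |f t| ≤ lam} ≠ ⊤) :
    IntegrableOn (fun t => |f t|) {t | t ∈ I ∧ |f t| ≤ lam} volume := by
  have hmeas : MeasurableSet {t | t ∈ I ∧ |f t| ≤ lam} := measSet I hI f hc lam
  constructor
  · exact ((hc.mono (fun t ht => ht.1)).abs).aestronglyMeasurable hmeas
  · apply HasFiniteIntegral.restrict_of_bounded (C := |lam|) hfin.lt_top
    filter_upwards [ae_restrict_mem hmeas] with t ht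
    rw [Real.norm_eq_abs, abs_abs]
    exact le_trans ht.2 (le_abs_self lam)

lemma case_one (I : Set ℝ) (hI : I.OrdConnected) (f : ℝ → ℝ)
    (hf : ContDiffOn ℝ 1 f I)
    (hderiv : ∀ t ∈ I, 1 ≤ iteratedDerivWithin 1 f I t)
    (lam : ℝ) (hlam : 0 < lam) (hfin : volume {t | t ∈ I ∧ |f t| ≤ lam} ≠ ⊤) :
    (∫ t in {t | t ∈ I ∧ |f t| ≤ lam}, |f t|)
      ≥ (volume {t | t ∈ I ∧ |f t| ≤ lam}).toReal ^ 2 / 4 := by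
  classical
  set F := {t | t ∈ I ∧ |f t| ≤ lam} with hF
  set L := (volume F).toReal with hL
  have hL0 : 0 ≤ L := ENNReal.toReal_nonneg
  have hint_nonneg : 0 ≤ ∫ t in F, |f t| := integral_nonneg fun t => abs_nonneg _
  rcases eq_or_lt_of_le hL0 with h0 | hLpos
  · rw [ge_iff_le, ← h0]
    norm_num
    exact hint_nonneg
  have hFI : F ⊆ I := fun t ht => ht.1
  have hgrow : ∀ s ∈ I, ∀ t ∈ I, s ≤ t → t - s ≤ f t - f s := by
    have hconv : Convex ℝ I := hI.convex
    have hdiff : DifferentiableOn ℝ f (interior I) :=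
      (hf.differentiableOn one_ne_zero).mono interior_subset
    have hge : ∀ x ∈ interior I, 1 ≤ deriv f x := by
      intro x hx
      have h1 := hderiv x (interior_subset hx)
      rwa [iteratedDerivWithin_interior 1 I f x hx, Function.iterate_one] at h1
    intro s hs t ht hst
    have := hconv.mul_sub_le_image_sub_of_le_deriv hf.continuousOn hdiff hge s hs t ht hst
    linarith
  have hfmono : ∀ s ∈ I, ∀ t ∈ I, s ≤ t → f s ≤ f t := by
    intro s hs t ht hst
    have := hgrow s hs t ht hst
    linarith
  have hFord : F.OrdConnected := by
    constructor
    intro t1 h1 t2 h2 t ht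
    have htI : t ∈ I := (hI.out h1.1 h2.1) ht
    refine ⟨htI, ?_⟩
    have e1 := hfmono t1 h1.1 t htI ht.1
    have e2 := hfmono t htI t2 h2.1 ht.2
    have a1 := abs_le.1 h1.2
    have a2 := abs_le.1 h2.2
    rw [abs_le]
    exact ⟨by linarith, by linarith⟩
  have hFne : F.Nonempty := by
    apply nonempty_of_measure_ne_zero (μ := volume)
    intro h0'
    rw [hL, h0'] at hLpos
    simp at hLpos
  have hbddA : BddAbove F := by
    by_contra hb
    obtain ⟨t0, ht0⟩ := hFne
    have hforall : ∀ n : ℕ, ENNReal.ofReal (n : ℝ) ≤ volume F := by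
      intro n
      obtain ⟨s, hsF, hsn⟩ := not_bddAbove_iff.1 hb (t0 + n)
      have hsub : Set.Icc t0 s ⊆ F := hFord.out ht0 hsF
      calc ENNReal.ofReal (n:ℝ) ≤ ENNReal.ofReal (s - t0) :=
            ENNReal.ofReal_le_ofReal (by linarith)
        _ = volume (Set.Icc t0 s) := (Real.volume_Icc).symm
        _ ≤ volume F := measure_mono hsub
    obtain ⟨n, hn⟩ := exists_nat_gt (L + 1)
    have h1 := hforall n
    rw [ENNReal.ofReal_le_iff_le_toReal hfin] at h1
    rw [← hL] at h1
    linarith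
  have hbddB : BddBelow F := by
    by_contra hb
    obtain ⟨t0, ht0⟩ := hFne
    have hforall : ∀ n : ℕ, ENNReal.ofReal (n : ℝ) ≤ volume F := by
      intro n
      obtain ⟨s, hsF, hsn⟩ := not_bddBelow_iff.1 hb (t0 - n)
      have hsub : Set.Icc s t0 ⊆ F := hFord.out hsF ht0
      calc ENNReal.ofReal (n:ℝ) ≤ ENNReal.ofReal (t0 - s) :=
            ENNReal.ofReal_le_ofReal (by linarith)
        _ = volume (Set.Icc s t0) := (Real.volume_Icc).symm
        _ ≤ volume F := measure_mono hsub
    obtain ⟨n, hn⟩ := exists_nat_gt (L + 1)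
    have h1 := hforall n
    rw [ENNReal.ofReal_le_iff_le_toReal hfin] at h1
    rw [← hL] at h1
    linarith
  set a := sInf F with ha
  set b := sSup F with hb
  have hab : a ≤ b := by
    obtain ⟨t0, ht0⟩ := hFne
    exact le_trans (csInf_le hbddB ht0) (le_csSup hbddA ht0)
  have hIoosub : Set.Ioo a b ⊆ F := by
    intro t ht
    obtain ⟨u, huF, hut⟩ := exists_lt_of_csInf_lt hFne ht.1
    obtain ⟨v, hvF, htv⟩ := exists_lt_of_lt_csSup hFne ht.2
    exact hFord.out huF hvF ⟨hut.le, htv.le⟩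
  have hFsub : F ⊆ Set.Icc a b := fun t ht => ⟨csInf_le hbddB ht, le_csSup hbddA ht⟩
  have hvol1 : volume F = ENNReal.ofReal (b - a) := by
    apply le_antisymm
    · calc volume F ≤ volume (Set.Icc a b) := measure_mono hFsub
        _ = ENNReal.ofReal (b - a) := Real.volume_Icc
    · calc ENNReal.ofReal (b - a) = volume (Set.Ioo a b) := (Real.volume_Ioo).symm
        _ ≤ volume F := measure_mono hIoosub
  have hLab : L = b - a := by
    rw [hL, hvol1, ENNReal.toReal_ofReal (by linarith)]
  have hae : F =ᵐ[volume] Set.Ioo a b := by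
    rw [MeasureTheory.ae_eq_set]
    constructor
    · apply measure_mono_null ?_ (((Set.finite_singleton b).insert a).measure_zero volume)
      intro t ht
      obtain ⟨htF, htn⟩ := ht
      have h1 := hFsub htF
      simp only [Set.mem_Ioo, not_and_or, not_lt] at htn
      simp only [Set.mem_insert_iff, Set.mem_singleton_iff]
      rcases htn with h | h
      · left; exact le_antisymm h h1.1
      · right; exact le_antisymm h1.2 h
    · rw [Set.diff_eq_empty.2 hIoosub]
      exact measure_empty
  have hIooI : Set.Ioo a b ⊆ I := fun t ht => (hIoosub ht).1
  -- the centring point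
  have htri : ∃ c ∈ Set.Icc a b, ∀ t ∈ Set.Ioo a b, |t - c| ≤ |f t| := by
    by_cases hzero : ∃ z ∈ Set.Ioo a b, f z = 0
    · obtain ⟨z, hz, hfz⟩ := hzero
      refine ⟨z, ⟨hz.1.le, hz.2.le⟩, ?_⟩
      intro t ht
      have htI : t ∈ I := hIooI ht
      have hzI : z ∈ I := hIooI hz
      rcases le_total z t with h | h
      · have hg := hgrow z hzI t htI h
        rw [hfz] at hg
        rw [abs_of_nonneg (by linarith : (0:ℝ) ≤ t - z)]
        calc t - z ≤ f t := by linarith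
          _ ≤ |f t| := le_abs_self _
      · have hg := hgrow t htI z hzI h
        rw [hfz] at hg
        rw [abs_of_nonpos (by linarith : t - z ≤ 0)]
        calc -(t - z) = z - t := by ring
          _ ≤ -f t := by linarith
          _ ≤ |f t| := neg_le_abs _
    · push_neg at hzero
      by_cases hpos : ∀ t ∈ Set.Ioo a b, 0 < f t
      · refine ⟨a, ⟨le_refl a, hab⟩, ?_⟩
        intro t ht
        rw [abs_of_nonneg (by linarith [ht.1] : (0:ℝ) ≤ t - a), abs_of_pos (hpos t ht)]
        by_contra hcon
        push_neg at hcon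
        have hft : 0 < f t := hpos t ht
        set s := (a + (t - f t))/2 with hs
        have hs1 : a < s := by
          simp only [hs]
          linarith
        have hs2 : s < t - f t := by
          simp only [hs]
          linarith
        have hst : s < t := by linarith
        have hsIoo : s ∈ Set.Ioo a b := ⟨hs1, by linarith [ht.2]⟩
        have hg := hgrow s (hIooI hsIoo) t (hIooI ht) hst.le
        have hfs : 0 < f s := hpos s hsIoo
        linarith
      · push_neg at hpos
        obtain ⟨t₀, ht₀, hft₀⟩ := hpos
        have hneg : ∀ t ∈ Set.Ioo a b, f t < 0 := by
          intro t ht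
          rcases lt_trichotomy (f t) 0 with h | h | h
          · exact h
          · exact absurd h (hzero t ht)
          · exfalso
            have ht₀0 : f t₀ < 0 := lt_of_le_of_ne hft₀ (hzero t₀ ht₀)
            have htt : t₀ < t := by
              by_contra hc
              push_neg at hc
              have := hfmono t (hIooI ht) t₀ (hIooI ht₀) hc
              linarith
            have hIcc : Set.Icc t₀ t ⊆ I := hI.out (hIooI ht₀) (hIooI ht)
            have hIVT := intermediate_value_Icc htt.le (hf.continuousOn.mono hIcc)
            have h0mem : (0:ℝ) ∈ Set.Icc (f t₀) (f t) := ⟨ht₀0.le, h.le⟩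
            obtain ⟨z, hzIcc, hfz⟩ := hIVT h0mem
            exact hzero z ⟨lt_of_lt_of_le ht₀.1 hzIcc.1, lt_of_le_of_lt hzIcc.2 ht.2⟩ hfz
        refine ⟨b, ⟨hab, le_refl b⟩, ?_⟩
        intro t ht
        rw [abs_of_nonpos (by linarith [ht.2] : t - b ≤ 0), abs_of_neg (hneg t ht)]
        by_contra hcon
        push_neg at hcon
        have hft : f t < 0 := hneg t ht
        set s := ((t - f t) + b)/2 with hs
        have hs1 : t - f t < s := by
          simp only [hs]
          linarith
        have hs2 : s < b := by
          simp only [hs]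
          linarith
        have hst : t < s := by linarith
        have hsIoo : s ∈ Set.Ioo a b := ⟨lt_trans ht.1 hst, hs2⟩
        have hg := hgrow t (hIooI ht) s (hIooI hsIoo) hst.le
        have hfs : f s < 0 := hneg s hsIoo
        linarith
  obtain ⟨c, hcmem, hcbound⟩ := htri
  have hac : a ≤ c := hcmem.1
  have hcb : c ≤ b := hcmem.2
  have hint1 : (∫ t in F, |f t|) = ∫ t in Set.Ioo a b, |f t| := setIntegral_congr_set hae
  have hint2 : IntegrableOn (fun t => |f t|) (Set.Ioo a b) volume :=
    (integrable_abs I hI.measurableSet f hf.continuousOn lam hfin).mono_set hIoosub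
  have hint3 : IntegrableOn (fun t => |t - c|) (Set.Ioo a b) volume :=
    ((continuous_id.sub continuous_const).abs.integrableOn_Icc).mono_set
      Set.Ioo_subset_Icc_self
  have hmono_int : (∫ t in Set.Ioo a b, |t - c|) ≤ ∫ t in Set.Ioo a b, |f t| :=
    setIntegral_mono_on hint3 hint2 measurableSet_Ioo (fun t ht => hcbound t ht)
  have hIcalc1 : (∫ t in a..c, |t - c|) = (c - a)^2/2 := by
    have heq : Set.EqOn (fun t => |t - c|) (fun t => c - t) (Set.uIcc a c) := by
      intro t ht
      rw [Set.uIcc_of_le hac] at ht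
      simp only
      rw [abs_of_nonpos (by linarith [ht.2] : t - c ≤ 0)]
      ring
    rw [intervalIntegral.integral_congr heq]
    have h1 : (∫ t in a..c, (c - t)) = (∫ _t in a..c, (c:ℝ)) - ∫ t in a..c, t :=
      intervalIntegral.integral_sub intervalIntegrable_const
        (continuous_id.intervalIntegrable _ _)
    rw [h1, integral_id, intervalIntegral.integral_const]
    simp only [smul_eq_mul]
    ring
  have hIcalc2 : (∫ t in c..b, |t - c|) = (b - c)^2/2 := by
    have heq : Set.EqOn (fun t => |t - c|) (fun t => t - c) (Set.uIcc c b) := by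
      intro t ht
      rw [Set.uIcc_of_le hcb] at ht
      simp only
      rw [abs_of_nonneg (by linarith [ht.1] : 0 ≤ t - c)]
    rw [intervalIntegral.integral_congr heq]
    have h1 : (∫ t in c..b, (t - c)) = (∫ t in c..b, t) - ∫ _t in c..b, (c:ℝ) :=
      intervalIntegral.integral_sub (continuous_id.intervalIntegrable _ _)
        intervalIntegrable_const
    rw [h1, integral_id, intervalIntegral.integral_const]
    simp only [smul_eq_mul]
    ring
  have hIcalc : (∫ t in Set.Ioo a b, |t - c|) = ((c-a)^2 + (b-c)^2)/2 := by
    have hii1 : IntervalIntegrable (fun t => |t - c|) volume a c :=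
      ((continuous_id.sub continuous_const).abs).intervalIntegrable a c
    have hii2 : IntervalIntegrable (fun t => |t - c|) volume c b :=
      ((continuous_id.sub continuous_const).abs).intervalIntegrable c b
    rw [← MeasureTheory.integral_Ioc_eq_integral_Ioo, ← intervalIntegral.integral_of_le hab,
      ← intervalIntegral.integral_add_adjacent_intervals hii1 hii2, hIcalc1, hIcalc2]
    ring
  rw [ge_iff_le, hint1]
  calc L^2/4 = (b-a)^2/4 := by rw [hLab]
    _ ≤ ((c-a)^2 + (b-c)^2)/2 := by nlinarith [sq_nonneg ((c-a)-(b-c))]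
    _ = ∫ t in Set.Ioo a b, |t - c| := hIcalc.symm
    _ ≤ ∫ t in Set.Ioo a b, |f t| := hmono_int

lemma two_pow_le (k : ℕ) (h : 2 ≤ k) : 2^(k+1) ≤ 3^k := by
  induction k with
  | zero => omega
  | succ k ih =>
    rcases Nat.lt_or_ge k 2 with h2 | h2
    · interval_cases k <;> simp_all <;> omega
    · have := ih h2
      calc 2^(k+2) = 2 * 2^(k+1) := by ring
        _ ≤ 2 * 3^k := by omega
        _ ≤ 3^(k+1) := by
            have : 3^(k+1) = 3 * 3^k := by ring
            omega

end Stmt8Aux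

open Stmt8Aux

/-- Lower bound for the integral of `|f|` over the sublevel set
`F_λ = {t ∈ I : |f(t)| ≤ λ}` in terms of the measure of `F_λ`. -/
theorem stmt_8 (k : ℕ) (hk : 1 ≤ k) (I : Set ℝ) (hI : I.OrdConnected)
    (f : ℝ → ℝ) (hf : ContDiffOn ℝ k f I)
    (hderiv : ∀ t ∈ I, 1 ≤ iteratedDerivWithin k f I t)
    (lam : ℝ) (hlam : 0 < lam) :
    (∫ t in {t | t ∈ I ∧ |f t| ≤ lam}, |f t|)
      ≥ ((((k + 1) / 2 : ℕ).factorial * (k - (k + 1) / 2).factorial : ℕ) : ℝ)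
          / ((k.factorial : ℝ) * (k : ℝ) ^ k * ((k : ℝ) + 1) ^ (k + 1))
          * (volume {t | t ∈ I ∧ |f t| ≤ lam}).toReal ^ (k + 1) := by
  classical
  have hint_nonneg : 0 ≤ ∫ t in {t | t ∈ I ∧ |f t| ≤ lam}, |f t| :=
    integral_nonneg fun t => abs_nonneg _
  by_cases hfin : volume {t | t ∈ I ∧ |f t| ≤ lam} = ⊤
  · rw [ge_iff_le, hfin]
    simp only [ENNReal.toReal_top, ne_eq, zero_pow (by omega : k + 1 ≠ 0), mul_zero]
    exact hint_nonneg
  set F := {t | t ∈ I ∧ |f t| ≤ lam} with hF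
  set L := (volume F).toReal with hL
  have hL0 : 0 ≤ L := ENNReal.toReal_nonneg
  rcases eq_or_lt_of_le hL0 with h0 | hLpos
  · rw [ge_iff_le, ← h0, zero_pow (by omega : k + 1 ≠ 0), mul_zero]
    exact hint_nonneg
  rcases eq_or_lt_of_le hk with hk1 | hk2
  · -- k = 1
    subst hk1
    have h := case_one I hI f hf hderiv lam hlam hfin
    rw [ge_iff_le]
    norm_num [Nat.factorial]
    linarith [h]
  -- now 2 ≤ k
  have hkR : (0:ℝ) < k := by exact_mod_cast hk
  set J : ℝ := ((((k + 1) / 2).factorial * (k - (k + 1) / 2).factorial : ℕ) : ℝ) with hJ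
  have hJpos : 0 < J := by
    rw [hJ]
    exact_mod_cast Nat.mul_pos (Nat.factorial_pos _) (Nat.factorial_pos _)
  have hchoose : (0:ℝ) < (k.choose ((k+1)/2) : ℝ) := by
    exact_mod_cast Nat.choose_pos (by omega : (k+1)/2 ≤ k)
  set A : ℝ := ((k:ℝ)+1) * (k.choose ((k+1)/2)) * (k:ℝ)^k with hA
  have hApos : 0 < A := by positivity
  have hsub := sublevel k hk I hI f hf hderiv lam hlam hfin
  rw [← hL] at hsub
  set s0 : ℝ := L^k / (2^k * A) with hs0
  have hs0pos : 0 < s0 := by positivity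
  have hs0lam : s0 ≤ lam := by
    rw [hs0, div_le_iff₀ (by positivity)]
    have h2k1 : (1:ℝ) ≤ 2^k := by
      have := pow_le_pow_left₀ (by norm_num : (0:ℝ) ≤ 1) (by norm_num : (1:ℝ) ≤ 2) k
      simpa using this
    calc L^k ≤ ((k:ℝ)+1) * (k.choose ((k+1)/2)) * (k:ℝ)^k * lam := hsub
      _ = A * lam := by rw [hA]
      _ ≤ lam * (2^k * A) := by
          have hx : (0:ℝ) ≤ lam * A * (2^k - 1) :=
            mul_nonneg (mul_nonneg hlam.le hApos.le) (sub_nonneg.2 h2k1)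
          nlinarith
  set E0 := {t | t ∈ I ∧ |f t| ≤ s0} with hE0
  have hE0sub : E0 ⊆ F := fun t ht => ⟨ht.1, le_trans ht.2 hs0lam⟩
  have hE0fin : volume E0 ≠ ⊤ := ne_top_of_le_ne_top hfin (measure_mono hE0sub)
  have hsub0 := sublevel k hk I hI f hf hderiv s0 hs0pos hE0fin
  set L0 := (volume E0).toReal with hL0'
  have hAs0 : ((k:ℝ)+1) * (k.choose ((k+1)/2)) * (k:ℝ)^k * s0 = (L/2)^k := by
    rw [← hA, hs0, div_pow]
    field_simp
  rw [hAs0] at hsub0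
  have hL0half : L0 ≤ L / 2 := by
    have hiff := pow_le_pow_iff_left₀ (a := L0) (b := L/2)
      ENNReal.toReal_nonneg (by positivity) (by omega : k ≠ 0)
    exact hiff.1 hsub0
  have hFmeas : MeasurableSet F := measSet I hI.measurableSet f hf.continuousOn lam
  have hE0meas : MeasurableSet E0 := measSet I hI.measurableSet f hf.continuousOn s0
  have hintF : IntegrableOn (fun t => |f t|) F volume :=
    integrable_abs I hI.measurableSet f hf.continuousOn lam hfin
  have hDfin : volume (F \ E0) ≠ ⊤ := ne_top_of_le_ne_top hfin (measure_mono Set.diff_subset)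
  have h1 : (∫ t in F \ E0, |f t|) ≤ ∫ t in F, |f t| :=
    setIntegral_mono_set hintF (ae_of_all _ fun t => abs_nonneg _)
      (HasSubset.Subset.eventuallyLE Set.diff_subset)
  have h2 : s0 * (volume (F \ E0)).toReal ≤ ∫ t in F \ E0, |f t| := by
    have hconst : IntegrableOn (fun _ => s0) (F \ E0) volume := by
      rw [integrableOn_const_iff]
      exact Or.inr hDfin.lt_top
    have hptwise : ∀ t ∈ F \ E0, s0 ≤ |f t| := by
      rintro t ⟨htF, htE0⟩
      by_contra hc
      push_neg at hc
      exact htE0 ⟨htF.1, hc.le⟩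
    have := setIntegral_mono_on hconst (hintF.mono_set Set.diff_subset)
      (hFmeas.diff hE0meas) hptwise
    rwa [setIntegral_const, smul_eq_mul, mul_comm] at this
  have hvolD : (volume (F \ E0)).toReal = L - L0 := by
    rw [measure_diff hE0sub hE0meas.nullMeasurableSet hE0fin,
      ENNReal.toReal_sub_of_le (measure_mono hE0sub) hfin]
  have hchain : s0 * (L/2) ≤ ∫ t in F, |f t| := by
    have h3 : s0 * (L/2) ≤ s0 * (L - L0) := by nlinarith
    rw [hvolD] at h2
    linarith
  rw [ge_iff_le]
  refine le_trans ?_ hchain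
  -- constant inequality
  have hfactJ : (k.factorial : ℝ) = (k.choose ((k+1)/2) : ℝ) * J := by
    rw [hJ]
    have := Nat.choose_mul_factorial_mul_factorial (by omega : (k+1)/2 ≤ k)
    push_cast [← this]
    ring
  have h2k : (2:ℝ)^(k+1) ≤ ((k:ℝ)+1)^k := by
    calc (2:ℝ)^(k+1) ≤ (3:ℝ)^k := by exact_mod_cast two_pow_le k hk2
      _ ≤ ((k:ℝ)+1)^k := by
          apply pow_le_pow_left₀ (by norm_num)
          have : (2:ℝ) ≤ (k:ℝ) := by exact_mod_cast hk2
          linarith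
  have hconst : J / ((k.factorial : ℝ) * (k : ℝ) ^ k * ((k : ℝ) + 1) ^ (k + 1))
      ≤ 1 / (2^(k+1) * A) := by
    rw [div_le_div_iff₀ (by positivity) (by positivity)]
    calc J * (2^(k+1) * A)
        = ((k.choose ((k+1)/2) : ℝ) * J * (k:ℝ)^k * ((k:ℝ)+1)) * 2^(k+1) := by
          rw [hA]; ring
      _ ≤ ((k.choose ((k+1)/2) : ℝ) * J * (k:ℝ)^k * ((k:ℝ)+1)) * (((k:ℝ)+1)^k) := by
          apply mul_le_mul_of_nonneg_left h2k (by positivity)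
      _ = 1 * ((k.factorial : ℝ) * (k : ℝ) ^ k * ((k : ℝ) + 1) ^ (k + 1)) := by
          rw [hfactJ, pow_succ]
          ring
  calc J / ((k.factorial : ℝ) * (k : ℝ) ^ k * ((k : ℝ) + 1) ^ (k + 1)) * L ^ (k+1)
      ≤ 1 / (2^(k+1) * A) * L ^ (k+1) := by
        apply mul_le_mul_of_nonneg_right hconst (by positivity)
    _ = s0 * (L/2) := by
        rw [hs0, pow_succ]
        field_simp
        ring
end

section
/- Let $d \geq 1$ and let $V(x_0, x_1, \ldots, x_d) := \prod_{0 \leq i < j \leq d} (x_j - x_i)$ be the Vandermonde determinant of $d+1$ real variables. Then there exists a constant $c > 0$ such that for all measurable sets $E_0, \ldots, E_d \subset \mathbb{R}$ of finite positive measure, $\int_{E_0} \cdots \int_{E_d} |V(x_0,\ldots,x_d)|\, dx_0 \cdots dx_d \geq c \prod_{j=0}^d |E_j|^{1 + d/2}$, where $|E_j|$ denotes Lebesgue measure. -/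
open MeasureTheory Finset

lemma pairProd {n : ℕ} (t : Fin n → ℝ) :
    ∏ p ∈ Finset.univ.filter (fun p : Fin n × Fin n => p.1 < p.2), (t p.1 * t p.2)
      = (∏ i, t i) ^ (n - 1) := by
  classical
  rw [Finset.prod_filter, Fintype.prod_prod_type]
  have split : ∀ i j : Fin n, (if i < j then t i * t j else 1)
      = (if i < j then t i else 1) * (if i < j then t j else 1) := by
    intro i j; split <;> simp
  simp_rw [split, Finset.prod_mul_distrib]
  have h1 : ∀ i : Fin n, (∏ j : Fin n, if i < j then t i else 1) = t i ^ (n - 1 - (i:ℕ)) := by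
    intro i
    rw [← Finset.prod_filter, Finset.filter_lt_eq_Ioi, Finset.prod_const, Fin.card_Ioi]
  have h2 : (∏ i : Fin n, ∏ j : Fin n, if i < j then t j else 1)
      = ∏ j : Fin n, t j ^ (j : ℕ) := by
    rw [Finset.prod_comm]
    refine Finset.prod_congr rfl fun j _ => ?_
    rw [← Finset.prod_filter, Finset.filter_gt_eq_Iio, Finset.prod_const, Fin.card_Iio]
  rw [Finset.prod_congr rfl fun i _ => h1 i, h2, ← Finset.prod_mul_distrib, ← Finset.prod_pow]
  refine Finset.prod_congr rfl fun i _ => ?_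
  rw [← pow_add]
  congr 1
  omega

lemma sliceS_meas (δ : ℝ) : MeasurableSet {p : ℝ × ℝ | |p.2 - p.1| < δ} := by
  have : IsOpen {p : ℝ × ℝ | |p.2 - p.1| < δ} := by
    have : Continuous fun p : ℝ × ℝ => |p.2 - p.1| := by continuity
    exact isOpen_lt this continuous_const
  exact this.measurableSet

lemma slice_bound (A B : Set ℝ) (δ : ℝ) :
    ((volume.restrict A).prod (volume.restrict B)) {p : ℝ × ℝ | |p.2 - p.1| < δ}
      ≤ ENNReal.ofReal (2 * δ) * volume A := by
  rw [Measure.prod_apply (sliceS_meas δ)]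
  have hb : ∀ a : ℝ, (volume.restrict B) {b : ℝ | |b - a| < δ} ≤ ENNReal.ofReal (2 * δ) := by
    intro a
    calc (volume.restrict B) {b : ℝ | |b - a| < δ}
        ≤ volume {b : ℝ | |b - a| < δ} := Measure.restrict_le_self _
      _ ≤ volume (Set.Ioo (a - δ) (a + δ)) := by
          apply measure_mono
          intro b hb
          simp only [Set.mem_setOf_eq, abs_sub_lt_iff] at hb
          exact ⟨by linarith [hb.2], by linarith [hb.1]⟩
      _ = ENNReal.ofReal (2 * δ) := by rw [Real.volume_Ioo]; ring_nf
  calc ∫⁻ a, (volume.restrict B) (Prod.mk a ⁻¹' {p : ℝ × ℝ | |p.2 - p.1| < δ}) ∂(volume.restrict A)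
      ≤ ∫⁻ _, ENNReal.ofReal (2 * δ) ∂(volume.restrict A) := by
        apply lintegral_mono
        intro a
        exact hb a
    _ = ENNReal.ofReal (2 * δ) * volume A := by
        rw [lintegral_const, Measure.restrict_apply_univ]

lemma slice_bound_min (A B : Set ℝ) (δ : ℝ) :
    ((volume.restrict A).prod (volume.restrict B)) {p : ℝ × ℝ | |p.2 - p.1| < δ}
      ≤ ENNReal.ofReal (2 * δ) * min (volume A) (volume B) := by
  have h2 : ((volume.restrict A).prod (volume.restrict B)) {p : ℝ × ℝ | |p.2 - p.1| < δ}
      ≤ ENNReal.ofReal (2 * δ) * volume B := by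
    have hswap : ((volume.restrict A).prod (volume.restrict B)) {p : ℝ × ℝ | |p.2 - p.1| < δ}
      = ((volume.restrict B).prod (volume.restrict A)) {p : ℝ × ℝ | |p.2 - p.1| < δ} := by
      rw [← Measure.prod_swap, Measure.map_apply measurable_swap (sliceS_meas δ)]
      congr 1
      ext p
      simp only [Set.mem_preimage, Set.mem_setOf_eq, Prod.fst_swap, Prod.snd_swap]
      rw [abs_sub_comm]
    rw [hswap]
    exact slice_bound B A δ
  rcases le_total (volume A) (volume B) with h | h
  · rw [min_eq_left h]; exact slice_bound A B δ
  · rw [min_eq_right h]; exact h2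

lemma map_pair {n : ℕ} (E : Fin n → Set ℝ)
    (h0 : ∀ k, volume (E k) ≠ 0) (hfin : ∀ k, volume (E k) ≠ ⊤)
    (i j : Fin n) (hij : i ≠ j) (S : Set (ℝ × ℝ)) (hS : MeasurableSet S) :
    Measure.pi (fun k => volume.restrict (E k)) ((fun x => (x i, x j)) ⁻¹' S)
      = (∏ k ∈ (Finset.univ.erase i).erase j, volume (E k))
        * ((volume.restrict (E i)).prod (volume.restrict (E j))) S := by
  set c : ENNReal := ∏ k ∈ (Finset.univ.erase i).erase j, volume (E k) with hc
  have hc0 : c ≠ 0 := by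
    rw [hc]
    exact Finset.prod_ne_zero_iff.mpr fun k _ => h0 k
  have hcT : c ≠ ⊤ := by
    rw [hc]
    exact (ENNReal.prod_lt_top fun k _ => (hfin k).lt_top).ne
  have hφ : Measurable (fun x : Fin n → ℝ => (x i, x j)) :=
    (measurable_pi_apply i).prodMk (measurable_pi_apply j)
  have key : (volume.restrict (E i)).prod (volume.restrict (E j))
      = c⁻¹ • (Measure.pi (fun k => volume.restrict (E k))).map (fun x => (x i, x j)) := by
    refine Measure.prod_eq fun s t hs ht => ?_
    rw [Measure.smul_apply, Measure.map_apply hφ (hs.prod ht), smul_eq_mul]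
    have hpre : ((fun x : Fin n → ℝ => (x i, x j)) ⁻¹' (s ×ˢ t))
        = Set.pi Set.univ (fun k => if k = i then s else if k = j then t else Set.univ) := by
      ext x
      simp only [Set.mem_preimage, Set.mem_prod, Set.mem_pi, Set.mem_univ, true_implies]
      constructor
      · rintro ⟨h1, h2⟩ k
        by_cases hki : k = i
        · subst hki; simp [if_pos rfl, h1]
        · by_cases hkj : k = j
          · subst hkj; simp [if_neg hki, h2]
          · simp [if_neg hki, if_neg hkj]
      · intro h
        constructor
        · have := h i; simpa using this
        · have := h j; simpa [if_neg (Ne.symm hij)] using this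
    rw [hpre, Measure.pi_pi]
    have hsplit : ∏ k, (volume.restrict (E k)) (if k = i then s else if k = j then t else Set.univ)
        = (volume.restrict (E i)) s * ((volume.restrict (E j)) t * c) := by
      rw [← Finset.mul_prod_erase Finset.univ _ (Finset.mem_univ i)]
      rw [← Finset.mul_prod_erase (Finset.univ.erase i) _
        (Finset.mem_erase.mpr ⟨Ne.symm hij, Finset.mem_univ j⟩)]
      congr 1
      · simp
      congr 1
      · simp [if_neg (Ne.symm hij)]
      rw [hc]
      refine Finset.prod_congr rfl fun k hk => ?_
      simp only [Finset.mem_erase] at hk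
      rw [if_neg hk.2.1, if_neg hk.1, Measure.restrict_apply_univ]
    rw [hsplit]
    have harith : c⁻¹ * ((volume.restrict (E j)) t * c) = (volume.restrict (E j)) t := by
      rw [mul_comm ((volume.restrict (E j)) t) c, ← mul_assoc, ENNReal.inv_mul_cancel hc0 hcT,
        one_mul]
    rw [mul_left_comm, harith]
  rw [← Measure.map_apply hφ hS, key, Measure.smul_apply, smul_eq_mul, ← mul_assoc,
    ENNReal.mul_inv_cancel hc0 hcT, one_mul]

lemma restrict_pi {n : ℕ} (E : Fin n → Set ℝ) (hE : ∀ k, MeasurableSet (E k)) :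
    Measure.pi (fun k => volume.restrict (E k)) = volume.restrict (Set.univ.pi E) := by
  refine Measure.pi_eq fun s hs => ?_
  rw [Measure.restrict_apply (MeasurableSet.univ_pi hs), ← Set.pi_inter_distrib, volume_pi_pi]
  exact Finset.prod_congr rfl fun k _ => (Measure.restrict_apply (hs k)).symm


lemma ofReal_min' (x y : ℝ) :
    min (ENNReal.ofReal x) (ENNReal.ofReal y) = ENNReal.ofReal (min x y) := by
  rcases le_total x y with h | h
  · rw [min_eq_left (ENNReal.ofReal_le_ofReal h), min_eq_left h]
  · rw [min_eq_right (ENNReal.ofReal_le_ofReal h), min_eq_right h]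

/-- Restricted Vandermonde coercivity inequality in one dimension:
the average of the absolute Vandermonde determinant over product sets is
bounded below by `c ∏ |E_j|^{1 + d/2}`. -/
theorem stmt_11 (d : ℕ) (hd : 1 ≤ d) :
    ∃ c : ℝ, 0 < c ∧ ∀ E : Fin (d + 1) → Set ℝ,
      (∀ j, MeasurableSet (E j)) → (∀ j, 0 < volume (E j)) →
      (∀ j, volume (E j) < ⊤) →
      ENNReal.ofReal c * ∏ j, (volume (E j)) ^ ((1 : ℝ) + d / 2)
        ≤ ∫⁻ x in Set.univ.pi E,
            ENNReal.ofReal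
              (∏ p ∈ Finset.univ.filter (fun p : Fin (d + 1) × Fin (d + 1) => p.1 < p.2),
                |x p.2 - x p.1|) := by
  classical
  set pairs : Finset (Fin (d + 1) × Fin (d + 1)) :=
    Finset.univ.filter (fun p : Fin (d + 1) × Fin (d + 1) => p.1 < p.2) with hpairs
  set N : ℕ := pairs.card with hNdef
  have hN : 0 < N := by
    refine Finset.card_pos.mpr ⟨((⟨0, by omega⟩ : Fin (d + 1)), (⟨1, by omega⟩ : Fin (d + 1))), ?_⟩
    rw [hpairs, Finset.mem_filter]
    exact ⟨Finset.mem_univ _, Fin.mk_lt_mk.mpr Nat.zero_lt_one⟩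
  have hNne : (N : ℝ) ≠ 0 := Nat.cast_ne_zero.mpr hN.ne'
  set ε : ℝ := 1 / (4 * N) with hεdef
  have hε : 0 < ε := by positivity
  refine ⟨ε ^ N / 2, by positivity, ?_⟩
  intro E hE hpos hfin
  set a : Fin (d + 1) → ℝ := fun k => (volume (E k)).toReal with ha_def
  have ha : ∀ k, 0 < a k := fun k => ENNReal.toReal_pos (hpos k).ne' (hfin k).ne
  have hvol : ∀ k, volume (E k) = ENNReal.ofReal (a k) := fun k =>
    (ENNReal.ofReal_toReal (hfin k).ne).symm
  set t : Fin (d + 1) → ℝ := fun k => Real.sqrt (a k) with ht_def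
  have ht : ∀ k, 0 < t k := fun k => Real.sqrt_pos.mpr (ha k)
  have htt : ∀ i j, t i * t j * (t i * t j) = a i * a j := by
    intro i j
    rw [ht_def]
    rw [show Real.sqrt (a i) * Real.sqrt (a j) * (Real.sqrt (a i) * Real.sqrt (a j))
        = Real.sqrt (a i) * Real.sqrt (a i) * (Real.sqrt (a j) * Real.sqrt (a j)) from by ring]
    rw [Real.mul_self_sqrt (ha i).le, Real.mul_self_sqrt (ha j).le]
  set δ : Fin (d + 1) × Fin (d + 1) → ℝ := fun p => ε * (t p.1 * t p.2) with hδ_def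
  have hδpos : ∀ p, 0 < δ p := fun p => by
    have := ht p.1; have := ht p.2
    rw [hδ_def]
    exact mul_pos hε (mul_pos (ht p.1) (ht p.2))
  set ρ : Measure (Fin (d + 1) → ℝ) := Measure.pi (fun k => volume.restrict (E k)) with hρ
  set Bad : Fin (d + 1) × Fin (d + 1) → Set (Fin (d + 1) → ℝ) :=
    fun p => (fun x => (x p.1, x p.2)) ⁻¹' {q : ℝ × ℝ | |q.2 - q.1| < δ p} with hBad
  have hBadMeas : ∀ p, MeasurableSet (Bad p) := fun p =>
    ((measurable_pi_apply p.1).prodMk (measurable_pi_apply p.2)) (sliceS_meas (δ p))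
  -- bound on ρ (Bad p)
  have hBadBound : ∀ p ∈ pairs, ρ (Bad p) ≤ ENNReal.ofReal (2 * ε * ∏ k, a k) := by
    intro p hp
    have hne : p.1 ≠ p.2 := by
      rw [hpairs, Finset.mem_filter] at hp
      exact ne_of_lt hp.2
    have hprodsplit : (∏ k ∈ (Finset.univ.erase p.1).erase p.2, a k) * (a p.1 * a p.2)
        = ∏ k, a k := by
      rw [← Finset.mul_prod_erase Finset.univ a (Finset.mem_univ p.1),
        ← Finset.mul_prod_erase (Finset.univ.erase p.1) a
          (Finset.mem_erase.mpr ⟨Ne.symm hne, Finset.mem_univ p.2⟩)]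
      ring
    have hvolprod : ∏ k ∈ (Finset.univ.erase p.1).erase p.2, volume (E k)
        = ENNReal.ofReal (∏ k ∈ (Finset.univ.erase p.1).erase p.2, a k) := by
      rw [ENNReal.ofReal_prod_of_nonneg fun k _ => (ha k).le]
      exact Finset.prod_congr rfl fun k _ => hvol k
    have hmin : min (a p.1) (a p.2) ≤ t p.1 * t p.2 := by
      have h1 : t p.1 * t p.2 = Real.sqrt (a p.1 * a p.2) := by
        rw [ht_def, Real.sqrt_mul (ha p.1).le]
      rw [h1]
      refine Real.le_sqrt_of_sq_le ?_
      rw [sq]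
      exact mul_le_mul (min_le_left _ _) (min_le_right _ _)
        (le_min (ha p.1).le (ha p.2).le) (ha p.1).le
    have hreal : (∏ k ∈ (Finset.univ.erase p.1).erase p.2, a k)
          * (2 * δ p * min (a p.1) (a p.2)) ≤ 2 * ε * ∏ k, a k := by
      have step1 : 2 * δ p * min (a p.1) (a p.2) ≤ 2 * ε * (a p.1 * a p.2) := by
        rw [hδ_def]
        calc 2 * (ε * (t p.1 * t p.2)) * min (a p.1) (a p.2)
            ≤ 2 * (ε * (t p.1 * t p.2)) * (t p.1 * t p.2) := by
              apply mul_le_mul_of_nonneg_left hmin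
              have := ht p.1; have := ht p.2
              exact (mul_pos two_pos (mul_pos hε (mul_pos (ht p.1) (ht p.2)))).le
          _ = 2 * ε * (t p.1 * t p.2 * (t p.1 * t p.2)) := by ring
          _ = 2 * ε * (a p.1 * a p.2) := by rw [htt p.1 p.2]
      calc (∏ k ∈ (Finset.univ.erase p.1).erase p.2, a k) * (2 * δ p * min (a p.1) (a p.2))
          ≤ (∏ k ∈ (Finset.univ.erase p.1).erase p.2, a k) * (2 * ε * (a p.1 * a p.2)) :=
            mul_le_mul_of_nonneg_left step1 (Finset.prod_nonneg fun k _ => (ha k).le)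
        _ = 2 * ε * ((∏ k ∈ (Finset.univ.erase p.1).erase p.2, a k) * (a p.1 * a p.2)) := by
            ring
        _ = 2 * ε * ∏ k, a k := by rw [hprodsplit]
    rw [hρ, hBad]
    rw [map_pair E (fun k => (hpos k).ne') (fun k => (hfin k).ne) p.1 p.2 hne _
      (sliceS_meas (δ p))]
    calc (∏ k ∈ (Finset.univ.erase p.1).erase p.2, volume (E k))
          * ((volume.restrict (E p.1)).prod (volume.restrict (E p.2)))
              {q : ℝ × ℝ | |q.2 - q.1| < δ p}
        ≤ (∏ k ∈ (Finset.univ.erase p.1).erase p.2, volume (E k))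
          * (ENNReal.ofReal (2 * δ p) * min (volume (E p.1)) (volume (E p.2))) :=
          mul_le_mul_right (slice_bound_min _ _ _) _
      _ = ENNReal.ofReal ((∏ k ∈ (Finset.univ.erase p.1).erase p.2, a k)
            * (2 * δ p * min (a p.1) (a p.2))) := by
          rw [hvolprod, hvol p.1, hvol p.2, ofReal_min',
            ← ENNReal.ofReal_mul (by have := hδpos p; exact (mul_pos two_pos this).le),
            ← ENNReal.ofReal_mul (Finset.prod_nonneg fun k _ => (ha k).le)]
      _ ≤ ENNReal.ofReal (2 * ε * ∏ k, a k) := ENNReal.ofReal_le_ofReal hreal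
  -- union bound
  set U : Set (Fin (d + 1) → ℝ) := ⋃ p ∈ pairs, Bad p with hU
  have hUmeas : MeasurableSet U :=
    MeasurableSet.biUnion pairs.countable_toSet fun p _ => hBadMeas p
  set M : ENNReal := ∏ k, volume (E k) with hMdef
  have hMofReal : M = ENNReal.ofReal (∏ k, a k) := by
    rw [hMdef, ENNReal.ofReal_prod_of_nonneg fun k _ => (ha k).le]
    exact Finset.prod_congr rfl fun k _ => hvol k
  have hMtop : M ≠ ⊤ := by rw [hMofReal]; exact ENNReal.ofReal_ne_top
  have hρuniv : ρ Set.univ = M := by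
    rw [hρ, Measure.pi_univ, hMdef]
    exact Finset.prod_congr rfl fun k _ => Measure.restrict_apply_univ _
  have hUbound : ρ U ≤ M / 2 := by
    have h1 : ρ U ≤ ∑ p ∈ pairs, ρ (Bad p) := measure_biUnion_finset_le _ _
    have h2 : ∑ p ∈ pairs, ρ (Bad p) ≤ ∑ _p ∈ pairs, ENNReal.ofReal (2 * ε * ∏ k, a k) :=
      Finset.sum_le_sum hBadBound
    have h3 : ∑ _p ∈ pairs, ENNReal.ofReal (2 * ε * ∏ k, a k)
        = ENNReal.ofReal ((N : ℝ) * (2 * ε * ∏ k, a k)) := by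
      rw [Finset.sum_const, ← hNdef, nsmul_eq_mul, ← ENNReal.ofReal_natCast N,
        ← ENNReal.ofReal_mul (Nat.cast_nonneg N)]
    have h4 : (N : ℝ) * (2 * ε * ∏ k, a k) = (∏ k, a k) / 2 := by
      rw [hεdef]
      field_simp
      ring
    have h5 : ENNReal.ofReal ((∏ k, a k) / 2) = M / 2 := by
      rw [ENNReal.ofReal_div_of_pos (by norm_num), hMofReal]
      norm_num
    calc ρ U ≤ ∑ p ∈ pairs, ρ (Bad p) := h1
      _ ≤ ∑ _p ∈ pairs, ENNReal.ofReal (2 * ε * ∏ k, a k) := h2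
      _ = ENNReal.ofReal ((N : ℝ) * (2 * ε * ∏ k, a k)) := h3
      _ = M / 2 := by rw [h4, h5]
  have hρG : M / 2 ≤ ρ Uᶜ := by
    have hUfin : ρ U ≠ ⊤ := by
      refine ne_top_of_le_ne_top ?_ (measure_mono (Set.subset_univ U))
      rw [hρuniv]; exact hMtop
    rw [measure_compl hUmeas hUfin, hρuniv]
    calc M / 2 = M - M / 2 := (ENNReal.sub_half hMtop).symm
      _ ≤ M - ρ U := tsub_le_tsub_left hUbound M
  -- pointwise lower bound on the complement of U
  set K : ℝ := ε ^ N * (∏ i, t i) ^ d with hK_def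
  have hKprod : K = ∏ p ∈ pairs, δ p := by
    rw [hδ_def, Finset.prod_mul_distrib, Finset.prod_const, ← hNdef, hpairs,
      pairProd t, hK_def]
    norm_num
  have hlow : ∀ x, x ∈ Uᶜ →
      ENNReal.ofReal K ≤ ENNReal.ofReal (∏ p ∈ pairs, |x p.2 - x p.1|) := by
    intro x hx
    refine ENNReal.ofReal_le_ofReal ?_
    rw [hKprod]
    refine Finset.prod_le_prod (fun p _ => (hδpos p).le) fun p hp => ?_
    have hxp : x ∉ Bad p := by
      intro hmem
      exact hx (Set.mem_biUnion hp hmem)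
    rw [hBad] at hxp
    simpa [Set.mem_preimage, not_lt] using hxp
  -- measurability of the integrand
  have hFmeas : Measurable fun x : Fin (d + 1) → ℝ =>
      ENNReal.ofReal (∏ p ∈ pairs, |x p.2 - x p.1|) := by
    refine Measurable.ennreal_ofReal ?_
    refine Finset.measurable_prod _ fun p _ => ?_
    exact ((measurable_pi_apply p.2).sub (measurable_pi_apply p.1)).abs
  -- main chain
  have hres : volume.restrict (Set.univ.pi E) = ρ := (restrict_pi E hE).symm
  have hchain : ENNReal.ofReal K * (M / 2)
      ≤ ∫⁻ x in Set.univ.pi E, ENNReal.ofReal (∏ p ∈ pairs, |x p.2 - x p.1|) := by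
    rw [hres]
    calc ENNReal.ofReal K * (M / 2) ≤ ENNReal.ofReal K * ρ Uᶜ := mul_le_mul_right hρG _
      _ = ∫⁻ _x in Uᶜ, ENNReal.ofReal K ∂ρ := (setLIntegral_const _ _).symm
      _ ≤ ∫⁻ x in Uᶜ, ENNReal.ofReal (∏ p ∈ pairs, |x p.2 - x p.1|) ∂ρ :=
          setLIntegral_mono hFmeas hlow
      _ ≤ ∫⁻ x, ENNReal.ofReal (∏ p ∈ pairs, |x p.2 - x p.1|) ∂ρ :=
          setLIntegral_le_lintegral _ _
  refine le_trans ?_ hchain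
  -- now compare the constant side
  have hrpow : ∀ k, volume (E k) ^ ((1 : ℝ) + d / 2)
      = volume (E k) * ENNReal.ofReal (a k ^ ((d : ℝ) / 2)) := by
    intro k
    rw [ENNReal.rpow_add _ _ (hpos k).ne' (hfin k).ne, ENNReal.rpow_one]
    congr 1
    rw [hvol k, ENNReal.ofReal_rpow_of_pos (ha k)]
  have htpow : ∀ k, t k ^ d = a k ^ ((d : ℝ) / 2) := by
    intro k
    show Real.sqrt (a k) ^ d = a k ^ ((d : ℝ) / 2)
    rw [Real.sqrt_eq_rpow, ← Real.rpow_natCast (a k ^ ((1:ℝ)/2)) d,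
      ← Real.rpow_mul (ha k).le]
    congr 1
    ring
  have hKsplit : ENNReal.ofReal K
      = ENNReal.ofReal (ε ^ N) * ENNReal.ofReal (∏ k, a k ^ ((d : ℝ) / 2)) := by
    rw [hK_def, ← ENNReal.ofReal_mul (pow_pos hε N).le]
    congr 1
    rw [← Finset.prod_pow]
    congr 1
    exact Finset.prod_congr rfl fun k _ => htpow k
  calc ENNReal.ofReal (ε ^ N / 2) * ∏ j, volume (E j) ^ ((1 : ℝ) + d / 2)
      = ENNReal.ofReal (ε ^ N / 2) * (M * ENNReal.ofReal (∏ k, a k ^ ((d : ℝ) / 2))) := by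
        congr 1
        rw [Finset.prod_congr rfl fun k _ => hrpow k, Finset.prod_mul_distrib, ← hMdef]
        congr 1
        rw [ENNReal.ofReal_prod_of_nonneg fun k _ => Real.rpow_nonneg (ha k).le _]
    _ = ENNReal.ofReal K * (M / 2) := by
        rw [hKsplit, ENNReal.ofReal_div_of_pos (by norm_num : (0:ℝ) < 2),
          ENNReal.ofReal_ofNat]
        simp only [div_eq_mul_inv]
        ring
    _ ≤ ENNReal.ofReal K * (M / 2) := le_rfl
end
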